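/- arXiv:math/9903207 — 8 statements merged into one kernel-verified Lean document; each statement's English description precedes it below -/
import Mathlib

section
/- Let p be a prime number such that p = 5m² + 4mn + 9n² for some integers m and n. Then there are no integers x, y, z, not all zero, satisfying p·x⁴ − 41·y⁴ = z². -/
open scoped NumberTheorySymbols

private lemma one_le_sq {b : ℤ} (hb : b ≠ 0) : 1 ≤ b ^ 2 := by
  have := Int.one_le_abs (by simpa using hb)
  nlinarith [abs_nonneg b, sq_abs b]

private lemma jgcd_one {q : ℕ} {a : ℤ} (hq : Nat.Prime q) (h : ¬ (q:ℤ) ∣ a) :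
    Int.gcd a q = 1 := by
  rw [← Int.isCoprime_iff_gcd_eq_one]
  exact ((Int.prime_iff_natAbs_prime.mpr (by simpa using hq)).coprime_iff_not_dvd.mpr h).symm

private lemma exists_two_pow_mul_odd {N : ℕ} (h : N ≠ 0) :
    ∃ t n₀, Odd n₀ ∧ N = 2 ^ t * n₀ := by
  refine ⟨N.factorization 2, N / 2 ^ N.factorization 2, ?_, ?_⟩
  · rw [Nat.odd_iff, Nat.two_dvd_ne_zero.symm]
    simpa using Nat.not_dvd_ordCompl Nat.prime_two h
  · exact (Nat.ordProj_mul_ordCompl_eq_self N 2).symm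

private lemma jac_natAbs {a : ℤ} {q : ℕ} (hq4 : q % 4 = 1) :
    J((a.natAbs : ℤ) | q) = J(a | q) := by
  have hqo : Odd q := by
    rw [Nat.odd_iff]; omega
  rcases Int.natAbs_eq a with h | h
  · rw [← h]
  · rw [h]
    have : ((-(a.natAbs) : ℤ)) = -1 * (a.natAbs : ℤ) := by ring
    rw [this, jacobiSym.mul_left, jacobiSym.at_neg_one hqo, ZMod.χ₄_nat_eq_if_mod_four, hq4]
    norm_num
    omega

private lemma gcd_eq_one_of {u v : ℤ} (hu : u ≠ 0)
    (h : ∀ q : ℕ, q.Prime → (q:ℤ) ∣ u → (q:ℤ) ∣ v → False) : Int.gcd u v = 1 := by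
  by_contra hg
  have hq : (Int.gcd u v).minFac.Prime := Nat.minFac_prime hg
  have hdg : ((Int.gcd u v).minFac : ℤ) ∣ (Int.gcd u v : ℤ) :=
    Int.natCast_dvd_natCast.mpr (Nat.minFac_dvd _)
  exact h _ hq (hdg.trans (Int.gcd_dvd_left _ _)) (hdg.trans (Int.gcd_dvd_right _ _))

private lemma zmod41_41 : (41 : ZMod 41) = 0 := by decide
private lemma zmod5_5 : (5 : ZMod 5) = 0 := by decide
private lemma zmod5_41 : (41 : ZMod 5) = 1 := by decide
private lemma zmod5_4 : (4 : ZMod 5) = -1 := by decide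
private lemma zmod41_510 : (5 : ZMod 41)^10 = -1 := by decide

private lemma pm_cast41 {u v : ℤ} (hu : u = 1 ∨ u = -1) (hv : v = 1 ∨ v = -1)
    (h : (u : ZMod 41) = -(v : ZMod 41)) : u = -v := by
  rcases hu with rfl | rfl <;> rcases hv with rfl | rfl <;>
    simp_all <;> exact absurd h (by decide)

private lemma pm_mul_eq_one {u v : ℤ} (hu : u = 1 ∨ u = -1) (h : u * v = 1) : v = u := by
  rcases hu with rfl | rfl <;> linarith

private lemma eq_one_of_mul_pow4 {u v : ℤ} (h : u * v ^ 4 = 1) : u = 1 := by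
  have h4 : v ^ 4 = 1 ∨ v ^ 4 = -1 := Int.isUnit_iff.mp (isUnit_of_mul_isUnit_right (h ▸ isUnit_one))
  rcases h4 with h4 | h4
  · rw [h4, mul_one] at h; exact h
  · nlinarith [sq_nonneg (v^2)]

private lemma not_dvd_both {x y : ℤ} (hxy : Int.gcd x y = 1) {q : ℤ} (hq : 2 ≤ q)
    (h1 : q ∣ x) (h2 : q ∣ y) : False := by
  have h := Int.dvd_coe_gcd h1 h2
  rw [hxy] at h
  have := Int.le_of_dvd one_pos h
  omega


private lemma huv_helper {u v w : ℤ} (sa sb : ℕ)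
    (h : ((-1:ℤ)^sa * u) * ((-1)^sb * v) = w) : u * v = (-1:ℤ)^sa * (-1)^sb * w := by
  rcases Nat.even_or_odd sa with hsa | hsa <;> rcases Nat.even_or_odd sb with hsb | hsb <;>
    rw [hsa.neg_one_pow, hsb.neg_one_pow] at h ⊢
  · linear_combination h
  · linear_combination -h
  · linear_combination -h
  · linear_combination h

private lemma pm_mul {u v : ℤ} (hu : u = 1 ∨ u = -1) (hv : v = 1 ∨ v = -1) :
    u * v = 1 ∨ u * v = -1 := by
  rcases hu with rfl | rfl <;> rcases hv with rfl | rfl <;> norm_num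

private lemma neg_one_sq_pow (s : ℕ) : ((-1:ℤ))^s * (-1)^s = 1 := by
  rcases Nat.even_or_odd s with h | h
  · rw [h.neg_one_pow]; norm_num
  · rw [h.neg_one_pow]; norm_num

private lemma two_pow_exp_zero {C s C₀ : ℕ} (hde : C = 2^s*C₀) (hodd : Odd C) : s = 0 := by
  rcases s with _ | s
  · rfl
  · exfalso
    have : Even C := ⟨2^s*C₀, by rw [hde]; ring⟩
    rw [Nat.even_iff] at this
    rw [Nat.odd_iff] at hodd
    omega

private lemma two_pow_exp_one {c : ℤ} {C s C₀ : ℕ} (hC : C = c.natAbs) (hde : C = 2^s * C₀)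
    (hodd : Odd C₀) (heven : Even c) (hdvd : (16:ℤ) ∣ c^2 - 4) : s = 1 := by
  have hc2 : c^2 = ((C:ℕ):ℤ)^2 := by
    rw [hC]; exact_mod_cast (Int.natAbs_sq c).symm
  rcases s with _ | _ | s
  · exfalso
    rw [Nat.pow_zero, one_mul] at hde
    have hevC : Even C := by rw [hC, Int.natAbs_even]; exact heven
    rw [Nat.even_iff] at hevC
    rw [hde] at hevC
    rw [Nat.odd_iff] at hodd
    omega
  · rfl
  · exfalso
    have h16C : (16:ℕ) ∣ C^2 := by
      rw [hde, mul_pow, ← pow_mul]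
      refine Dvd.dvd.mul_right ?_ _
      have h := pow_dvd_pow 2 (show 4 ≤ (s+1+1)*2 by omega)
      simpa using h
    have h1 : (16:ℤ) ∣ c^2 := by
      rw [hc2]
      exact_mod_cast Int.natCast_dvd_natCast.mpr h16C
    have h4 : (16:ℤ) ∣ 4 := by
      have := dvd_sub h1 hdvd
      simpa using this
    norm_num at h4

private lemma zmod8_key1 : ∀ P Jj K Z : ZMod 8, P*(2*Jj)^4 - 41*(2*K+1)^4 ≠ Z^2 := by decide
private lemma zmod8_sq10 : ∀ A : ZMod 8, ¬ (A^2 + 41*0^2 = 10) := by decide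
private lemma zmod8_sq5 : ∀ B : ZMod 8, ¬ (41*0^2 + B^2 = 5) := by decide
private lemma zmod16_odd4 : ∀ u : ZMod 16, (2*u+1)^4 = 1 := by decide
private lemma zmod16_even4 : ∀ u : ZMod 16, (2*u)^4 = 0 := by decide
private lemma zmod16_13 : ∀ R : ZMod 16, 16*R+13 = 13 := by decide
private lemma zmod16_key : ∀ Q Y Z : ZMod 16, 2*Q+1 = Z^2 + 41*Y^4 →
    (2*Q+1 = 1 ∨ 2*Q+1 = 9 ∨ 2*Q+1 = 13) := by decide
private lemma zmod16_keyA : ∀ R A2 B2 : ZMod 16, 5*(8*R+1) = (2*A2)^2 + 41*(2*B2+1)^2 →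
    (2*A2)^2 = 4 := by decide
private lemma zmod16_keyB : ∀ R A2 B2 : ZMod 16, 5*(8*R+1) = (2*A2+1)^2 + 41*(2*B2)^2 →
    (2*B2)^2 = 4 := by decide
private lemma zmod4_key : ∀ R A2 B2 : ZMod 4, 5*(4*R+1) ≠ (2*A2+1)^2 + 41*(2*B2+1)^2 := by decide
private lemma zmod16_nz : ∀ Z : ZMod 16, ¬ ((13:ZMod 16)*1 - 41*0 = Z^2) := by decide
private lemma zmod16_val : (13:ZMod 16)*1 - 41*1 = 4 := by decide

set_option maxHeartbeats 2000000 in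
private lemma no_primitive (p : ℕ) (hp : p.Prime) (a b x y z : ℤ)
    (hab : 5 * (p:ℤ) = a^2 + 41*b^2)
    (hxy : Int.gcd x y = 1)
    (heq : (p:ℤ) * x^4 - 41*y^4 = z^2) : False := by
  have hpZ : Prime (p:ℤ) := Nat.prime_iff_prime_int.mp hp
  have h41Z : Prime (41:ℤ) := Int.prime_iff_natAbs_prime.mpr (by norm_num)
  -- x is odd
  obtain ⟨j, hj⟩ : ∃ j, x = 2*j + 1 := by
    rcases Int.even_or_odd x with ⟨j, hj⟩ | ⟨j, hj⟩
    · exfalso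
      obtain ⟨k, hk⟩ : ∃ k, y = 2*k+1 := by
        rcases Int.even_or_odd y with ⟨k, hk⟩ | ⟨k, hk⟩
        · exact absurd (not_dvd_both hxy (q := 2) (by norm_num) ⟨j, by omega⟩ ⟨k, by omega⟩) not_false
        · exact ⟨k, hk⟩
      have hx2 : x = 2*j := by omega
      rw [hx2, hk] at heq
      have hc := congrArg (fun t : ℤ => (t : ZMod 8)) heq
      push_cast at hc
      exact zmod8_key1 _ _ _ _ hc
    · exact ⟨j, hj⟩
  -- p ≠ 2
  have hp2 : p ≠ 2 := by
    rintro rfl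
    push_cast at hab
    have h10 : a^2 + 41*b^2 = 10 := by linarith
    have hb0 : b = 0 := by
      by_contra hb0
      have := one_le_sq hb0
      nlinarith [sq_nonneg a]
    rw [hb0] at h10
    have hc := congrArg (fun t : ℤ => (t : ZMod 8)) h10
    push_cast at hc
    exact zmod8_sq10 _ hc
  -- p ≠ 41
  have hp41 : p ≠ 41 := by
    rintro rfl
    push_cast at hab
    have h205 : a^2 = 205 - 41*b^2 := by linarith
    have ha41 : (41:ℤ) ∣ a := by
      apply h41Z.dvd_of_dvd_pow (n := 2)
      exact ⟨5 - b^2, by linarith⟩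
    obtain ⟨c, hc⟩ := ha41
    have ha2 : a^2 = 1681*c^2 := by rw [hc]; ring
    have h5 : 41*c^2 + b^2 = 5 := by linarith
    have hc0 : c = 0 := by
      by_contra hc0
      have := one_le_sq hc0
      nlinarith [sq_nonneg b]
    rw [hc0] at h5
    have hcb := congrArg (fun t : ℤ => (t : ZMod 8)) h5
    push_cast at hcb
    exact zmod8_sq5 _ hcb
  -- p odd
  obtain ⟨q, hq⟩ : ∃ q, p = 2*q + 1 := by
    rcases hp.eq_two_or_odd' with h | ⟨q, h⟩
    · exact absurd h hp2
    · exact ⟨q, by omega⟩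
  -- p % 16 ∈ {1, 9, 13}
  have hp16 : p % 16 = 1 ∨ p % 16 = 9 ∨ p % 16 = 13 := by
    have hpz : (p : ZMod 16) = (z:ZMod 16)^2 + 41*(y:ZMod 16)^4 := by
      have hc := congrArg (fun t : ℤ => (t : ZMod 16)) heq
      push_cast at hc
      rw [hj] at hc
      push_cast at hc
      rw [zmod16_odd4] at hc
      linear_combination hc
    have hq16 : (p : ZMod 16) = 2*(q:ZMod 16)+1 := by
      rw [hq]; push_cast; ring
    have := zmod16_key (q:ZMod 16) (y:ZMod 16) (z:ZMod 16) (by rw [← hq16]; exact hpz)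
    have hv : p % 16 = ((p : ZMod 16)).val := (ZMod.val_natCast 16 p).symm
    rcases this with h | h | h
    · exact Or.inl (by rw [hv, hq16.trans h]; rfl)
    · exact Or.inr (Or.inl (by rw [hv, hq16.trans h]; rfl))
    · exact Or.inr (Or.inr (by rw [hv, hq16.trans h]; rfl))
  have hp4 : p % 4 = 1 := by rcases hp16 with h|h|h <;> omega
  have hp5 : p ≠ 5 := by rcases hp16 with h|h|h <;> omega
  have hpge2 : (2:ℤ) ≤ (p:ℤ) := by exact_mod_cast hp.two_le
  have hpne0 : (p:ℤ) ≠ 0 := by positivity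
  have h5Z : Prime (5:ℤ) := Int.prime_iff_natAbs_prime.mpr (by norm_num)
  -- y ≠ 0
  have hy0 : y ≠ 0 := by
    rintro rfl
    have hx1 : x.natAbs = 1 := by
      rw [Int.gcd_zero_right] at hxy; exact hxy
    have hx4 : x^4 = 1 := by
      rcases Int.natAbs_eq_iff.mp hx1 with h | h <;> rw [h] <;> norm_num
    have hpz2 : (p:ℤ) = z^2 := by rw [hx4] at heq; norm_num at heq; linarith
    have hnp : p = z.natAbs^2 := by
      have h2 : (p:ℤ) = ((z.natAbs^2 : ℕ) : ℤ) := by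
        rw [hpz2]; exact_mod_cast (Int.natAbs_sq z).symm
      exact_mod_cast h2
    rcases hp.eq_one_or_self_of_dvd z.natAbs ⟨z.natAbs, by rw [hnp]; ring⟩ with h | h
    · rw [h] at hnp; have := hp.two_le; omega
    · rw [h] at hnp; have := hp.two_le; nlinarith
  -- z ≠ 0
  have hz0 : z ≠ 0 := by
    rintro rfl
    have h41dvd : (41:ℤ) ∣ (p:ℤ) * x^4 := ⟨y^4, by linear_combination heq⟩
    rcases h41Z.dvd_mul.mp h41dvd with h | h
    · have h' : (41:ℕ) ∣ p := by exact_mod_cast h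
      exact hp41 ((Nat.prime_dvd_prime_iff_eq (by norm_num) hp).mp h').symm
    · obtain ⟨u, hu⟩ := h41Z.dvd_of_dvd_pow h
      rw [hu] at heq
      have hc : y^4 = 41^3*(p:ℤ)*u^4 := by
        apply mul_left_cancel₀ (a := (41:ℤ)) (by norm_num)
        linear_combination -heq
      have h41y : (41:ℤ) ∣ y := h41Z.dvd_of_dvd_pow (n := 4) ⟨41^2*(p:ℤ)*u^4, by rw [hc]; ring⟩
      exact not_dvd_both hxy (by norm_num) ⟨u, hu⟩ h41y
  -- 41 ∤ x
  have h41x : ¬ (41:ℤ) ∣ x := by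
    intro hdx
    obtain ⟨u, hu⟩ := hdx
    have h41z2 : (41:ℤ) ∣ z^2 := ⟨(p:ℤ)*41^3*u^4 - y^4, by rw [← heq, hu]; ring⟩
    obtain ⟨w, hw⟩ := h41Z.dvd_of_dvd_pow h41z2
    rw [hu, hw] at heq
    have hy4 : y^4 = 41*((p:ℤ)*41^2*u^4 - w^2) := by
      apply mul_left_cancel₀ (a := (41:ℤ)) (by norm_num)
      linear_combination -heq
    have h41y : (41:ℤ) ∣ y := h41Z.dvd_of_dvd_pow (n := 4) ⟨_, hy4⟩
    exact not_dvd_both hxy (by norm_num) ⟨u, hu⟩ h41y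
  -- 41 ∤ z
  have h41z : ¬ (41:ℤ) ∣ z := by
    intro hdz
    obtain ⟨w, hw⟩ := hdz
    rw [hw] at heq
    have : (41:ℤ) ∣ (p:ℤ)*x^4 := ⟨41*w^2 + y^4, by linear_combination heq⟩
    rcases h41Z.dvd_mul.mp this with h | h
    · have h' : (41:ℕ) ∣ p := by exact_mod_cast h
      exact hp41 ((Nat.prime_dvd_prime_iff_eq (by norm_num) hp).mp h').symm
    · exact h41x (h41Z.dvd_of_dvd_pow h)
  -- p ∤ y
  have hpy : ¬ (p:ℤ) ∣ y := by
    intro hdy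
    obtain ⟨u, hu⟩ := hdy
    have hpz2 : (p:ℤ) ∣ z^2 := ⟨x^4 - 41*(p:ℤ)^3*u^4, by rw [← heq, hu]; ring⟩
    obtain ⟨w, hw⟩ := hpZ.dvd_of_dvd_pow hpz2
    rw [hu, hw] at heq
    have hx4 : x^4 = (p:ℤ)*(w^2 + 41*(p:ℤ)^2*u^4) := by
      apply mul_left_cancel₀ hpne0
      linear_combination heq
    have : (p:ℤ) ∣ x := hpZ.dvd_of_dvd_pow (n := 4) ⟨_, hx4⟩
    exact not_dvd_both hxy hpge2 this ⟨u, hu⟩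
  -- p ∤ z
  have hpz : ¬ (p:ℤ) ∣ z := by
    intro hdz
    obtain ⟨w, hw⟩ := hdz
    rw [hw] at heq
    have hp41y : (p:ℤ) ∣ 41*y^4 := ⟨x^4 - (p:ℤ)*w^2, by linear_combination -heq⟩
    rcases hpZ.dvd_mul.mp hp41y with h | h
    · have h' : p ∣ 41 := by exact_mod_cast h
      exact hp41 ((Nat.prime_dvd_prime_iff_eq hp (by norm_num)).mp h')
    · exact hpy (hpZ.dvd_of_dvd_pow h)
  -- p ∤ a
  have hpa : ¬ (p:ℤ) ∣ a := by
    intro hda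
    obtain ⟨u, hu⟩ := hda
    have hpb2 : (p:ℤ) ∣ 41*b^2 := ⟨5 - (p:ℤ)*u^2, by rw [hu] at hab; linear_combination -hab⟩
    rcases hpZ.dvd_mul.mp hpb2 with h | h
    · have h' : p ∣ 41 := by exact_mod_cast h
      exact hp41 ((Nat.prime_dvd_prime_iff_eq hp (by norm_num)).mp h')
    · obtain ⟨v, hv⟩ := hpZ.dvd_of_dvd_pow h
      rw [hu, hv] at hab
      have h5' : 5 = (p:ℤ)*(u^2 + 41*v^2) := by
        apply mul_left_cancel₀ hpne0
        linear_combination hab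
      have : (p:ℤ) ∣ 5 := ⟨_, h5'⟩
      have h' : p ∣ 5 := by exact_mod_cast this
      exact hp5 ((Nat.prime_dvd_prime_iff_eq hp (by norm_num)).mp h')
  -- p ∤ b
  have hpb : ¬ (p:ℤ) ∣ b := by
    intro hdb
    refine hpa (hpZ.dvd_of_dvd_pow (n := 2) ?_)
    obtain ⟨v, hv⟩ := hdb
    exact ⟨5 - 41*(p:ℤ)*v^2, by rw [hv] at hab; linear_combination -hab⟩
  -- 41 ∤ a
  have h41a : ¬ (41:ℤ) ∣ a := by
    intro hda
    obtain ⟨u, hu⟩ := hda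
    have : (41:ℤ) ∣ 5*(p:ℤ) := ⟨41*u^2 + b^2, by rw [hu] at hab; linear_combination hab⟩
    rcases h41Z.dvd_mul.mp this with h | h
    · norm_num at h
    · have h' : (41:ℕ) ∣ p := by exact_mod_cast h
      exact hp41 ((Nat.prime_dvd_prime_iff_eq (by norm_num) hp).mp h').symm
  -- 5 ∤ a
  have h5a : ¬ (5:ℤ) ∣ a := by
    intro hda
    obtain ⟨u, hu⟩ := hda
    have : (5:ℤ) ∣ 41*b^2 := ⟨(p:ℤ) - 5*u^2, by rw [hu] at hab; linear_combination -hab⟩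
    rcases h5Z.dvd_mul.mp this with h | h
    · norm_num at h
    · obtain ⟨v, hv⟩ := h5Z.dvd_of_dvd_pow h
      rw [hu, hv] at hab
      have h5' : (p:ℤ) = 5*(u^2 + 41*v^2) := by
        apply mul_left_cancel₀ (a := (5:ℤ)) (by norm_num)
        linear_combination hab
      have : (5:ℤ) ∣ (p:ℤ) := ⟨_, h5'⟩
      have h' : (5:ℕ) ∣ p := by exact_mod_cast this
      exact hp5 ((Nat.prime_dvd_prime_iff_eq (by norm_num) hp).mp h').symm
  -- 5 ∤ b
  have h5b : ¬ (5:ℤ) ∣ b := by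
    intro hdb
    refine h5a (h5Z.dvd_of_dvd_pow (n := 2) ?_)
    obtain ⟨v, hv⟩ := hdb
    exact ⟨(p:ℤ) - 41*5*v^2, by rw [hv] at hab; linear_combination -hab⟩
  -- a ≠ 0, b ≠ 0
  have ha0 : a ≠ 0 := by
    rintro rfl
    exact h41a (dvd_zero _)
  have hb0 : b ≠ 0 := by
    rintro rfl
    exact h5a (h5Z.dvd_of_dvd_pow (n := 2) ⟨(p:ℤ), by linear_combination -hab⟩)
  have hqab : ∀ qq : ℕ, qq.Prime → (qq:ℤ) ∣ a → (qq:ℤ) ∣ b → False := by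
    intro qq hqq hqa hqb
    have hdvd : (qq:ℤ) ∣ 5*(p:ℤ) := by
      rw [hab]
      exact dvd_add (dvd_pow hqa two_ne_zero) (Dvd.dvd.mul_left (dvd_pow hqb two_ne_zero) 41)
    rcases (Nat.prime_iff_prime_int.mp hqq).dvd_mul.mp hdvd with h | h
    · have h' : qq ∣ 5 := by exact_mod_cast h
      have h2 : qq = 5 := (Nat.prime_dvd_prime_iff_eq hqq (by norm_num)).mp h'
      rw [h2] at hqa
      exact h5a (by exact_mod_cast hqa)
    · have h' : qq ∣ p := by exact_mod_cast h
      have h2 : qq = p := (Nat.prime_dvd_prime_iff_eq hqq hp).mp h'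
      rw [h2] at hqa
      exact hpa hqa
  have hqyz : ∀ qq : ℕ, qq.Prime → (qq:ℤ) ∣ y → (qq:ℤ) ∣ z → False := by
    intro qq hqq hqy hqz
    have hdvd : (qq:ℤ) ∣ (p:ℤ)*x^4 := by
      have hre : (p:ℤ)*x^4 = z^2 + 41*y^4 := by linear_combination heq
      rw [hre]
      exact dvd_add (dvd_pow hqz two_ne_zero) (Dvd.dvd.mul_left (dvd_pow hqy (by norm_num)) 41)
    rcases (Nat.prime_iff_prime_int.mp hqq).dvd_mul.mp hdvd with h | h
    · have h' : qq ∣ p := by exact_mod_cast h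
      have h2 : qq = p := (Nat.prime_dvd_prime_iff_eq hqq hp).mp h'
      rw [h2] at hqy
      exact hpy hqy
    · have h2 : (qq:ℤ) ∣ x := (Nat.prime_iff_prime_int.mp hqq).dvd_of_dvd_pow h
      exact not_dvd_both hxy (by exact_mod_cast hqq.two_le) h2 hqy
  haveI hF41 : Fact (Nat.Prime 41) := ⟨by norm_num⟩
  haveI hFp : Fact p.Prime := ⟨hp⟩
  have hpodd : Odd p := by rw [Nat.odd_iff]; omega
  set N := z.natAbs with hN
  have hN0 : N ≠ 0 := by simpa [hN, Int.natAbs_eq_zero] using hz0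
  obtain ⟨t, n₀, hn₀odd, hNde⟩ := exists_two_pow_mul_odd hN0
  have hNz : ((N:ℤ)) ∣ z := Int.natAbs_dvd.mpr dvd_rfl
  have hn₀z : (n₀:ℤ) ∣ z := by
    refine dvd_trans ?_ hNz
    exact_mod_cast Int.natCast_dvd_natCast.mpr ⟨2^t, by rw [hNde]; ring⟩
  have h41n₀ : ¬ (41:ℤ) ∣ (n₀:ℤ) := fun h => h41z (h.trans hn₀z)
  -- F1 : J(41p | n₀) = 1
  have hgcd41y2 : Int.gcd (41*y^2) n₀ = 1 := by
    apply gcd_eq_one_of (mul_ne_zero (by norm_num) (pow_ne_zero 2 hy0))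
    intro qq hqq hq1 hq2
    have hqz : (qq:ℤ) ∣ z := hq2.trans hn₀z
    rcases (Nat.prime_iff_prime_int.mp hqq).dvd_mul.mp hq1 with h | h
    · have h' : (qq:ℕ) ∣ 41 := by exact_mod_cast h
      have h2 : qq = 41 := (Nat.prime_dvd_prime_iff_eq hqq (by norm_num)).mp h'
      rw [h2] at hqz
      exact h41z hqz
    · exact hqyz qq hqq ((Nat.prime_iff_prime_int.mp hqq).dvd_of_dvd_pow h) hqz
  have hm1 : (41*(p:ℤ)*x^4) % (n₀:ℤ) = ((41*y^2)^2) % (n₀:ℤ) := by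
    have hdif : (41*y^2)^2 - 41*(p:ℤ)*x^4 = -41*z^2 := by linear_combination -41*heq
    exact Int.modEq_iff_dvd.mpr (by rw [hdif]; exact (dvd_pow hn₀z two_ne_zero).mul_left (-41))
  have hF1 : J(41*(p:ℤ) | n₀) = 1 := by
    have h1 : J(41*(p:ℤ)*x^4 | n₀) = 1 := by
      rw [jacobiSym.mod_left' hm1]
      exact jacobiSym.sq_one' hgcd41y2
    rw [jacobiSym.mul_left, jacobiSym.pow_left] at h1
    exact eq_one_of_mul_pow4 h1
  -- reciprocity on the chain
  have hr41 : J((41:ℤ)|n₀) = J((n₀:ℤ)|41) := by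
    have h := jacobiSym.quadratic_reciprocity_one_mod_four (a := 41) (b := n₀) (by norm_num) hn₀odd
    exact_mod_cast h
  have hrp : J((p:ℤ)|n₀) = J((n₀:ℤ)|p) :=
    jacobiSym.quadratic_reciprocity_one_mod_four hp4 hn₀odd
  have hJn₀41pm : J((n₀:ℤ)|41) = 1 ∨ J((n₀:ℤ)|41) = -1 :=
    jacobiSym.eq_one_or_neg_one (jgcd_one (by norm_num) h41n₀)
  have hchain : J((n₀:ℤ)|41) = J((n₀:ℤ)|p) := by
    have h := hF1
    rw [jacobiSym.mul_left, hr41, hrp] at h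
    exact (pm_mul_eq_one hJn₀41pm h).symm
  -- Euler criterion step: J(N|41) = -J(a|41)
  have hx41ne : ((x:ℤ) : ZMod 41) ≠ 0 := by
    simpa [ZMod.intCast_zmod_eq_zero_iff_dvd] using h41x
  have hJN41pm : J((N:ℤ)|41) = 1 ∨ J((N:ℤ)|41) = -1 :=
    jacobiSym.eq_one_or_neg_one (jgcd_one (by norm_num) (fun h => h41z (h.trans hNz)))
  have hJa41pm : J(a|41) = 1 ∨ J(a|41) = -1 :=
    jacobiSym.eq_one_or_neg_one (jgcd_one (by norm_num) h41a)
  have heuler : J((N:ℤ)|41) = - J(a|41) := by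
    have e1 : ((J((N:ℤ)|41)) : ZMod 41) = (((N:ℤ) : ZMod 41))^20 := by
      rw [← jacobiSym.legendreSym.to_jacobiSym]
      have h := legendreSym.eq_pow 41 ((N:ℤ))
      norm_num at h
      exact h
    have e2 : ((J(a|41)) : ZMod 41) = ((a : ZMod 41))^20 := by
      rw [← jacobiSym.legendreSym.to_jacobiSym]
      have h := legendreSym.eq_pow 41 a
      norm_num at h
      exact h
    have hcast := congrArg (fun tt : ℤ => (tt : ZMod 41)) heq
    have hcab := congrArg (fun tt : ℤ => (tt : ZMod 41)) hab
    push_cast at hcast hcab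
    have h41z' : (41 : ZMod 41) = 0 := zmod41_41
    have hzz : ((z : ℤ) : ZMod 41)^2 = ((p:ℕ) : ZMod 41) * ((x:ℤ) : ZMod 41)^4 := by
      rw [← hcast, h41z']; ring
    have hNsq : (((N:ℤ)) : ZMod 41)^2 = ((z:ℤ) : ZMod 41)^2 := by
      rcases Int.natAbs_eq z with h | h
      · rw [h]
      · rw [h, Int.cast_neg]; ring
    have hx40 : ((x:ℤ) : ZMod 41)^40 = 1 := by
      have h := ZMod.pow_card_sub_one_eq_one hx41ne
      norm_num at h
      exact h
    have hpa2 : (5 : ZMod 41) * ((p:ℕ) : ZMod 41) = ((a:ℤ) : ZMod 41)^2 := by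
      rw [hcab, h41z']; ring
    have h510 : (5 : ZMod 41)^10 = -1 := zmod41_510
    have hp10 : ((p:ℕ) : ZMod 41)^10 = -((a:ℤ) : ZMod 41)^20 := by
      have h := congrArg (fun u : ZMod 41 => u^10) hpa2
      simp only [mul_pow] at h
      rw [h510] at h
      linear_combination -h
    have hfin : (((N:ℤ)) : ZMod 41)^20 = -((a : ZMod 41))^20 := by
      calc (((N:ℤ)) : ZMod 41)^20 = ((((N:ℤ)) : ZMod 41)^2)^10 := by ring
        _ = (((p:ℕ) : ZMod 41) * ((x:ℤ) : ZMod 41)^4)^10 := by rw [hNsq, hzz]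
        _ = ((p:ℕ) : ZMod 41)^10 * ((x:ℤ) : ZMod 41)^40 := by ring
        _ = ((p:ℕ) : ZMod 41)^10 := by rw [hx40, mul_one]
        _ = -((a : ZMod 41))^20 := hp10
    apply pm_cast41 hJN41pm hJa41pm
    rw [e1, e2, hfin]
  -- 2-power decompositions of J(N|·)
  have hcastN : ((N : ℕ) : ℤ) = (2:ℤ)^t * (n₀:ℤ) := by
    rw [hNde]; push_cast; ring
  have hJ241 : J((2:ℤ)|41) = 1 := by
    rw [jacobiSym.at_two (by decide), ZMod.χ₈_nat_eq_if_mod_eight]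
    norm_num
  have hJN41 : J((N:ℤ)|41) = J((n₀:ℤ)|41) := by
    rw [hcastN, jacobiSym.mul_left, jacobiSym.pow_left, hJ241, one_pow, one_mul]
  have hJNp : J((N:ℤ)|p) = J((2:ℤ)|p)^t * J((n₀:ℤ)|p) := by
    rw [hcastN, jacobiSym.mul_left, jacobiSym.pow_left]
  have hJ2ppm : J((2:ℤ)|p) = 1 ∨ J((2:ℤ)|p) = -1 := by
    refine jacobiSym.eq_one_or_neg_one (jgcd_one hp ?_)
    intro h
    have h' : p ∣ 2 := by exact_mod_cast h
    have := Nat.le_of_dvd (by norm_num) h'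
    omega
  -- J(z|p) = J(a|p) * J(b|p)
  have hprodd : (p:ℤ) ∣ (z*b - a*y^2) * (z*b + a*y^2) :=
    ⟨x^4*b^2 - 5*y^4, by linear_combination (-b^2)*heq + y^4*hab⟩
  have hgcdyp : Int.gcd y p = 1 := jgcd_one hp hpy
  have hgcdbp : Int.gcd b p = 1 := jgcd_one hp hpb
  have hgcdap : Int.gcd a p = 1 := jgcd_one hp hpa
  have hJm1p : J((-1:ℤ)|p) = 1 := by
    rw [jacobiSym.at_neg_one hpodd, ZMod.χ₄_nat_eq_if_mod_four, hp4]
    norm_num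
    omega
  have hJzb : J(z|p) * J(b|p) = J(a|p) := by
    rcases hpZ.dvd_or_dvd hprodd with h | h
    · have hmod : J(z*b|p) = J(a*y^2|p) := by
        apply jacobiSym.mod_left'
        apply Int.modEq_iff_dvd.mpr
        have hre : a*y^2 - z*b = -(z*b - a*y^2) := by ring
        rw [hre]
        exact dvd_neg.mpr h
      rw [jacobiSym.mul_left, jacobiSym.mul_left, jacobiSym.sq_one' hgcdyp, mul_one] at hmod
      exact hmod
    · have hmod : J(z*b|p) = J(-1*(a*y^2)|p) := by
        apply jacobiSym.mod_left'
        apply Int.modEq_iff_dvd.mpr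
        have hre : -1*(a*y^2) - z*b = -(z*b + a*y^2) := by ring
        rw [hre]
        exact dvd_neg.mpr h
      rw [jacobiSym.mul_left, jacobiSym.mul_left, jacobiSym.mul_left,
        jacobiSym.sq_one' hgcdyp, mul_one, hJm1p, one_mul] at hmod
      exact hmod
  have hJbp_pm : J(b|p) = 1 ∨ J(b|p) = -1 := jacobiSym.eq_one_or_neg_one hgcdbp
  have hJNp_val : J((N:ℤ)|p) = J(a|p) * J(b|p) := by
    have h1 : J((N:ℤ)|p) = J(z|p) := jac_natAbs hp4
    rcases hJbp_pm with h | h <;> rw [h] at hJzb ⊢ <;> rw [h1] <;> linarith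
  -- the main chain E1
  have hE1 : - J(a|41) = J((2:ℤ)|p)^t * (J(a|p) * J(b|p)) := by
    have hsq : J((2:ℤ)|p)^t * J((2:ℤ)|p)^t = 1 := by
      rcases hJ2ppm with h | h <;> rw [h]
      · rw [one_pow]; norm_num
      · rcases Nat.even_or_odd t with ht | ht
        · rw [ht.neg_one_pow]; norm_num
        · rw [ht.neg_one_pow]; norm_num
    calc - J(a|41) = J((N:ℤ)|41) := heuler.symm
      _ = J((n₀:ℤ)|41) := hJN41
      _ = J((n₀:ℤ)|p) := hchain
      _ = J((2:ℤ)|p)^t * (J((2:ℤ)|p)^t * J((n₀:ℤ)|p)) := by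
          rw [← mul_assoc, hsq, one_mul]
      _ = J((2:ℤ)|p)^t * J((N:ℤ)|p) := by rw [← hJNp]
      _ = J((2:ℤ)|p)^t * (J(a|p) * J(b|p)) := by rw [hJNp_val]
  -- decomposition of a and b
  set A := a.natAbs with hA
  set B := b.natAbs with hB
  have hA0 : A ≠ 0 := by simpa [hA, Int.natAbs_eq_zero] using ha0
  have hB0 : B ≠ 0 := by simpa [hB, Int.natAbs_eq_zero] using hb0
  obtain ⟨sa, A₀, hA₀odd, hAde⟩ := exists_two_pow_mul_odd hA0
  obtain ⟨sb, B₀, hB₀odd, hBde⟩ := exists_two_pow_mul_odd hB0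
  have hAa : ((A:ℕ):ℤ) ∣ a := Int.natAbs_dvd.mpr dvd_rfl
  have hBb : ((B:ℕ):ℤ) ∣ b := Int.natAbs_dvd.mpr dvd_rfl
  have hA₀a : ((A₀:ℕ):ℤ) ∣ a := by
    refine dvd_trans ?_ hAa
    exact_mod_cast Int.natCast_dvd_natCast.mpr ⟨2^sa, by rw [hAde]; ring⟩
  have hB₀b : ((B₀:ℕ):ℤ) ∣ b := by
    refine dvd_trans ?_ hBb
    exact_mod_cast Int.natCast_dvd_natCast.mpr ⟨2^sb, by rw [hBde]; ring⟩
  have hcastA : ((A : ℕ) : ℤ) = (2:ℤ)^sa * (A₀:ℤ) := by rw [hAde]; push_cast; ring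
  have hcastB : ((B : ℕ) : ℤ) = (2:ℤ)^sb * (B₀:ℤ) := by rw [hBde]; push_cast; ring
  have h41A₀ : ¬ (41:ℤ) ∣ (A₀:ℤ) := fun h => h41a (h.trans hA₀a)
  have h5A₀ : ¬ (5:ℤ) ∣ (A₀:ℤ) := fun h => h5a (h.trans hA₀a)
  have h5B₀ : ¬ (5:ℤ) ∣ (B₀:ℤ) := fun h => h5b (h.trans hB₀b)
  -- J(205 p | A₀) = 1
  have hgcd41b : Int.gcd (41*b) A₀ = 1 := by
    apply gcd_eq_one_of (mul_ne_zero (by norm_num) hb0)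
    intro qq hqq hq1 hq2
    have hqa : (qq:ℤ) ∣ a := hq2.trans hA₀a
    rcases (Nat.prime_iff_prime_int.mp hqq).dvd_mul.mp hq1 with h | h
    · have h' : (qq:ℕ) ∣ 41 := by exact_mod_cast h
      have h2 : qq = 41 := (Nat.prime_dvd_prime_iff_eq hqq (by norm_num)).mp h'
      rw [h2] at hqa
      exact h41a hqa
    · exact hqab qq hqq hqa h
  have hm2 : (5*41*(p:ℤ)) % (A₀:ℤ) = ((41*b)^2) % (A₀:ℤ) := by
    apply Int.modEq_iff_dvd.mpr
    have hdif : (41*b)^2 - 5*41*(p:ℤ) = -41*a^2 := by linear_combination -41*hab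
    rw [hdif]
    exact (dvd_pow hA₀a two_ne_zero).mul_left (-41)
  have h205 : J((5:ℤ)|A₀) * J((41:ℤ)|A₀) * J((p:ℤ)|A₀) = 1 := by
    have h1 : J(5*41*(p:ℤ)|A₀) = 1 := by
      rw [jacobiSym.mod_left' hm2]
      exact jacobiSym.sq_one' hgcd41b
    rw [jacobiSym.mul_left, jacobiSym.mul_left] at h1
    exact h1
  have hr5A : J((5:ℤ)|A₀) = J((A₀:ℤ)|5) := by
    have h := jacobiSym.quadratic_reciprocity_one_mod_four (a := 5) (b := A₀) (by norm_num) hA₀odd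
    exact_mod_cast h
  have hr41A : J((41:ℤ)|A₀) = J((A₀:ℤ)|41) := by
    have h := jacobiSym.quadratic_reciprocity_one_mod_four (a := 41) (b := A₀) (by norm_num) hA₀odd
    exact_mod_cast h
  have hrpA : J((p:ℤ)|A₀) = J((A₀:ℤ)|p) :=
    jacobiSym.quadratic_reciprocity_one_mod_four hp4 hA₀odd
  have hJA05pm : J((A₀:ℤ)|5) = 1 ∨ J((A₀:ℤ)|5) = -1 :=
    jacobiSym.eq_one_or_neg_one (jgcd_one (by norm_num) h5A₀)
  have hJA041pm : J((A₀:ℤ)|41) = 1 ∨ J((A₀:ℤ)|41) = -1 :=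
    jacobiSym.eq_one_or_neg_one (jgcd_one (by norm_num) h41A₀)
  have hA₀p : J((A₀:ℤ)|p) = J((A₀:ℤ)|5) * J((A₀:ℤ)|41) := by
    have h := h205
    rw [hr5A, hr41A, hrpA] at h
    exact pm_mul_eq_one (pm_mul hJA05pm hJA041pm) h
  -- J(5 p | B₀) = 1
  have hgcdaB₀ : Int.gcd a B₀ = 1 := by
    apply gcd_eq_one_of ha0
    intro qq hqq hq1 hq2
    exact hqab qq hqq hq1 (hq2.trans hB₀b)
  have hm3 : (5*(p:ℤ)) % (B₀:ℤ) = (a^2) % (B₀:ℤ) := by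
    apply Int.modEq_iff_dvd.mpr
    have hdif : a^2 - 5*(p:ℤ) = -41*b^2 := by linear_combination -hab
    rw [hdif]
    exact (dvd_pow hB₀b two_ne_zero).mul_left (-41)
  have hr5B : J((5:ℤ)|B₀) = J((B₀:ℤ)|5) := by
    have h := jacobiSym.quadratic_reciprocity_one_mod_four (a := 5) (b := B₀) (by norm_num) hB₀odd
    exact_mod_cast h
  have hrpB : J((p:ℤ)|B₀) = J((B₀:ℤ)|p) :=
    jacobiSym.quadratic_reciprocity_one_mod_four hp4 hB₀odd
  have hJB05pm : J((B₀:ℤ)|5) = 1 ∨ J((B₀:ℤ)|5) = -1 :=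
    jacobiSym.eq_one_or_neg_one (jgcd_one (by norm_num) h5B₀)
  have hB₀p : J((B₀:ℤ)|p) = J((B₀:ℤ)|5) := by
    have h1 : J(5*(p:ℤ)|B₀) = 1 := by
      rw [jacobiSym.mod_left' hm3]
      exact jacobiSym.sq_one' hgcdaB₀
    rw [jacobiSym.mul_left, hr5B, hrpB] at h1
    exact pm_mul_eq_one hJB05pm h1
  -- mod 5 : J(a|5) * J(b|5) = -1
  haveI hF5 : Fact (Nat.Prime 5) := ⟨by norm_num⟩
  have hJ25 : J((2:ℤ)|5) = -1 := by
    rw [jacobiSym.at_two (by decide), ZMod.χ₈_nat_eq_if_mod_eight]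
    norm_num
  have hJm15 : J((-1:ℤ)|5) = 1 := by
    rw [jacobiSym.at_neg_one (by decide), ZMod.χ₄_nat_eq_if_mod_four]
    norm_num
  have hgcdb5 : Int.gcd b 5 = 1 := jgcd_one (by norm_num) h5b
  have hJab5 : J(a|5) * J(b|5) = -1 := by
    have hc5 := congrArg (fun tt : ℤ => (tt : ZMod 5)) hab
    push_cast at hc5
    have h5' : (5 : ZMod 5) = 0 := zmod5_5
    have h41' : (41 : ZMod 5) = 1 := zmod5_41
    have h4' : (4 : ZMod 5) = -1 := zmod5_4
    have hsum : ((a:ℤ) : ZMod 5)^2 + ((b:ℤ) : ZMod 5)^2 = 0 := by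
      rw [h5', h41', zero_mul, one_mul] at hc5
      exact hc5.symm
    have hfac : (((a:ℤ) : ZMod 5) - 2*((b:ℤ):ZMod 5)) * (((a:ℤ) : ZMod 5) + 2*((b:ℤ):ZMod 5)) = 0 := by
      have : (((a:ℤ) : ZMod 5) - 2*((b:ℤ):ZMod 5)) * (((a:ℤ) : ZMod 5) + 2*((b:ℤ):ZMod 5))
          = ((a:ℤ) : ZMod 5)^2 - 4*((b:ℤ):ZMod 5)^2 := by ring
      rw [this, h4']
      linear_combination hsum
    have hJb5sq : J(b|5) * J(b|5) = 1 := by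
      have h := jacobiSym.sq_one hgcdb5
      linear_combination h
    rcases mul_eq_zero.mp hfac with h | h
    · have hdvd : ((5:ℕ):ℤ) ∣ 2*b - a :=
        (ZMod.intCast_zmod_eq_zero_iff_dvd _ 5).mp (by push_cast; linear_combination -h)
      have hmod : J(a|5) = J(2*b|5) := by
        apply jacobiSym.mod_left'
        exact Int.modEq_iff_dvd.mpr hdvd
      rw [jacobiSym.mul_left, hJ25] at hmod
      rw [hmod]
      linear_combination -hJb5sq
    · have hdvd : ((5:ℕ):ℤ) ∣ -1*(2*b) - a :=
        (ZMod.intCast_zmod_eq_zero_iff_dvd _ 5).mp (by push_cast; linear_combination -h)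
      have hmod : J(a|5) = J(-1*(2*b)|5) := by
        apply jacobiSym.mod_left'
        exact Int.modEq_iff_dvd.mpr hdvd
      rw [jacobiSym.mul_left, jacobiSym.mul_left, hJ25, hJm15] at hmod
      rw [hmod]
      linear_combination -hJb5sq
  -- express J(A₀|5), J(B₀|5)
  have hJa5A : J(a|5) = (-1:ℤ)^sa * J((A₀:ℤ)|5) := by
    rw [← jac_natAbs (a := a) (q := 5) (by norm_num), ← hA, hcastA,
      jacobiSym.mul_left, jacobiSym.pow_left, hJ25]
  have hJb5B : J(b|5) = (-1:ℤ)^sb * J((B₀:ℤ)|5) := by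
    rw [← jac_natAbs (a := b) (q := 5) (by norm_num), ← hB, hcastB,
      jacobiSym.mul_left, jacobiSym.pow_left, hJ25]
  -- express J(a|p), J(b|p), J(a|41)
  have hJap : J(a|p) = J((2:ℤ)|p)^sa * (J((A₀:ℤ)|5) * J((A₀:ℤ)|41)) := by
    rw [← jac_natAbs (a := a) (q := p) hp4, ← hA, hcastA,
      jacobiSym.mul_left, jacobiSym.pow_left, hA₀p]
  have hJbp : J(b|p) = J((2:ℤ)|p)^sb * J((B₀:ℤ)|5) := by
    rw [← jac_natAbs (a := b) (q := p) hp4, ← hB, hcastB,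
      jacobiSym.mul_left, jacobiSym.pow_left, hB₀p]
  have hJa41 : J(a|41) = J((A₀:ℤ)|41) := by
    rw [← jac_natAbs (a := a) (q := 41) (by norm_num), ← hA, hcastA,
      jacobiSym.mul_left, jacobiSym.pow_left, hJ241, one_pow, one_mul]
  -- the key product identity
  have huv : J((A₀:ℤ)|5) * J((B₀:ℤ)|5) = (-1:ℤ)^sa * (-1)^sb * (-1) := by
    have h := hJab5
    rw [hJa5A, hJb5B] at h
    exact huv_helper sa sb h
  have hσ : J(a|p) * J(b|p) = (-J((2:ℤ)|p))^(sa+sb) * (-1) * J(a|41) := by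
    rw [hJap, hJbp, hJa41, neg_pow, pow_add, pow_add]
    linear_combination (J((2:ℤ)|p)^sa * J((2:ℤ)|p)^sb * J((A₀:ℤ)|41)) * huv
  -- final case analysis
  have hp8or : p % 8 = 1 ∨ p % 16 = 13 := by rcases hp16 with h|h|h <;> omega
  rcases hp8or with hp8 | hp13
  · -- case p ≡ 1 (mod 8)
    have hJ2p1 : J((2:ℤ)|p) = 1 := by
      rw [jacobiSym.at_two hpodd, ZMod.χ₈_nat_eq_if_mod_eight, hp8]
      norm_num [Nat.odd_iff.mp hpodd]
    have hSodd : Odd (sa + sb) := by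
      rcases Int.even_or_odd a with ⟨a2, ha2⟩ | ⟨a2, ha2⟩ <;>
        rcases Int.even_or_odd b with ⟨b2, hb2⟩ | ⟨b2, hb2⟩
      · exact absurd (hqab 2 Nat.prime_two ⟨a2, by omega⟩ ⟨b2, by omega⟩) not_false
      · -- a even, b odd
        have hsb0 : sb = 0 := two_pow_exp_zero hBde (by rw [hB, Int.natAbs_odd]; exact ⟨b2, hb2⟩)
        obtain ⟨r, hr⟩ : ∃ r, p = 8*r+1 := ⟨p/8, by omega⟩
        have hpc : ((p:ℕ) : ZMod 16) = 8*((r:ℕ) : ZMod 16) + 1 := by rw [hr]; push_cast; ring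
        have hac : ((a:ℤ) : ZMod 16) = 2*((a2:ℤ) : ZMod 16) := by
          rw [show a = 2*a2 by omega]; push_cast; ring
        have hbc : ((b:ℤ) : ZMod 16) = 2*((b2:ℤ) : ZMod 16)+1 := by rw [hb2]; push_cast; ring
        have hc16 := congrArg (fun tt : ℤ => (tt : ZMod 16)) hab
        push_cast at hc16
        rw [hpc, hac, hbc] at hc16
        have h4 := zmod16_keyA _ _ _ hc16
        have hd16 : (16:ℤ) ∣ a^2 - 4 := by
          have h' := (ZMod.intCast_zmod_eq_zero_iff_dvd (a^2-4) 16).mp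
            (by push_cast; rw [hac, h4]; ring)
          exact_mod_cast h'
        have hsa1 : sa = 1 := two_pow_exp_one hA hAde hA₀odd ⟨a2, ha2⟩ hd16
        rw [hsa1, hsb0]
        norm_num
      · -- a odd, b even
        have hsa0 : sa = 0 := two_pow_exp_zero hAde (by rw [hA, Int.natAbs_odd]; exact ⟨a2, ha2⟩)
        obtain ⟨r, hr⟩ : ∃ r, p = 8*r+1 := ⟨p/8, by omega⟩
        have hpc : ((p:ℕ) : ZMod 16) = 8*((r:ℕ) : ZMod 16) + 1 := by rw [hr]; push_cast; ring
        have hbc : ((b:ℤ) : ZMod 16) = 2*((b2:ℤ) : ZMod 16) := by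
          rw [show b = 2*b2 by omega]; push_cast; ring
        have hac : ((a:ℤ) : ZMod 16) = 2*((a2:ℤ) : ZMod 16)+1 := by rw [ha2]; push_cast; ring
        have hc16 := congrArg (fun tt : ℤ => (tt : ZMod 16)) hab
        push_cast at hc16
        rw [hpc, hac, hbc] at hc16
        have h4 := zmod16_keyB _ _ _ hc16
        have hd16 : (16:ℤ) ∣ b^2 - 4 := by
          have h' := (ZMod.intCast_zmod_eq_zero_iff_dvd (b^2-4) 16).mp
            (by push_cast; rw [hbc, h4]; ring)
          exact_mod_cast h'
        have hsb1 : sb = 1 := two_pow_exp_one hB hBde hB₀odd ⟨b2, hb2⟩ hd16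
        rw [hsa0, hsb1]
        norm_num
      · -- both odd
        exfalso
        obtain ⟨r, hr⟩ : ∃ r, p = 4*r+1 := ⟨p/4, by omega⟩
        have hpc : ((p:ℕ) : ZMod 4) = 4*((r:ℕ) : ZMod 4) + 1 := by rw [hr]; push_cast; ring
        have hac : ((a:ℤ) : ZMod 4) = 2*((a2:ℤ) : ZMod 4)+1 := by rw [ha2]; push_cast; ring
        have hbc : ((b:ℤ) : ZMod 4) = 2*((b2:ℤ) : ZMod 4)+1 := by rw [hb2]; push_cast; ring
        have hc4 := congrArg (fun tt : ℤ => (tt : ZMod 4)) hab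
        push_cast at hc4
        rw [hpc, hac, hbc] at hc4
        exact zmod4_key _ _ _ hc4
    have hfin1 : J(a|p) * J(b|p) = J(a|41) := by
      rw [hσ, hJ2p1]
      have hm : (-(1:ℤ))^(sa+sb) = -1 := hSodd.neg_one_pow
      rw [hm]
      ring
    have hfin2 : - J(a|41) = J(a|p) * J(b|p) := by
      rw [hE1, hJ2p1, one_pow, one_mul]
    rcases hJa41pm with h | h <;> rw [h] at hfin1 hfin2 <;> linarith
  · -- case p ≡ 13 (mod 16)
    have hp8 : p % 8 = 5 := by omega
    have hJ2pm1 : J((2:ℤ)|p) = -1 := by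
      rw [jacobiSym.at_two hpodd, ZMod.χ₈_nat_eq_if_mod_eight, hp8]
      norm_num [Nat.odd_iff.mp hpodd]
    -- y must be odd
    obtain ⟨k, hk⟩ : ∃ k, y = 2*k+1 := by
      rcases Int.even_or_odd y with ⟨k, hk⟩ | ⟨k, hk⟩
      · exfalso
        obtain ⟨r, hr⟩ : ∃ r, p = 16*r+13 := ⟨p/16, by omega⟩
        have hpc : ((p:ℕ) : ZMod 16) = 16*((r:ℕ) : ZMod 16) + 13 := by rw [hr]; push_cast; ring
        have hxc : ((x:ℤ) : ZMod 16) = 2*((j:ℤ) : ZMod 16)+1 := by rw [hj]; push_cast; ring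
        have hyc : ((y:ℤ) : ZMod 16) = 2*((k:ℤ) : ZMod 16) := by
          rw [show y = 2*k by omega]; push_cast; ring
        have hc16 := congrArg (fun tt : ℤ => (tt : ZMod 16)) heq
        push_cast at hc16
        rw [hpc, hxc, hyc] at hc16
        rw [zmod16_even4, zmod16_odd4, zmod16_13] at hc16
        exact zmod16_nz _ hc16
      · exact ⟨k, hk⟩
    -- z² ≡ 4 (mod 16), hence t = 1
    have ht1 : t = 1 := by
      obtain ⟨r, hr⟩ : ∃ r, p = 16*r+13 := ⟨p/16, by omega⟩
      have hpc : ((p:ℕ) : ZMod 16) = 16*((r:ℕ) : ZMod 16) + 13 := by rw [hr]; push_cast; ring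
      have hxc : ((x:ℤ) : ZMod 16) = 2*((j:ℤ) : ZMod 16)+1 := by rw [hj]; push_cast; ring
      have hyc : ((y:ℤ) : ZMod 16) = 2*((k:ℤ) : ZMod 16)+1 := by rw [hk]; push_cast; ring
      have hc16 := congrArg (fun tt : ℤ => (tt : ZMod 16)) heq
      push_cast at hc16
      rw [hpc, hxc, hyc] at hc16
      rw [zmod16_odd4, zmod16_odd4, zmod16_13] at hc16
      have hz4 : ((z:ℤ) : ZMod 16)^2 = 4 := by
        rw [← hc16]
        exact zmod16_val
      have hd16 : (16:ℤ) ∣ z^2 - 4 := by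
        have h' := (ZMod.intCast_zmod_eq_zero_iff_dvd (z^2-4) 16).mp
          (by push_cast; rw [hz4]; ring)
        exact_mod_cast h'
      have hevz : Even z := by
        obtain ⟨c, hc⟩ := hd16
        have : Even (z^2) := ⟨8*c+2, by linarith⟩
        exact (Int.even_pow.mp this).1
      exact two_pow_exp_one hN hNde hn₀odd hevz hd16
    have hfin1 : J(a|p) * J(b|p) = - J(a|41) := by
      rw [hσ, hJ2pm1]
      norm_num
    have hfin2 : - J(a|41) = - (J(a|p) * J(b|p)) := by
      rw [hE1, hJ2pm1, ht1, pow_one]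
      ring
    rcases hJa41pm with h | h <;> rw [h] at hfin1 hfin2 <;> linarith


/-- Pépin's claim (Proposition 1): if the prime `p` is represented by the
quadratic form `5m² + 4mn + 9n²`, then `p·x⁴ − 41·y⁴ = z²` has no nontrivial
integral solutions. -/
theorem pepin_prop1 (p : ℕ) (hp : p.Prime)
    (hrep : ∃ m n : ℤ, (p : ℤ) = 5 * m ^ 2 + 4 * m * n + 9 * n ^ 2) :
    ¬ ∃ x y z : ℤ, (x, y, z) ≠ (0, 0, 0) ∧
      (p : ℤ) * x ^ 4 - 41 * y ^ 4 = z ^ 2 := by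
  rintro ⟨x, y, z, hne, heq⟩
  obtain ⟨m, n, hmn⟩ := hrep
  have hab : 5 * (p:ℤ) = (5*m+2*n)^2 + 41*n^2 := by rw [hmn]; ring
  have hx0 : x ≠ 0 := by
    rintro rfl
    norm_num at heq
    have hy4 : y^4 = 0 := by nlinarith [sq_nonneg z, sq_nonneg (y^2)]
    have hy' : y = 0 := pow_eq_zero_iff (n := 4) (by norm_num) |>.mp hy4
    have hz' : z = 0 := by
      rw [hy'] at heq
      nlinarith [sq_nonneg z]
    exact hne (by rw [hy', hz'])
  have main : ∀ k : ℕ, ∀ x y z : ℤ, x.natAbs = k → x ≠ 0 →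
      (p:ℤ)*x^4 - 41*y^4 = z^2 → False := by
    intro k
    induction k using Nat.strong_induction_on with
    | _ k ih =>
      intro x y z hk hx0 heq
      by_cases hco : Int.gcd x y = 1
      · exact no_primitive p hp _ _ x y z hab hco heq
      · obtain ⟨g, hg⟩ : ∃ g : ℕ, g = Int.gcd x y := ⟨_, rfl⟩
        have hg0 : g ≠ 0 := fun h => hx0 (Int.gcd_eq_zero_iff.mp (hg ▸ h.symm).symm).1
        have hg1 : g ≠ 1 := fun h => hco (by rw [← hg, h])
        have hg2 : 2 ≤ g := by omega
        have hgx : ((g:ℕ):ℤ) ∣ x := by rw [hg]; exact Int.gcd_dvd_left _ _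
        have hgy : ((g:ℕ):ℤ) ∣ y := by rw [hg]; exact Int.gcd_dvd_right _ _
        obtain ⟨x1, hx1⟩ := hgx
        obtain ⟨y1, hy1⟩ := hgy
        have hg4 : (((g:ℕ):ℤ)^2)^2 ∣ z^2 :=
          ⟨(p:ℤ)*x1^4 - 41*y1^4, by rw [← heq, hx1, hy1]; ring⟩
        obtain ⟨z1, hz1⟩ := (Int.pow_dvd_pow_iff two_ne_zero).mp hg4
        have hgne : ((g:ℕ):ℤ)^4 ≠ 0 := by
          have hne' : ((g:ℕ):ℤ) ≠ 0 := by exact_mod_cast hg0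
          positivity
        have heq1 : (p:ℤ)*x1^4 - 41*y1^4 = z1^2 := by
          apply mul_left_cancel₀ hgne
          rw [hx1, hy1, hz1] at heq
          linear_combination heq
        have hx10 : x1 ≠ 0 := by
          rintro rfl
          rw [mul_zero] at hx1
          exact hx0 hx1
        have hlt : x1.natAbs < k := by
          have hk' : k = g * x1.natAbs := by
            rw [← hk, hx1, Int.natAbs_mul, Int.natAbs_natCast]
          have h1 : 1 ≤ x1.natAbs := by
            rcases Nat.eq_zero_or_pos x1.natAbs with h | h
            · exact absurd (Int.natAbs_eq_zero.mp h) hx10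
            · omega
          calc x1.natAbs < 2 * x1.natAbs := by omega
            _ ≤ g * x1.natAbs := Nat.mul_le_mul_right _ hg2
            _ = k := hk'.symm
        exact ih x1.natAbs hlt x1 y1 z1 rfl hx10 heq1
  exact main x.natAbs x y z rfl hx0 heq
end

section
/- Let p be a prime number such that p = 9a² + 4b² for some integers a and b. Then there are no integers x, y, z, not all zero, satisfying p·x⁴ − 36·y⁴ = z². -/
open Zsqrtd

section PepinAux

private lemma norm_dvd_norm' {g h : GaussianInt} (hdvd : g ∣ h) : g.norm ∣ h.norm := by
  obtain ⟨k, rfl⟩ := hdvd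
  exact ⟨k.norm, Zsqrtd.norm_mul g k⟩

private lemma pow4_eq (c d : ℤ) :
    ((⟨c, d⟩ : GaussianInt)^4) = ⟨c^4 - 6*c^2*d^2 + d^4, 4*c^3*d - 4*c*d^3⟩ := by
  simp only [Zsqrtd.ext_iff, pow_succ, pow_zero, one_mul, Zsqrtd.re_mul, Zsqrtd.im_mul]
  constructor <;> ring

private lemma prime_dvd_23 {q : ℕ} (hq : q.Prime) {i j : ℕ} (h : q ∣ 2^i * 3^j) :
    q = 2 ∨ q = 3 := by
  rcases hq.prime.dvd_mul.mp h with h' | h'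
  · exact Or.inl ((Nat.prime_dvd_prime_iff_eq hq Nat.prime_two).mp (hq.prime.dvd_of_dvd_pow h'))
  · exact Or.inr ((Nat.prime_dvd_prime_iff_eq hq Nat.prime_three).mp (hq.prime.dvd_of_dvd_pow h'))

private lemma prime_pi (p : ℕ) (hp : p.Prime) (a b : ℤ) (h : (p:ℤ) = 9*a^2+4*b^2) :
    Prime (⟨3*a, 2*b⟩ : GaussianInt) := by
  have hn : (⟨3*a, 2*b⟩ : GaussianInt).norm = (p:ℤ) := by
    simp only [Zsqrtd.norm_def, h]; ring
  rw [← UniqueFactorizationMonoid.irreducible_iff_prime]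
  constructor
  · intro hu
    have := Zsqrtd.norm_eq_one_iff.mpr hu
    rw [hn] at this
    simp at this
    exact hp.ne_one this
  · intro s t hst
    have hmn : s.norm.natAbs * t.norm.natAbs = p := by
      have := congrArg (fun w : GaussianInt => w.norm.natAbs) hst
      simpa [Zsqrtd.norm_mul, Int.natAbs_mul, hn] using this.symm
    rcases hp.eq_one_or_self_of_dvd s.norm.natAbs ⟨t.norm.natAbs, hmn.symm⟩ with h1 | h1
    · exact Or.inl (Zsqrtd.norm_eq_one_iff.mp h1)
    · right
      apply Zsqrtd.norm_eq_one_iff.mp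
      have hp0 : 0 < p := hp.pos
      rw [h1] at hmn
      nlinarith [hmn]

set_option maxHeartbeats 1000000 in
/-- Key case: if π = 3a+2bi divides z + 6y²i, contradiction. -/
private lemma pepin_case (p : ℕ) (hp : p.Prime) (a b x y z : ℤ)
    (hrep : (p:ℤ) = 9*a^2+4*b^2)
    (hb3 : ¬ (3:ℤ) ∣ b)
    (hx3 : ¬ (3:ℤ) ∣ x)
    (hz2 : ¬ (2:ℤ) ∣ z)
    (hEq : z^2 + 36*y^4 = (p:ℤ) * x^4)
    (hcop : IsCoprime (⟨z, 6*y^2⟩ : GaussianInt) (star ⟨z, 6*y^2⟩))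
    (hdvd : (⟨3*a, 2*b⟩ : GaussianInt) ∣ ⟨z, 6*y^2⟩) : False := by
  set π : GaussianInt := ⟨3*a, 2*b⟩ with hπ
  set α : GaussianInt := ⟨z, 6*y^2⟩ with hα
  have hp0 : (p:ℤ) ≠ 0 := by exact_mod_cast hp.ne_zero
  have hpG : ((p:ℤ) : GaussianInt) ≠ 0 := by
    simpa using (Int.cast_injective (α := GaussianInt)).ne hp0
  obtain ⟨μ, hμ⟩ := hdvd
  have hstar : star α = star π * star μ := by rw [hμ, star_mul, mul_comm]
  have hππ : π * star π = (((p:ℤ)) : GaussianInt) := by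
    simp only [hπ, Zsqrtd.ext_iff, Zsqrtd.re_mul, Zsqrtd.im_mul, Zsqrtd.star_mk,
      Zsqrtd.re_intCast, Zsqrtd.im_intCast, hrep]
    constructor <;> ring
  have hαα : α * star α = (((p:ℤ)) : GaussianInt) * ((x:ℤ) : GaussianInt)^4 := by
    have h1 : α * star α = ((z^2 + 36*y^4 : ℤ) : GaussianInt) := by
      simp only [hα, Zsqrtd.ext_iff, Zsqrtd.re_mul, Zsqrtd.im_mul, Zsqrtd.star_mk,
        Zsqrtd.re_intCast, Zsqrtd.im_intCast]
      constructor <;> ring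
    rw [h1, hEq]
    push_cast
    ring
  have hμμ : μ * star μ = ((x:ℤ) : GaussianInt)^4 := by
    apply mul_left_cancel₀ (show π * star π ≠ 0 by rw [hππ]; exact hpG)
    calc π * star π * (μ * star μ) = (π * μ) * (star π * star μ) := by ring
    _ = α * star α := by rw [← hμ, ← hstar]
    _ = (((p:ℤ)) : GaussianInt) * ((x:ℤ) : GaussianInt)^4 := hαα
    _ = π * star π * ((x:ℤ) : GaussianInt)^4 := by rw [hππ]
  have hcopμ : IsCoprime μ (star μ) := by
    have h2 : star (π * μ) = star π * star μ := by rw [star_mul, mul_comm]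
    rw [hμ, h2] at hcop
    exact hcop.of_mul_left_right.of_mul_right_right
  obtain ⟨δ, hδ⟩ := exists_associated_pow_of_mul_eq_pow' hcopμ hμμ
  obtain ⟨u, hu⟩ := hδ
  -- unit classification
  have hnu : ((u : GaussianInt)).norm.natAbs = 1 := Zsqrtd.norm_eq_one_iff.mpr u.isUnit
  have hnn : (0:ℤ) ≤ (u : GaussianInt).norm :=
    Zsqrtd.norm_nonneg (by norm_num : (-1:ℤ) ≤ 0) (u : GaussianInt)
  have hrs : (u : GaussianInt).re^2 + (u : GaussianInt).im^2 = 1 := by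
    have h0 : (u : GaussianInt).norm = (u : GaussianInt).re^2 + (u : GaussianInt).im^2 := by
      simp only [Zsqrtd.norm_def]; ring
    have h1 : (u : GaussianInt).norm = 1 := by omega
    linarith [h0, h1]
  obtain ⟨c, d⟩ := δ
  set r : ℤ := (u : GaussianInt).re with hr
  set s : ℤ := (u : GaussianInt).im with hs
  have hα2 : α = π * ((⟨c^4 - 6*c^2*d^2 + d^4, 4*c^3*d - 4*c*d^3⟩ : GaussianInt) * (u : GaussianInt)) := by
    rw [hμ, ← hu, pow4_eq]
  rw [Zsqrtd.ext_iff] at hα2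
  obtain ⟨ha1, ha2⟩ := hα2
  simp only [Zsqrtd.re_mul, Zsqrtd.im_mul] at ha1 ha2
  rw [← hr, ← hs] at ha1 ha2
  have h1 : z = (3*a*(c^4 - 6*c^2*d^2 + d^4) - 2*b*(4*c^3*d - 4*c*d^3))*r
      - (3*a*(4*c^3*d - 4*c*d^3) + 2*b*(c^4 - 6*c^2*d^2 + d^4))*s := by
    linear_combination ha1
  have h2 : 6*y^2 = (3*a*(c^4 - 6*c^2*d^2 + d^4) - 2*b*(4*c^3*d - 4*c*d^3))*s
      + (3*a*(4*c^3*d - 4*c*d^3) + 2*b*(c^4 - 6*c^2*d^2 + d^4))*r := by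
    linear_combination ha2
  have hx4 : x^4 = (c^2+d^2)^4 := by
    apply mul_left_cancel₀ hp0
    rw [← hEq, hrep]
    linear_combination (z + ((3*a*(c^4 - 6*c^2*d^2 + d^4) - 2*b*(4*c^3*d - 4*c*d^3))*r
        - (3*a*(4*c^3*d - 4*c*d^3) + 2*b*(c^4 - 6*c^2*d^2 + d^4))*s)) * h1
      + (6*y^2 + ((3*a*(c^4 - 6*c^2*d^2 + d^4) - 2*b*(4*c^3*d - 4*c*d^3))*s
        + (3*a*(4*c^3*d - 4*c*d^3) + 2*b*(c^4 - 6*c^2*d^2 + d^4))*r)) * h2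
      + ((9*a^2+4*b^2)*((c^4 - 6*c^2*d^2 + d^4)^2+(4*c^3*d - 4*c*d^3)^2)) * hrs
  have hunit : (s = 0 ∧ (r = 1 ∨ r = -1)) ∨ (r = 0 ∧ (s = 1 ∨ s = -1)) := by
    rcases eq_or_ne r 0 with h | h
    · right
      refine ⟨h, ?_⟩
      have hss : (s-1)*(s+1) = 0 := by rw [h] at hrs; linear_combination hrs
      rcases mul_eq_zero.mp hss with h' | h'
      · exact Or.inl (by linarith)
      · exact Or.inr (by linarith)
    · left
      have h1r : 1 ≤ r^2 := by
        rcases lt_or_gt_of_ne h with h' | h' <;> nlinarith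
      have hs0 : s = 0 := by nlinarith [sq_nonneg s]
      refine ⟨hs0, ?_⟩
      have hrr : (r-1)*(r+1) = 0 := by rw [hs0] at hrs; linear_combination hrs
      rcases mul_eq_zero.mp hrr with h' | h'
      · exact Or.inl (by linarith)
      · exact Or.inr (by linarith)
  rcases hunit with ⟨hs0, hr1⟩ | ⟨hr0, hs1⟩
  · -- r = ±1, s = 0 : mod 3 contradiction
    have hdvd3 : (3:ℤ) ∣ 2*b*(c^4 - 6*c^2*d^2 + d^4) := by
      rcases hr1 with h' | h'
      · exact ⟨2*y^2 - a*(4*c^3*d - 4*c*d^3), by rw [hs0, h'] at h2; linear_combination -h2⟩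
      · exact ⟨-(2*y^2) - a*(4*c^3*d - 4*c*d^3), by rw [hs0, h'] at h2; linear_combination h2⟩
    have hE3 : (3:ℤ) ∣ c^4 - 6*c^2*d^2 + d^4 := by
      rcases (Int.prime_three.dvd_mul.mp hdvd3) with h' | h'
      · rcases (Int.prime_three.dvd_mul.mp h') with h'' | h''
        · norm_num at h''
        · exact absurd h'' hb3
      · exact h'
    have hcd : (3:ℤ) ∣ c ∧ (3:ℤ) ∣ d := by
      have hcast : ((c^4 - 6*c^2*d^2 + d^4 : ℤ) : ZMod 3) = 0 := by
        rw [ZMod.intCast_zmod_eq_zero_iff_dvd]; exact_mod_cast hE3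
      push_cast at hcast
      have key : ∀ C D : ZMod 3, C^4 - 6*C^2*D^2 + D^4 = 0 → C = 0 ∧ D = 0 := by decide
      obtain ⟨hc0, hd0⟩ := key _ _ hcast
      exact ⟨(ZMod.intCast_zmod_eq_zero_iff_dvd c 3).mp hc0,
        (ZMod.intCast_zmod_eq_zero_iff_dvd d 3).mp hd0⟩
    apply hx3
    apply Int.prime_three.dvd_of_dvd_pow (n := 4)
    rw [hx4]
    obtain ⟨c', rfl⟩ := hcd.1
    obtain ⟨d', rfl⟩ := hcd.2
    exact ⟨(3*c'^2 + 3*d'^2) * ((3*c')^2+(3*d')^2)^3, by ring⟩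
  · -- s = ±1 : z is even, contradiction
    apply hz2
    rcases hs1 with h' | h'
    · exact ⟨-(6*a*c^3*d) + 6*a*c*d^3 - b*(c^4 - 6*c^2*d^2 + d^4), by
        rw [hr0, h'] at h1; linear_combination h1⟩
    · exact ⟨6*a*c^3*d - 6*a*c*d^3 + b*(c^4 - 6*c^2*d^2 + d^4), by
        rw [hr0, h'] at h1; linear_combination h1⟩

set_option maxHeartbeats 1000000 in
private lemma pepin_reduced (p : ℕ) (hp : p.Prime) (a b x y z : ℤ)
    (hrep : (p:ℤ) = 9*a^2+4*b^2)
    (hco : IsCoprime x y)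
    (hEq : z^2 + 36*y^4 = (p:ℤ) * x^4) : False := by
  have hp0 : (p:ℤ) ≠ 0 := by exact_mod_cast hp.ne_zero
  have hpZ : Prime (p:ℤ) := Nat.prime_iff_prime_int.mp hp
  -- 3 ∤ b
  have hb3 : ¬ (3:ℤ) ∣ b := by
    rintro ⟨b', rfl⟩
    have h9 : (9:ℕ) ∣ p := by
      have : ((9:ℕ):ℤ) ∣ (p:ℤ) := ⟨a^2 + 4*b'^2, by linear_combination hrep⟩
      exact_mod_cast this
    have h3 : (3:ℕ) ∣ p := dvd_trans (by norm_num) h9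
    have hp3 : p = 3 := ((Nat.prime_dvd_prime_iff_eq Nat.prime_three hp).mp h3).symm
    rw [hp3] at h9
    omega
  -- 2 ∤ p
  have hp2 : ¬ (2:ℤ) ∣ (p:ℤ) := by
    intro h
    have h2 : (2:ℕ) ∣ p := by exact_mod_cast h
    have hpe : p = 2 := ((Nat.prime_dvd_prime_iff_eq Nat.prime_two hp).mp h2).symm
    rw [hpe] at hrep
    have h4 : ((9*a^2 - 2 : ℤ) : ZMod 4) = 0 := by
      rw [ZMod.intCast_zmod_eq_zero_iff_dvd]
      exact ⟨-(b^2), by linear_combination -hrep⟩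
    push_cast at h4
    have : ∀ A : ZMod 4, 9*A^2 - 2 ≠ 0 := by decide
    exact this _ h4
  -- 3 ∤ p
  have hp3 : ¬ (3:ℤ) ∣ (p:ℤ) := by
    intro h
    have h3 : (3:ℕ) ∣ p := by exact_mod_cast h
    have hpe : p = 3 := ((Nat.prime_dvd_prime_iff_eq Nat.prime_three hp).mp h3).symm
    rw [hpe] at hrep
    have : (3:ℤ) ∣ 4*b^2 := ⟨1 - 3*a^2, by linear_combination -hrep⟩
    rcases Int.prime_three.dvd_mul.mp this with h' | h'
    · norm_num at h'
    · exact hb3 (Int.prime_three.dvd_of_dvd_pow h')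
  -- 2 ∤ x
  have hx2 : ¬ (2:ℤ) ∣ x := by
    rintro ⟨x', rfl⟩
    have hy2 : ¬ (2:ℤ) ∣ y := by
      intro h
      have := hco.isUnit_of_dvd' ⟨x', rfl⟩ h
      rw [Int.isUnit_iff] at this
      omega
    obtain ⟨k, hk⟩ : ∃ k, y = 2*k+1 := by
      obtain ⟨k, hk⟩ := Int.not_even_iff_odd.mp (fun he => hy2 he.two_dvd)
      exact ⟨k, hk⟩
    have h16 : ((z^2 + 36*y^4 : ℤ) : ZMod 16) = 0 := by
      rw [ZMod.intCast_zmod_eq_zero_iff_dvd]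
      exact ⟨(p:ℤ)*x'^4, by linear_combination hEq⟩
    push_cast at h16
    rw [show ((y:ℤ) : ZMod 16) = 2*(k:ℤ)+1 by exact_mod_cast congrArg (fun t : ℤ => (t : ZMod 16)) hk] at h16
    have : ∀ Z K : ZMod 16, Z^2 + 36*(2*K+1)^4 ≠ 0 := by decide
    exact this _ _ h16
  -- 3 ∤ x
  have hx3 : ¬ (3:ℤ) ∣ x := by
    rintro ⟨x', rfl⟩
    have hy3 : ¬ (3:ℤ) ∣ y := by
      intro h
      have := hco.isUnit_of_dvd' ⟨x', rfl⟩ h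
      rw [Int.isUnit_iff] at this
      omega
    have hz3' : (3:ℤ) ∣ z := by
      apply Int.prime_three.dvd_of_dvd_pow (n := 2)
      exact ⟨27*(p:ℤ)*x'^4 - 12*y^4, by linear_combination hEq⟩
    obtain ⟨z₁, rfl⟩ := hz3'
    have h9 : z₁^2 + 4*y^4 = (p:ℤ) * (9*x'^4) := by
      apply mul_left_cancel₀ (show (9:ℤ) ≠ 0 by norm_num)
      linear_combination hEq
    have h3 : ((z₁^2 + 4*y^4 : ℤ) : ZMod 3) = 0 := by
      rw [ZMod.intCast_zmod_eq_zero_iff_dvd]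
      exact ⟨(p:ℤ)*(3*x'^4), by linear_combination h9⟩
    push_cast at h3
    have hy0 : ((y:ℤ) : ZMod 3) ≠ 0 := fun h => hy3 ((ZMod.intCast_zmod_eq_zero_iff_dvd y 3).mp h)
    have : ∀ Z Y : ZMod 3, Y ≠ 0 → Z^2 + 4*Y^4 ≠ 0 := by decide
    exact this _ _ hy0 h3
  -- 2 ∤ z
  have hz2 : ¬ (2:ℤ) ∣ z := by
    intro h
    have h2 : (2:ℤ) ∣ (p:ℤ) * x^4 := by
      obtain ⟨z', rfl⟩ := h
      exact ⟨2*z'^2 + 18*y^4, by linear_combination -hEq⟩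
    rcases Int.prime_two.dvd_mul.mp h2 with h' | h'
    · exact hp2 h'
    · exact hx2 (Int.prime_two.dvd_of_dvd_pow h')
  -- 3 ∤ z
  have hz3 : ¬ (3:ℤ) ∣ z := by
    intro h
    have h3 : (3:ℤ) ∣ (p:ℤ) * x^4 := by
      obtain ⟨z', rfl⟩ := h
      exact ⟨3*z'^2 + 12*y^4, by linear_combination -hEq⟩
    rcases Int.prime_three.dvd_mul.mp h3 with h' | h'
    · exact hp3 h'
    · exact hx3 (Int.prime_three.dvd_of_dvd_pow h')
  -- Gaussian setup
  set α : GaussianInt := ⟨z, 6*y^2⟩ with hα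
  have hαnorm : α.norm = (p:ℤ) * x^4 := by
    simp only [hα, Zsqrtd.norm_def]
    linear_combination hEq
  -- coprimality of α and star α
  have hcop : IsCoprime α (star α) := by
    set g : GaussianInt := EuclideanDomain.gcd α (star α) with hg
    have hga : g ∣ α := EuclideanDomain.gcd_dvd_left α (star α)
    have hgb : g ∣ star α := EuclideanDomain.gcd_dvd_right α (star α)
    have hn1 : g.norm ∣ (p:ℤ) * x^4 := hαnorm ▸ norm_dvd_norm' hga
    have hsum : g ∣ ((2*z : ℤ) : GaussianInt) := by
      have : α + star α = ((2*z : ℤ) : GaussianInt) := by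
        simp only [hα, Zsqrtd.ext_iff, Zsqrtd.re_add, Zsqrtd.im_add, Zsqrtd.star_mk,
          Zsqrtd.re_intCast, Zsqrtd.im_intCast]
        constructor <;> ring
      exact this ▸ dvd_add hga hgb
    have hdiff : g ∣ (⟨0, 12*y^2⟩ : GaussianInt) := by
      have : α - star α = (⟨0, 12*y^2⟩ : GaussianInt) := by
        simp only [hα, Zsqrtd.ext_iff, Zsqrtd.re_sub, Zsqrtd.im_sub, Zsqrtd.star_mk,
          Zsqrtd.re_intCast, Zsqrtd.im_intCast]
        constructor <;> ring
      exact this ▸ dvd_sub hga hgb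
    have hn2 : g.norm ∣ 4*z^2 := by
      have := norm_dvd_norm' hsum
      simpa [Zsqrtd.norm_def] using (by
        have h' : ((2*z:ℤ) : GaussianInt).norm = 4*z^2 := by
          simp only [Zsqrtd.norm_def, Zsqrtd.re_intCast, Zsqrtd.im_intCast]; ring
        rw [h'] at this; exact this : g.norm ∣ 4*z^2)
    have hn3 : g.norm ∣ 144*y^4 := by
      have := norm_dvd_norm' hdiff
      have h' : ((⟨0, 12*y^2⟩ : GaussianInt)).norm = 144*y^4 := by
        simp only [Zsqrtd.norm_def]; ring
      rw [h'] at this; exact this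
    -- g is a unit
    have hgu : IsUnit g := by
      rw [← Zsqrtd.norm_eq_one_iff]
      by_contra hne
      rcases Nat.eq_zero_or_pos g.norm.natAbs with h0 | hpos
      · have : g.norm = 0 := by omega
        have hg0 : g = 0 := (Zsqrtd.norm_eq_zero_iff (by norm_num : (-1:ℤ) < 0) g).mp this
        rw [hg0] at hga
        have : α = 0 := zero_dvd_iff.mp hga
        have : z = 0 := congrArg Zsqrtd.re this
        exact hz2 (this ▸ dvd_zero 2)
      · obtain ⟨q, hq, hqd⟩ := Nat.exists_prime_and_dvd hne
        have hqZ : Prime (q:ℤ) := Nat.prime_iff_prime_int.mp hq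
        have hqn : (q:ℤ) ∣ g.norm := dvd_trans (by exact_mod_cast hqd) (Int.natAbs_dvd.mpr dvd_rfl)
        have hq1 : (q:ℤ) ∣ 4*z^2 := dvd_trans hqn hn2
        have hq2 : (q:ℤ) ∣ 144*y^4 := dvd_trans hqn hn3
        have hq3 : (q:ℤ) ∣ (p:ℤ) * x^4 := dvd_trans hqn hn1
        -- derive contradiction
        rcases hqZ.dvd_mul.mp hq3 with hA | hA
        · -- q = p
          have hqp : q = p := by
            have : q ∣ p := by exact_mod_cast hA
            exact (Nat.prime_dvd_prime_iff_eq hq hp).mp this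
          subst hqp
          rcases hqZ.dvd_mul.mp hq1 with hB | hB
          · have : q ∣ 4 := by exact_mod_cast hB
            rcases prime_dvd_23 hq (show q ∣ 2^2*3^0 by norm_num; exact this) with h' | h'
            · exact hp2 (h' ▸ hA)
            · exact hp3 (h' ▸ hA)
          · have hpz : (q:ℤ) ∣ z := hqZ.dvd_of_dvd_pow hB
            rcases hqZ.dvd_mul.mp hq2 with hC | hC
            · have : q ∣ 144 := by exact_mod_cast hC
              rcases prime_dvd_23 hq (show q ∣ 2^4*3^2 by norm_num; exact this) with h' | h'
              · exact hp2 (h' ▸ hA)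
              · exact hp3 (h' ▸ hA)
            · have hpy : (q:ℤ) ∣ y := hqZ.dvd_of_dvd_pow hC
              obtain ⟨z₂, hz₂⟩ := hpz
              obtain ⟨y₂, hy₂⟩ := hpy
              have hdx : (q:ℤ) ∣ x^4 := by
                refine ⟨(z₂^2 + 36*(q:ℤ)^2*y₂^4), ?_⟩
                apply mul_left_cancel₀ hp0
                rw [hz₂, hy₂] at hEq
                linear_combination -hEq
              have := hco.isUnit_of_dvd' (hqZ.dvd_of_dvd_pow hdx) ⟨y₂, hy₂⟩
              rw [Int.isUnit_iff] at this
              have := hq.two_le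
              omega
        · -- q ∣ x
          have hqx : (q:ℤ) ∣ x := hqZ.dvd_of_dvd_pow hA
          rcases hqZ.dvd_mul.mp hq1 with hB | hB
          · have : q ∣ 4 := by exact_mod_cast hB
            rcases prime_dvd_23 hq (show q ∣ 2^2*3^0 by norm_num; exact this) with h' | h'
            · subst h'; exact hx2 hqx
            · subst h'; exact hx3 hqx
          · have hqz : (q:ℤ) ∣ z := hqZ.dvd_of_dvd_pow hB
            have hq36 : (q:ℤ) ∣ 36*y^4 := by
              have h36 : (36*y^4 : ℤ) = (p:ℤ)*x^4 - z^2 := by linear_combination hEq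
              rw [h36]
              exact dvd_sub (Dvd.dvd.mul_left (dvd_pow hqx (by norm_num)) _)
                (dvd_pow hqz (by norm_num))
            rcases hqZ.dvd_mul.mp hq36 with hC | hC
            · have : q ∣ 36 := by exact_mod_cast hC
              rcases prime_dvd_23 hq (show q ∣ 2^2*3^2 by norm_num; exact this) with h' | h'
              · subst h'; exact hz2 hqz
              · subst h'; exact hz3 hqz
            · have hqy : (q:ℤ) ∣ y := hqZ.dvd_of_dvd_pow hC
              have := hco.isUnit_of_dvd' hqx hqy
              rw [Int.isUnit_iff] at this
              have := hq.two_le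
              omega
    -- Bezout
    obtain ⟨w, hw⟩ := hgu.exists_left_inv
    refine ⟨w * EuclideanDomain.gcdA α (star α), w * EuclideanDomain.gcdB α (star α), ?_⟩
    have hgab := EuclideanDomain.gcd_eq_gcd_ab α (star α)
    rw [← hg] at hgab
    calc w * EuclideanDomain.gcdA α (star α) * α + w * EuclideanDomain.gcdB α (star α) * star α
        = w * (α * EuclideanDomain.gcdA α (star α) + star α * EuclideanDomain.gcdB α (star α)) := by ring
    _ = w * g := by rw [← hgab]
    _ = 1 := hw
  -- π divides α * star α
  have hππ : (⟨3*a, 2*b⟩ : GaussianInt) * star ⟨3*a, 2*b⟩ = (((p:ℤ)) : GaussianInt) := by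
    simp only [Zsqrtd.ext_iff, Zsqrtd.re_mul, Zsqrtd.im_mul, Zsqrtd.star_mk,
      Zsqrtd.re_intCast, Zsqrtd.im_intCast, hrep]
    constructor <;> ring
  have hαα : α * star α = (((p:ℤ)) : GaussianInt) * ((x:ℤ) : GaussianInt)^4 := by
    have h1 : α * star α = ((z^2 + 36*y^4 : ℤ) : GaussianInt) := by
      simp only [hα, Zsqrtd.ext_iff, Zsqrtd.re_mul, Zsqrtd.im_mul, Zsqrtd.star_mk,
        Zsqrtd.re_intCast, Zsqrtd.im_intCast]
      constructor <;> ring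
    rw [h1, hEq]
    push_cast
    ring
  have hpi : Prime (⟨3*a, 2*b⟩ : GaussianInt) := prime_pi p hp a b hrep
  have hdvdprod : (⟨3*a, 2*b⟩ : GaussianInt) ∣ α * star α := by
    rw [hαα, ← hππ]
    exact ⟨star ⟨3*a, 2*b⟩ * ((x:ℤ) : GaussianInt)^4, by ring⟩
  rcases hpi.dvd_mul.mp hdvdprod with hD | hD
  · exact pepin_case p hp a b x y z hrep hb3 hx3 hz2 hEq hcop hD
  · -- star case: use -b
    have hD' : (⟨3*a, 2*(-b)⟩ : GaussianInt) ∣ α := by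
      obtain ⟨k, hk⟩ := hD
      refine ⟨star k, ?_⟩
      have := congrArg star hk
      rw [star_star, star_mul] at this
      rw [this]
      simp only [Zsqrtd.ext_iff, Zsqrtd.re_mul, Zsqrtd.im_mul, Zsqrtd.star_mk,
        Zsqrtd.re_star, Zsqrtd.im_star]
      constructor <;> ring
    exact pepin_case p hp a (-b) x y z (by linear_combination hrep)
      (by simpa using hb3) hx3 hz2 hEq hcop hD'

end PepinAux

/-- Pépin's claim (Proposition 2): if the prime `p` is represented by the
quadratic form `9a² + 4b²`, then `p·x⁴ − 36·y⁴ = z²` has no nontrivial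
integral solutions. -/
theorem pepin_prop2 (p : ℕ) (hp : p.Prime)
    (hrep : ∃ a b : ℤ, (p : ℤ) = 9 * a ^ 2 + 4 * b ^ 2) :
    ¬ ∃ x y z : ℤ, (x, y, z) ≠ (0, 0, 0) ∧
      (p : ℤ) * x ^ 4 - 36 * y ^ 4 = z ^ 2 := by
  rintro ⟨x, y, z, hnt, heq⟩
  obtain ⟨a, b, hab⟩ := hrep
  have hEq0 : z^2 + 36*y^4 = (p:ℤ) * x^4 := by linear_combination -heq
  by_cases hxy : x = 0 ∧ y = 0
  · obtain ⟨hx0, hy0⟩ := hxy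
    have hz0 : z = 0 := by
      have : z^2 = 0 := by rw [hx0, hy0] at hEq0; linarith [hEq0]
      exact pow_eq_zero_iff (n := 2) (by norm_num) |>.mp this
    exact hnt (by rw [hx0, hy0, hz0])
  · have hg0 : Int.gcd x y ≠ 0 := fun h => hxy (Int.gcd_eq_zero_iff.mp h)
    set g : ℤ := (Int.gcd x y : ℤ) with hg
    have hgz : g ≠ 0 := by rw [hg]; exact_mod_cast hg0
    obtain ⟨x₁, hx₁⟩ : g ∣ x := Int.gcd_dvd_left x y
    obtain ⟨y₁, hy₁⟩ : g ∣ y := Int.gcd_dvd_right x y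
    have hco1 : IsCoprime x₁ y₁ := by
      rw [Int.isCoprime_iff_gcd_eq_one]
      have hdd := Int.gcd_div_gcd_div_gcd (Nat.pos_of_ne_zero hg0)
      rw [← hg, hx₁, hy₁, Int.mul_ediv_cancel_left _ hgz,
        Int.mul_ediv_cancel_left _ hgz] at hdd
      exact hdd
    have hzdvd : g^2 ∣ z := by
      rw [← Int.pow_dvd_pow_iff (two_ne_zero)]
      refine ⟨(p:ℤ)*x₁^4 - 36*y₁^4, ?_⟩
      rw [hx₁, hy₁] at hEq0
      linear_combination hEq0
    obtain ⟨z₁, hz₁⟩ := hzdvd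
    have hEq1 : z₁^2 + 36*y₁^4 = (p:ℤ) * x₁^4 := by
      apply mul_left_cancel₀ (pow_ne_zero 4 hgz)
      rw [hx₁, hy₁, hz₁] at hEq0
      linear_combination hEq0
    exact pepin_reduced p hp a b x₁ y₁ z₁ hab hco1 hEq1
end

section
/- Let p and q be primes with p ≡ 1 (mod 8), q ≡ 3 (mod 4), and p a quadratic residue modulo q. If there exist integers M, N, e, not all zero, with q·N² = M⁴ − 4p·e⁴, then q is a fourth power modulo p. -/
private lemma sq_dvd_of_pow3_dvd_sq {r : ℕ} (hr : r.Prime) {N : ℤ} (h : (r:ℤ)^3 ∣ N^2) :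
    (r:ℤ)^2 ∣ N := by
  rcases eq_or_ne N 0 with rfl | hN
  · simp
  · have h' : r ^ 3 ∣ N.natAbs ^ 2 := by
      have := Int.natAbs_dvd_natAbs.mpr h
      simpa [Int.natAbs_pow] using this
    have hfa : 3 ≤ (N.natAbs ^ 2).factorization r :=
      (Nat.Prime.pow_dvd_iff_le_factorization hr (by positivity)).mp h'
    rw [Nat.factorization_pow] at hfa
    have h2 : 2 ≤ N.natAbs.factorization r := by
      simp at hfa; omega
    have : r ^ 2 ∣ N.natAbs :=
      (Nat.Prime.pow_dvd_iff_le_factorization hr (by simpa using hN)).mpr h2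
    have : ((r:ℤ))^2 ∣ (N.natAbs : ℤ) := by exact_mod_cast Int.natCast_dvd_natCast.mpr this
    exact this.trans (Int.natAbs_dvd.mpr dvd_rfl)

private lemma isSquare_cast_of_primes {p : ℕ} (n : ℕ)
    (h : ∀ r : ℕ, r.Prime → r ∣ n → IsSquare ((r : ZMod p))) :
    IsSquare ((n : ZMod p)) := by
  induction n using induction_on_primes with
  | zero => exact ⟨0, by simp⟩
  | one => exact ⟨1, by simp⟩
  | prime_mul r m hr ih =>
      push_cast
      exact (h r hr (Dvd.intro m rfl)).mul (ih fun s hs hsm => h s hs (hsm.mul_left r))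

private lemma key (p q : ℕ) (hp : p.Prime) (hq : q.Prime)
    (hp8 : p % 8 = 1) (hq4 : q % 4 = 3) :
    ∀ m : ℕ, ∀ M N e : ℤ, M.natAbs = m → M ≠ 0 →
      (q : ℤ) * N ^ 2 = M ^ 4 - 4 * (p : ℤ) * e ^ 4 →
      ∃ x : ZMod p, x ^ 4 = (q : ZMod p) := by
  haveI : Fact p.Prime := ⟨hp⟩
  haveI : Fact q.Prime := ⟨hq⟩
  have hp4 : p % 4 = 1 := by omega
  have hple : 2 ≤ p := hp.two_le
  have hp2 : p ≠ 2 := by omega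
  have hp9 : 9 ≤ p := by omega
  intro m
  induction m using Nat.strong_induction_on with
  | _ m ih =>
  intro M N e hm hM0 heq
  by_cases hc : ∃ r : ℕ, r.Prime ∧ (r:ℤ) ∣ M ∧ (r:ℤ) ∣ e
  · -- descent
    obtain ⟨r, hr, ⟨a, ha⟩, ⟨b, hb⟩⟩ := hc
    have hr0 : (r:ℤ) ≠ 0 := by exact_mod_cast hr.ne_zero
    have h4 : (r:ℤ)^4 ∣ (q:ℤ) * N^2 := by
      rw [heq, ha, hb]; exact ⟨a^4 - 4*p*b^4, by ring⟩
    have h3 : (r:ℤ)^3 ∣ N^2 := by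
      rcases eq_or_ne r q with rfl | hrq
      · obtain ⟨k, hk⟩ := h4
        refine ⟨k, ?_⟩
        have : (r:ℤ) * N^2 = (r:ℤ) * ((r:ℤ)^3 * k) := by rw [hk]; ring
        exact mul_left_cancel₀ hr0 this
      · have hcop : IsCoprime ((r:ℤ)^4) (q:ℤ) :=
          IsCoprime.pow_left (Nat.isCoprime_iff_coprime.mpr ((Nat.coprime_primes hr hq).mpr hrq))
        have h4' : (r:ℤ)^4 ∣ N^2 := hcop.dvd_of_dvd_mul_right (mul_comm (q:ℤ) (N^2) ▸ h4)
        exact (pow_dvd_pow _ (by norm_num)).trans h4'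
    have hN2 : (r:ℤ)^2 ∣ N := sq_dvd_of_pow3_dvd_sq hr h3
    obtain ⟨c, hcN⟩ := hN2
    have heq' : (q:ℤ) * c^2 = a^4 - 4*(p:ℤ)*b^4 := by
      have h5 : (r:ℤ)^4 * ((q:ℤ) * c^2) = (r:ℤ)^4 * (a^4 - 4*(p:ℤ)*b^4) := by
        have h6 := heq
        rw [ha, hb, hcN] at h6
        linear_combination h6
      exact mul_left_cancel₀ (pow_ne_zero 4 hr0) h5
    have ha0 : a ≠ 0 := by rintro rfl; simp at ha; exact hM0 ha
    have hlt : a.natAbs < m := by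
      have h7 : M.natAbs = r * a.natAbs := by rw [ha, Int.natAbs_mul, Int.natAbs_natCast]
      have h8 := hr.two_le
      have h9 := Int.natAbs_pos.mpr ha0
      have h10 : a.natAbs < r * a.natAbs := (lt_mul_iff_one_lt_left h9).mpr h8
      omega
    exact ih a.natAbs hlt a c b rfl ha0 heq'
  · -- primitive case
    push_neg at hc
    have hpq : p ≠ q := by omega
    -- p does not divide N
    have hpN : ¬ (p:ℤ) ∣ N := by
      intro hN
      have hpM : (p:ℤ) ∣ M := by
        have h1 : (p:ℤ) ∣ M^4 := by
          have hM4 : M^4 = (q:ℤ)*N^2 + 4*(p:ℤ)*e^4 := by linarith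
          rw [hM4]
          exact dvd_add (dvd_mul_of_dvd_right (dvd_pow hN two_ne_zero) _) ⟨4*e^4, by ring⟩
        exact Int.Prime.dvd_pow' (by exact_mod_cast hp) h1
      have hpe : (p:ℤ) ∣ e := by
        have h2 : (p:ℤ)^2 ∣ 4*(p:ℤ)*e^4 := by
          have h24 : 4*(p:ℤ)*e^4 = M^4 - (q:ℤ)*N^2 := by linarith
          rw [h24]
          exact dvd_sub ((pow_dvd_pow _ (by norm_num : 2 ≤ 4)).trans (pow_dvd_pow_of_dvd hpM 4))
            (dvd_mul_of_dvd_right (pow_dvd_pow_of_dvd hN 2) _)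
        obtain ⟨k, hk⟩ := h2
        have hp0 : (p:ℤ) ≠ 0 := by exact_mod_cast hp.ne_zero
        have h10 : (p:ℤ) ∣ 4 * e^4 := ⟨k, mul_left_cancel₀ hp0 (by linear_combination hk)⟩
        rcases (Int.Prime.dvd_mul' (by exact_mod_cast hp) h10) with h | h
        · exfalso
          have h11 : (p:ℤ) ≤ 4 := Int.le_of_dvd (by norm_num) h
          have : (p:ℕ) ≤ 4 := by exact_mod_cast h11
          omega
        · exact Int.Prime.dvd_pow' (by exact_mod_cast hp) h
      exact hc p hp hpM hpe
    -- every prime divisor of N is a square mod p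
    have hsq : ∀ r : ℕ, r.Prime → (r:ℤ) ∣ N → IsSquare ((r : ZMod p)) := by
      intro r hr hrN
      haveI : Fact r.Prime := ⟨hr⟩
      rcases eq_or_ne r 2 with rfl | hr2
      · exact (ZMod.exists_sq_eq_two_iff hp2).mpr (Or.inl hp8)
      · have hrp : IsSquare ((p : ZMod r)) := by
          have hNr : (N : ZMod r) = 0 := (ZMod.intCast_zmod_eq_zero_iff_dvd N r).mpr hrN
          have heqr : ((M:ZMod r))^4 = 4*(p:ZMod r)*(e:ZMod r)^4 := by
            have h12 := congrArg (fun z : ℤ => (z : ZMod r)) heq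
            push_cast at h12
            rw [hNr] at h12
            simp at h12
            linear_combination -h12
          have her : (e : ZMod r) ≠ 0 := by
            intro h0
            have hMr : (M : ZMod r) = 0 := by
              have h13 : ((M:ZMod r))^4 = 0 := by rw [heqr, h0]; ring
              exact pow_eq_zero_iff (by norm_num) |>.mp h13
            exact hc r hr ((ZMod.intCast_zmod_eq_zero_iff_dvd M r).mp hMr)
              ((ZMod.intCast_zmod_eq_zero_iff_dvd e r).mp h0)
          have h2r : (2 : ZMod r) ≠ 0 := by
            intro h0
            have hd : r ∣ 2 := (ZMod.natCast_eq_zero_iff 2 r).mp (by push_cast; exact h0)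
            exact hr2 ((Nat.prime_dvd_prime_iff_eq hr Nat.prime_two).mp hd)
          have hu : (2 * (e:ZMod r)^2) ≠ 0 := mul_ne_zero h2r (pow_ne_zero 2 her)
          refine ⟨(M:ZMod r)^2 * (2*(e:ZMod r)^2)⁻¹, ?_⟩
          field_simp
          linear_combination -heqr
        exact (ZMod.exists_sq_eq_prime_iff_of_mod_four_eq_one hp4 hr2).mpr hrp
    -- N is a square mod p
    have hNsq : IsSquare ((N : ZMod p)) := by
      have habs : IsSquare ((N.natAbs : ZMod p)) := by
        refine isSquare_cast_of_primes N.natAbs fun r hr hrd => hsq r hr ?_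
        exact (Int.natCast_dvd_natCast.mpr hrd).trans (Int.natAbs_dvd.mpr dvd_rfl)
      rcases Int.natAbs_eq N with h | h
      · rw [h, Int.cast_natCast]; exact habs
      · rw [h, Int.cast_neg, Int.cast_natCast, ← neg_one_mul]
        exact (ZMod.exists_sq_eq_neg_one_iff.mpr (by omega)).mul habs
    -- conclude
    have hNne : (N : ZMod p) ≠ 0 := fun h0 =>
      hpN ((ZMod.intCast_zmod_eq_zero_iff_dvd N p).mp h0)
    obtain ⟨t, ht⟩ := hNsq
    have ht0 : t ≠ 0 := by rintro rfl; simp at ht; exact hNne ht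
    have heqp : (q:ZMod p) * (t*t)^2 = (M:ZMod p)^4 := by
      have h14 := congrArg (fun z : ℤ => (z : ZMod p)) heq
      push_cast at h14
      rw [ZMod.natCast_self] at h14
      rw [← ht]
      linear_combination h14
    refine ⟨(M:ZMod p) * t⁻¹, ?_⟩
    field_simp
    linear_combination -heqp

/-- Case `b₁ = q` of Proposition 4: if `q·N² = M⁴ − 4p·e⁴` has a nontrivial
integral solution, then `q` is a fourth power modulo `p`. -/
theorem torsor_q (p q : ℕ) (hp : p.Prime) (hq : q.Prime)
    (hp8 : p % 8 = 1) (hq4 : q % 4 = 3)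
    (hres : ∃ x : ZMod q, x ^ 2 = (p : ZMod q))
    (hsol : ∃ M N e : ℤ, (M, N, e) ≠ (0, 0, 0) ∧
      (q : ℤ) * N ^ 2 = M ^ 4 - 4 * (p : ℤ) * e ^ 4) :
    ∃ x : ZMod p, x ^ 4 = (q : ZMod p) := by
  obtain ⟨M, N, e, hnt, heq⟩ := hsol
  have hM0 : M ≠ 0 := by
    rintro rfl
    have hq0 : (0:ℤ) < q := by exact_mod_cast hq.pos
    have hp0 : (0:ℤ) < p := by exact_mod_cast hp.pos
    have hqN : (0:ℤ) ≤ (q:ℤ) * N^2 := mul_nonneg hq0.le (sq_nonneg N)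
    have hpe : (0:ℤ) ≤ 4*(p:ℤ) * e^4 := by positivity
    have hN2 : N^2 = 0 := by nlinarith
    have he4 : e^4 = 0 := by nlinarith
    have hN : N = 0 := pow_eq_zero_iff two_ne_zero |>.mp hN2
    have he : e = 0 := pow_eq_zero_iff (by norm_num) |>.mp he4
    exact hnt (by simp [hN, he])
  exact key p q hp hq hp8 hq4 M.natAbs M N e rfl hM0 heq
end

section
/- Let p and q be primes with p ≡ 1 (mod 8), q ≡ 3 (mod 4), and p a quadratic residue modulo q. If there exist integers M, N, e, not all zero, with q·N² = 4p·e⁴ − M⁴, then q is a fourth power modulo p. -/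
private lemma aux_sq_dvd (q : ℤ) (hq : Prime q) (d : ℕ) :
    ∀ N : ℤ, (d : ℤ) ^ 4 ∣ q * N ^ 2 → (d : ℤ) ^ 2 ∣ N := by
  induction d using Nat.strong_induction_on with
  | _ d ih =>
    intro N hdvd
    rcases eq_or_ne d 0 with rfl | hd0
    · have h0 : q * N ^ 2 = 0 := by
        have : (0 : ℤ) ∣ q * N ^ 2 := by simpa using hdvd
        simpa using this
      have hN : N = 0 := by
        rcases mul_eq_zero.mp h0 with h | h
        · exact absurd h hq.ne_zero
        · exact pow_eq_zero_iff (two_ne_zero) |>.mp h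
      simp [hN]
    rcases eq_or_ne d 1 with rfl | hd1
    · simpa using one_dvd N
    obtain ⟨l, hlp, d', rfl⟩ := Nat.exists_prime_and_dvd hd1
    have hlZ : Prime (l : ℤ) := Nat.prime_iff_prime_int.mp hlp
    have hd'0 : d' ≠ 0 := by rintro rfl; simp at hd0
    have hl4 : (l : ℤ) ^ 4 ∣ q * N ^ 2 := by
      refine dvd_trans ?_ hdvd
      exact ⟨(d' : ℤ) ^ 4, by push_cast; ring⟩
    have hlN : (l : ℤ) ^ 2 ∣ N := by
      by_cases hlq : (l : ℤ) ∣ q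
      · obtain ⟨u, hu⟩ := hlZ.associated_of_dvd hq hlq
        -- hu : ↑l * ↑u = q
        have h3 : (l : ℤ) ^ 3 ∣ N ^ 2 := by
          have h3' : (l : ℤ) ^ 3 ∣ (u : ℤ) * N ^ 2 := by
            have h := hl4
            rw [← hu, show ((l:ℤ) * u) * N ^ 2 = (l:ℤ) * ((u:ℤ) * N ^ 2) by ring,
              show ((l:ℤ)) ^ 4 = (l:ℤ) * (l:ℤ) ^ 3 by ring] at h
            exact (mul_dvd_mul_iff_left hlZ.ne_zero).mp h
          exact (Units.dvd_mul_left).mp h3'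
        have hlN1 : (l : ℤ) ∣ N :=
          hlZ.dvd_of_dvd_pow ((dvd_pow_self (l:ℤ) (by norm_num : (3:ℕ) ≠ 0)).trans h3)
        obtain ⟨N₂, rfl⟩ := hlN1
        have h4 : (l : ℤ) ∣ N₂ := by
          apply hlZ.dvd_of_dvd_pow (n := 2)
          have h := h3
          rw [mul_pow] at h
          obtain ⟨c, hc⟩ := h
          refine ⟨c, mul_left_cancel₀ (pow_ne_zero 2 hlZ.ne_zero) ?_⟩
          rw [hc]; ring
        obtain ⟨c, rfl⟩ := h4
        exact ⟨c, by ring⟩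
      · have h := hlZ.pow_dvd_of_dvd_mul_left 4 hlq hl4
        rw [show (4:ℕ) = 2 * 2 by norm_num, pow_mul] at h
        exact (Int.pow_dvd_pow_iff (two_ne_zero)).mp h
    obtain ⟨N₂, rfl⟩ := hlN
    have hred : (d' : ℤ) ^ 4 ∣ q * N₂ ^ 2 := by
      have h : (l:ℤ)^4 * ((d':ℤ)^4) ∣ (l:ℤ)^4 * (q * N₂^2) := by
        have := hdvd
        rw [show (((l * d' : ℕ) : ℤ)) ^ 4 = (l:ℤ)^4 * (d':ℤ)^4 by push_cast; ring,
          show q * ((l:ℤ)^2 * N₂)^2 = (l:ℤ)^4 * (q * N₂^2) by ring] at this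
        exact this
      exact (mul_dvd_mul_iff_left (pow_ne_zero _ hlZ.ne_zero)).mp h
    have hlt : d' < l * d' := by
      have := hlp.two_le
      calc d' = 1 * d' := (one_mul d').symm
      _ < l * d' := by
        exact Nat.mul_lt_mul_of_lt_of_le (by omega) (le_refl d') (by omega)
    have := ih d' hlt N₂ hred
    push_cast
    rw [show ((l:ℤ) * d')^2 = (l:ℤ)^2 * (d':ℤ)^2 by ring]
    exact mul_dvd_mul_left _ this

private lemma aux_isSquare (p : ℕ) [Fact p.Prime] :
    ∀ n : ℕ, (∀ l : ℕ, l.Prime → l ∣ n → IsSquare ((l : ZMod p))) → IsSquare ((n : ZMod p)) := by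
  intro n
  induction n using Nat.recOnMul with
  | zero => intro _; exact ⟨0, by simp⟩
  | one => intro _; simpa using isSquare_one
  | prime l hl => intro h; exact h l hl dvd_rfl
  | mul a b ha hb =>
    intro h
    rw [Nat.cast_mul]
    exact (ha fun l hl hd => h l hl (hd.mul_right b)).mul (hb fun l hl hd => h l hl (hd.mul_left a))

/-- Case `b₁ = −q` of Proposition 4: if `q·N² = 4p·e⁴ − M⁴` has a nontrivial
integral solution, then `q` is a fourth power modulo `p`. -/
theorem torsor_neg_q (p q : ℕ) (hp : p.Prime) (hq : q.Prime)
    (hp8 : p % 8 = 1) (hq4 : q % 4 = 3)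
    (hres : ∃ x : ZMod q, x ^ 2 = (p : ZMod q))
    (hsol : ∃ M N e : ℤ, (M, N, e) ≠ (0, 0, 0) ∧
      (q : ℤ) * N ^ 2 = 4 * (p : ℤ) * e ^ 4 - M ^ 4) :
    ∃ x : ZMod p, x ^ 4 = (q : ZMod p) := by
  haveI hpF : Fact p.Prime := ⟨hp⟩
  haveI hqF : Fact q.Prime := ⟨hq⟩
  have hp2le := hp.two_le
  have hp2 : p ≠ 2 := by omega
  have hp4 : p % 4 = 1 := by omega
  have hpq : p ≠ q := by omega
  have hqZ : Prime (q : ℤ) := Nat.prime_iff_prime_int.mp hq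
  have hpZ : Prime (p : ℤ) := Nat.prime_iff_prime_int.mp hp
  obtain ⟨M, N, e, hnt, heq⟩ := hsol
  have hMe : ¬ (M = 0 ∧ e = 0) := by
    rintro ⟨rfl, rfl⟩
    have h0 : (q:ℤ) * N ^ 2 = 0 := by simpa using heq
    have hN : N = 0 := by
      rcases mul_eq_zero.mp h0 with h | h
      · exact absurd h hqZ.ne_zero
      · exact pow_eq_zero_iff two_ne_zero |>.mp h
    exact hnt (by simp [hN])
  set d : ℕ := Int.gcd M e with hd
  have hd0 : d ≠ 0 := by
    rw [hd, Ne, Int.gcd_eq_zero_iff]; tauto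
  have hdZ0 : (d : ℤ) ≠ 0 := Int.natCast_ne_zero.mpr hd0
  obtain ⟨M₁, hM₁⟩ : (d:ℤ) ∣ M := Int.gcd_dvd_left M e
  obtain ⟨e₁, he₁⟩ : (d:ℤ) ∣ e := Int.gcd_dvd_right M e
  have hcop : IsCoprime M₁ e₁ := by
    rw [Int.isCoprime_iff_gcd_eq_one]
    have hds : d = d * Int.gcd M₁ e₁ := by
      conv_lhs => rw [hd, hM₁, he₁]
      rw [Int.gcd_mul_left, Int.natAbs_natCast]
    exact (Nat.mul_eq_left hd0).mp hds.symm
  have hMe₁ : ¬ (M₁ = 0 ∧ e₁ = 0) := by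
    rintro ⟨rfl, rfl⟩
    exact hMe ⟨by rw [hM₁, mul_zero], by rw [he₁, mul_zero]⟩
  have hdvd4 : (d:ℤ)^4 ∣ (q:ℤ) * N^2 := ⟨4*(p:ℤ)*e₁^4 - M₁^4, by rw [heq, hM₁, he₁]; ring⟩
  obtain ⟨N₁, hN₁⟩ := aux_sq_dvd (q:ℤ) hqZ d N hdvd4
  have heq₁ : (q:ℤ) * N₁^2 = 4*(p:ℤ)*e₁^4 - M₁^4 := by
    apply mul_left_cancel₀ (pow_ne_zero 4 hdZ0)
    rw [hM₁, he₁, hN₁] at heq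
    linear_combination heq
  -- p does not divide M₁
  have hpq' : ¬ (p:ℤ) ∣ (q:ℤ) := by
    rw [Int.natCast_dvd_natCast]
    exact fun hh => hpq ((Nat.prime_dvd_prime_iff_eq hp hq).mp hh)
  have hp4' : ¬ (p:ℤ) ∣ 4 := by
    intro h
    have : p ∣ 4 := by exact_mod_cast Int.natCast_dvd_natCast.mp (by exact_mod_cast h)
    have := Nat.le_of_dvd (by norm_num) this
    omega
  have hpM : ¬ (p:ℤ) ∣ M₁ := by
    intro h
    have h1 : (p:ℤ) ∣ (q:ℤ) * N₁^2 := by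
      rw [heq₁]
      exact dvd_sub ⟨4*e₁^4, by ring⟩ (dvd_pow h (by norm_num))
    have h2 : (p:ℤ) ∣ N₁ :=
      hpZ.dvd_of_dvd_pow ((hpZ.dvd_mul.mp h1).resolve_left hpq')
    have h3 : (p:ℤ)^2 ∣ 4*(p:ℤ)*e₁^4 := by
      rw [show (4:ℤ)*(p:ℤ)*e₁^4 = (q:ℤ)*N₁^2 + M₁^4 by linarith [heq₁]]
      exact dvd_add (Dvd.dvd.mul_left (pow_dvd_pow_of_dvd h2 2) _)
        ((pow_dvd_pow_of_dvd h 2).trans (pow_dvd_pow M₁ (by norm_num)))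
    have h5 : (p:ℤ) ∣ 4*e₁^4 := by
      obtain ⟨c, hc⟩ := h3
      refine ⟨c, mul_left_cancel₀ hpZ.ne_zero ?_⟩
      rw [show (p:ℤ) * (4*e₁^4) = 4*(p:ℤ)*e₁^4 by ring, hc]; ring
    have h6 : (p:ℤ) ∣ e₁ :=
      hpZ.dvd_of_dvd_pow ((hpZ.dvd_mul.mp h5).resolve_left hp4')
    have := hcop.isUnit_of_dvd' h h6
    rw [Int.isUnit_iff] at this
    rcases this with h' | h' <;> omega
  have hpN : ¬ (p:ℤ) ∣ N₁ := by
    intro h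
    apply hpM
    apply hpZ.dvd_of_dvd_pow (n := 4)
    rw [show M₁^4 = 4*(p:ℤ)*e₁^4 - (q:ℤ)*N₁^2 by linarith [heq₁]]
    exact dvd_sub ⟨4*e₁^4, by ring⟩ (Dvd.dvd.mul_left (dvd_pow h two_ne_zero) _)
  have h2Z : Prime (2 : ℤ) := Int.prime_two
  have hN₁0 : N₁ ≠ 0 := by
    rintro rfl
    have hM4 : M₁^4 = 4*(p:ℤ)*e₁^4 := by linarith [heq₁]
    have h2M : (2:ℤ) ∣ M₁ := by
      apply h2Z.dvd_of_dvd_pow (n := 4)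
      rw [hM4]; exact ⟨2*(p:ℤ)*e₁^4, by ring⟩
    obtain ⟨M₂, rfl⟩ := h2M
    have hpe : (p:ℤ)*e₁^4 = 4*M₂^4 := by nlinarith [hM4]
    have h2e : (2:ℤ) ∣ e₁ := by
      apply h2Z.dvd_of_dvd_pow (n := 4)
      have hdv : (2:ℤ) ∣ (p:ℤ) * e₁^4 := ⟨2*M₂^4, by linear_combination hpe⟩
      refine (h2Z.dvd_mul.mp hdv).resolve_left ?_
      rw [show ((2:ℤ)) = ((2:ℕ):ℤ) by norm_num, Int.natCast_dvd_natCast]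
      omega
    have := hcop.isUnit_of_dvd' ⟨M₂, by ring⟩ h2e
    rw [Int.isUnit_iff] at this
    omega
  -- every prime factor of N₁ is a square mod p
  have hprimes : ∀ l : ℕ, l.Prime → l ∣ N₁.natAbs → IsSquare ((l : ZMod p)) := by
    intro l hl hld
    haveI : Fact l.Prime := ⟨hl⟩
    have hlZdvd : (l:ℤ) ∣ N₁ := Int.natCast_dvd.mpr hld
    have hlZ : Prime (l : ℤ) := Nat.prime_iff_prime_int.mp hl
    by_cases hl2 : l = 2
    · subst hl2
      have : ((2:ℕ) : ZMod p) = (2 : ZMod p) := by norm_num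
      rw [this]
      exact (ZMod.exists_sq_eq_two_iff hp2).mpr (Or.inl hp8)
    · have hlne : l ≠ p := by
        rintro rfl
        exact hpN hlZdvd
      have hlM : ¬ (l:ℤ) ∣ M₁ := by
        intro hlM
        have hl4 : (l:ℤ) ∣ 4*(p:ℤ)*e₁^4 := by
          rw [show (4:ℤ)*(p:ℤ)*e₁^4 = (q:ℤ)*N₁^2 + M₁^4 by linarith [heq₁]]
          exact dvd_add (Dvd.dvd.mul_left (dvd_pow hlZdvd two_ne_zero) _)
            (dvd_pow hlM (by norm_num))
        rcases hlZ.dvd_mul.mp hl4 with h | h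
        · rcases hlZ.dvd_mul.mp h with h' | h'
          · have hl4' : l ∣ 2^2 := by
              rw [show ((4:ℤ)) = ((4:ℕ):ℤ) by norm_num, Int.natCast_dvd_natCast] at h'
              simpa using h'
            exact hl2 ((Nat.prime_dvd_prime_iff_eq hl Nat.prime_two).mp
              (hl.dvd_of_dvd_pow hl4'))
          · have : l = p := by
              rw [Int.natCast_dvd_natCast] at h'
              exact (Nat.prime_dvd_prime_iff_eq hl hp).mp h'
            exact hlne this
        · have hle : (l:ℤ) ∣ e₁ := hlZ.dvd_of_dvd_pow h
          have := hcop.isUnit_of_dvd' hlM hle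
          rw [Int.isUnit_iff] at this
          have := hl.two_le
          omega
      -- p is a square mod l
      have hM0 : ((M₁ : ℤ) : ZMod l) ≠ 0 :=
        fun h => hlM ((ZMod.intCast_zmod_eq_zero_iff_dvd _ _).mp h)
      have hN0 : ((N₁ : ℤ) : ZMod l) = 0 := (ZMod.intCast_zmod_eq_zero_iff_dvd _ _).mpr hlZdvd
      have heqL : ((M₁ : ℤ) : ZMod l)^4 = (p : ZMod l) * (2 * ((e₁:ℤ) : ZMod l)^2)^2 := by
        have hc := congrArg (Int.cast : ℤ → ZMod l) heq₁
        push_cast at hc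
        rw [hN0] at hc
        linear_combination hc
      have h2e0 : (2 * ((e₁:ℤ) : ZMod l)^2) ≠ 0 := by
        intro h
        rw [h] at heqL
        have hMz : ((M₁ : ℤ) : ZMod l) ^ 4 = 0 := by rw [heqL]; ring
        exact hM0 (pow_eq_zero_iff (by norm_num : (4:ℕ) ≠ 0) |>.mp hMz)
      have hpsq : IsSquare ((p : ℕ) : ZMod l) := by
        refine ⟨((M₁:ℤ) : ZMod l)^2 / (2 * ((e₁:ℤ) : ZMod l)^2), ?_⟩
        rw [div_mul_div_comm, eq_div_iff (mul_ne_zero h2e0 h2e0)]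
        linear_combination -heqL
      exact (ZMod.exists_sq_eq_prime_iff_of_mod_four_eq_one (p := p) (q := l) hp4 hl2).mpr hpsq
  have hsqNabs : IsSquare ((N₁.natAbs : ZMod p)) := aux_isSquare p N₁.natAbs hprimes
  have hsqN : IsSquare (((N₁ : ℤ) : ZMod p)) := by
    rcases Int.natAbs_eq N₁ with h | h
    · rw [h, Int.cast_natCast]; exact hsqNabs
    · rw [h, Int.cast_neg, Int.cast_natCast,
        show (-(N₁.natAbs : ZMod p)) = (-1) * (N₁.natAbs : ZMod p) by ring]
      exact ((ZMod.exists_sq_eq_neg_one_iff (p := p)).mpr (by omega)).mul hsqNabs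
  obtain ⟨t, ht⟩ := hsqN
  have ht0 : t ≠ 0 := by
    intro h
    apply hpN
    rw [← ZMod.intCast_zmod_eq_zero_iff_dvd, ht, h, mul_zero]
  obtain ⟨i, hi⟩ := (ZMod.exists_sq_eq_neg_one_iff (p := p)).mpr (by omega)
  have hi0 : i ≠ 0 := by
    rintro rfl
    rw [mul_zero] at hi
    exact one_ne_zero (neg_eq_zero.mp hi)
  have hi4 : i ^ 4 = 1 := by
    rw [show i^4 = (i*i)^2 by ring, ← hi]; ring
  have hisq : IsSquare i := by
    rw [ZMod.euler_criterion p hi0]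
    rw [show p / 2 = 4 * (p / 8) by omega, pow_mul, hi4, one_pow]
  obtain ⟨u, hu⟩ := hisq
  have hu4 : u ^ 4 = -1 := by
    rw [show u^4 = (u*u)^2 by ring, ← hu, sq, ← hi]
  have hKey : (q : ZMod p) * ((N₁ : ℤ) : ZMod p)^2 = -((M₁ : ℤ) : ZMod p)^4 := by
    have hc := congrArg (Int.cast : ℤ → ZMod p) heq₁
    push_cast at hc
    rw [ZMod.natCast_self] at hc
    linear_combination hc
  refine ⟨u * ((M₁ : ℤ) : ZMod p) * t⁻¹, ?_⟩
  have hfield : (u * ((M₁ : ℤ) : ZMod p) * t⁻¹)^4 = u^4 * ((M₁ : ℤ) : ZMod p)^4 * (t^4)⁻¹ := by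
    field_simp
  rw [hfield, hu4]
  rw [ht] at hKey
  have ht4 : (t:ZMod p)^4 ≠ 0 := pow_ne_zero _ ht0
  field_simp
  linear_combination -hKey
end

section
/- Let p and q be primes with p ≡ 1 (mod 8), q ≡ 3 (mod 4), and p a quadratic residue modulo q. If there exist integers M, N, e, not all zero, with 2q·N² = p·M⁴ − e⁴, then 2q is a fourth power modulo p. -/
/-- `-1` is a fourth power modulo `p` when `p % 8 = 1`. -/
lemma neg_one_fourth_power (p : ℕ) [Fact p.Prime] (hp8 : p % 8 = 1) :
    ∃ t : ZMod p, t ^ 4 = -1 := by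
  have hp2 : p ≠ 2 := by omega
  obtain ⟨i, hi⟩ : IsSquare (-1 : ZMod p) :=
    ZMod.exists_sq_eq_neg_one_iff.mpr (by omega)
  obtain ⟨c, hc⟩ : IsSquare (2 : ZMod p) :=
    (ZMod.exists_sq_eq_two_iff hp2).mpr (Or.inl hp8)
  have h2 : (2 : ZMod p) ≠ 0 := by
    have : ((2 : ℕ) : ZMod p) ≠ 0 := by
      rw [Ne, ZMod.natCast_eq_zero_iff]
      intro h
      have := (Nat.prime_dvd_prime_iff_eq (Fact.out) Nat.prime_two).mp h
      exact hp2 this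
    simpa using this
  have hc0 : c ≠ 0 := by
    rintro rfl
    simp at hc
    exact h2 hc
  refine ⟨(1 + i) / c, ?_⟩
  have hi' : i ^ 2 = -1 := by rw [sq]; exact hi.symm
  have hc' : c ^ 2 = 2 := by rw [sq]; exact hc.symm
  rw [div_pow]
  rw [div_eq_iff (pow_ne_zero 4 hc0)]
  have : c ^ 4 = 4 := by
    have : c ^ 4 = (c ^ 2) ^ 2 := by ring
    rw [this, hc']; norm_num
  rw [this]
  linear_combination (i ^ 2 + 4 * i + 5) * hi'

/-- If each prime factor of `n` is a square in `ZMod p`, then so is `n`. -/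
lemma isSquare_natCast_of_prime_factors (p : ℕ) :
    ∀ n : ℕ, (∀ ℓ : ℕ, ℓ.Prime → ℓ ∣ n → IsSquare ((ℓ : ZMod p))) →
      IsSquare ((n : ZMod p)) := by
  intro n
  induction n using Nat.strong_induction_on with
  | _ n ih =>
    intro h
    rcases eq_or_ne n 0 with rfl | h0
    · exact ⟨0, by simp⟩
    rcases eq_or_ne n 1 with rfl | h1
    · exact ⟨1, by simp⟩
    have hf : n.minFac.Prime := Nat.minFac_prime h1
    obtain ⟨m, hm⟩ := Nat.minFac_dvd n
    have hm0 : m ≠ 0 := by rintro rfl; simp at hm; exact h0 hm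
    have hmlt : m < n := by
      have h2 : 2 ≤ n.minFac := hf.two_le
      have : 1 * m < n.minFac * m :=
        Nat.mul_lt_mul_of_lt_of_le (by omega) le_rfl (by omega)
      omega
    have h1' : IsSquare ((n.minFac : ZMod p)) := h _ hf (Nat.minFac_dvd n)
    have h2' : IsSquare ((m : ZMod p)) :=
      ih m hmlt (fun ℓ hℓ hdvd => h ℓ hℓ (by rw [hm]; exact hdvd.mul_left _))
    rw [hm]
    push_cast
    exact h1'.mul h2'

/-- The descent-based core: any solution with `M ≠ 0` forces `2q` to be a
fourth power mod `p`. Induction on `|M|`. -/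
lemma torsor_two_q_aux (p q : ℕ) (hp : p.Prime) (hq : q.Prime)
    (hp8 : p % 8 = 1) (hq4 : q % 4 = 3) :
    ∀ m : ℕ, ∀ M N e : ℤ, M.natAbs = m → M ≠ 0 →
      2 * (q : ℤ) * N ^ 2 = (p : ℤ) * M ^ 4 - e ^ 4 →
      ∃ x : ZMod p, x ^ 4 = (2 * q : ZMod p) := by
  haveI : Fact p.Prime := ⟨hp⟩
  haveI : Fact q.Prime := ⟨hq⟩
  have hq2 : q ≠ 2 := by omega
  have hp2 : p ≠ 2 := by omega
  have hpq : p ≠ q := by intro h; omega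
  have hpZ : Prime ((p : ℤ)) := Nat.prime_iff_prime_int.mp hp
  intro m
  induction m using Nat.strong_induction_on with
  | _ m ih =>
    intro M N e hm hM0 heq
    by_cases hg : 1 < Int.gcd M e
    · -- descent step: a common prime factor `r` of `M` and `e`
      set r := (Int.gcd M e).minFac with hr_def
      have hr : r.Prime := Nat.minFac_prime (by omega)
      have hrg : (r : ℤ) ∣ (Int.gcd M e : ℤ) :=
        Int.natCast_dvd_natCast.mpr (Nat.minFac_dvd _)
      have hrM : (r : ℤ) ∣ M := hrg.trans (Int.gcd_dvd_left M e)
      have hre : (r : ℤ) ∣ e := hrg.trans (Int.gcd_dvd_right M e)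
      have hr0 : (r : ℤ) ≠ 0 := by
        exact_mod_cast hr.pos.ne'
      -- r^2 divides N
      have hrN : (r : ℤ) ^ 2 ∣ N := by
        rcases eq_or_ne N 0 with rfl | hN0
        · exact dvd_zero _
        have h4 : (r : ℤ) ^ 4 ∣ 2 * (q : ℤ) * N ^ 2 := by
          rw [heq]
          exact dvd_sub ((pow_dvd_pow_of_dvd hrM 4).mul_left _)
            (pow_dvd_pow_of_dvd hre 4)
        have h4n : r ^ 4 ∣ 2 * q * N.natAbs ^ 2 := by
          have := Int.natAbs_dvd_natAbs.mpr h4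
          simpa [Int.natAbs_mul, Int.natAbs_pow] using this
        have hNa0 : N.natAbs ≠ 0 := Int.natAbs_ne_zero.mpr hN0
        have hn0 : 2 * q * N.natAbs ^ 2 ≠ 0 :=
          Nat.mul_ne_zero (Nat.mul_ne_zero two_ne_zero hq.ne_zero) (pow_ne_zero 2 hNa0)
        have hfle : 4 ≤ (2 * q * N.natAbs ^ 2).factorization r :=
          (hr.pow_dvd_iff_le_factorization hn0).mp h4n
        rw [Nat.factorization_mul (Nat.mul_ne_zero two_ne_zero hq.ne_zero) (pow_ne_zero 2 hNa0),
          Nat.factorization_mul (by norm_num) hq.ne_zero,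
          Nat.factorization_pow] at hfle
        simp only [Finsupp.add_apply, Finsupp.smul_apply, smul_eq_mul] at hfle
        have h2f : (Nat.factorization 2) r + (Nat.factorization q) r ≤ 1 := by
          rw [Nat.Prime.factorization Nat.prime_two, Nat.Prime.factorization hq]
          rw [Finsupp.single_apply, Finsupp.single_apply]
          by_cases h2r : 2 = r <;> by_cases hqr : q = r <;> simp [h2r, hqr] <;> omega
        have : 2 ≤ (Nat.factorization N.natAbs) r := by omega
        have hdvd2 : r ^ 2 ∣ N.natAbs := (hr.pow_dvd_iff_le_factorization hNa0).mpr this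
        have hfin : ((r ^ 2 : ℕ) : ℤ) ∣ N := Int.dvd_natAbs.mp (Int.natCast_dvd_natCast.mpr hdvd2)
        exact_mod_cast hfin
      obtain ⟨M', hM'⟩ := hrM
      obtain ⟨e', he'⟩ := hre
      obtain ⟨N', hN'⟩ := hrN
      have heq' : 2 * (q : ℤ) * N' ^ 2 = (p : ℤ) * M' ^ 4 - e' ^ 4 := by
        have h4 : ((r : ℤ) ^ 4) ≠ 0 := pow_ne_zero _ hr0
        apply mul_left_cancel₀ h4
        rw [hM', he', hN'] at heq
        linear_combination heq
      have hM'0 : M' ≠ 0 := by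
        rintro rfl
        rw [mul_zero] at hM'
        exact hM0 hM'
      have hlt : M'.natAbs < m := by
        have : M.natAbs = r * M'.natAbs := by rw [hM', Int.natAbs_mul, Int.natAbs_natCast]
        have h2 : 2 ≤ r := hr.two_le
        have hM'a : M'.natAbs ≠ 0 := Int.natAbs_ne_zero.mpr hM'0
        rw [hm] at this
        nlinarith [this, h2, Nat.pos_of_ne_zero hM'a]
      exact ih _ hlt M' N' e' rfl hM'0 heq'
    · -- gcd(M, e) = 1 case
      have hg1 : Int.gcd M e = 1 := by
        have : Int.gcd M e ≠ 0 := fun h => hM0 (Int.gcd_eq_zero_iff.mp h).1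
        omega
      have hp0 : (p : ℤ) ≠ 0 := by exact_mod_cast hp.pos.ne'
      -- p does not divide e
      have hpe : ¬ (p : ℤ) ∣ e := by
        intro hdvd
        have h1 : (p : ℤ) ∣ 2 * (q : ℤ) * N ^ 2 := by
          rw [heq]
          exact dvd_sub (dvd_mul_right _ _) (dvd_pow hdvd (by norm_num))
        have hpN : (p : ℤ) ∣ N := by
          rcases hpZ.dvd_mul.mp h1 with h2q | hN2
          · exfalso
            have : (p : ℤ) ∣ ((2 * q : ℕ) : ℤ) := by push_cast; exact h2q
            have hnat : p ∣ 2 * q := Int.natCast_dvd_natCast.mp this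
            rcases (Nat.Prime.dvd_mul hp).mp hnat with h | h
            · exact hp2 ((Nat.prime_dvd_prime_iff_eq hp Nat.prime_two).mp h)
            · exact hpq ((Nat.prime_dvd_prime_iff_eq hp hq).mp h)
          · exact hpZ.dvd_of_dvd_pow hN2
        have h2 : (p : ℤ) ^ 2 ∣ (p : ℤ) * M ^ 4 := by
          have he4 : (p : ℤ) ^ 2 ∣ e ^ 4 :=
            (pow_dvd_pow_of_dvd hdvd 2).trans (pow_dvd_pow e (by norm_num))
          have hN2 : (p : ℤ) ^ 2 ∣ 2 * (q : ℤ) * N ^ 2 :=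
            ((pow_dvd_pow_of_dvd hpN 2).mul_left _)
          have hrew : (p : ℤ) * M ^ 4 = 2 * (q : ℤ) * N ^ 2 + e ^ 4 := by linarith
          rw [hrew]
          exact dvd_add hN2 he4
        have hpM : (p : ℤ) ∣ M := by
          obtain ⟨k, hk⟩ := h2
          have hM4 : M ^ 4 = (p : ℤ) * k := by
            apply mul_left_cancel₀ hp0
            linear_combination hk
          exact hpZ.dvd_of_dvd_pow (hM4 ▸ Dvd.intro k rfl)
        have hd1 : (p : ℤ) ∣ ((Int.gcd M e : ℕ) : ℤ) := Int.dvd_coe_gcd hpM hdvd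
        rw [hg1] at hd1
        have h1' : p ∣ 1 := by exact_mod_cast hd1
        have := Nat.dvd_one.mp h1'
        have := hp.two_le
        omega
      -- p does not divide N
      have hpN : ¬ (p : ℤ) ∣ N := by
        intro hdvd
        apply hpe
        apply hpZ.dvd_of_dvd_pow (n := 4)
        have hrew : e ^ 4 = (p : ℤ) * M ^ 4 - 2 * (q : ℤ) * N ^ 2 := by linarith
        rw [hrew]
        exact dvd_sub (dvd_mul_right _ _) ((dvd_pow hdvd two_ne_zero).mul_left _)
      -- every prime factor of N is a square mod p
      have hfac : ∀ ℓ : ℕ, ℓ.Prime → ℓ ∣ N.natAbs → IsSquare ((ℓ : ZMod p)) := by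
        intro ℓ hℓ hdvd
        haveI : Fact ℓ.Prime := ⟨hℓ⟩
        rcases eq_or_ne ℓ 2 with rfl | hℓ2
        · have := (ZMod.exists_sq_eq_two_iff hp2).mpr (Or.inl hp8)
          simpa using this
        rcases eq_or_ne ℓ p with rfl | hℓp
        · exact ⟨0, by simp [ZMod.natCast_self]⟩
        have hp41 : p % 4 = 1 := by omega
        rw [ZMod.exists_sq_eq_prime_iff_of_mod_four_eq_one hp41 hℓ2]
        -- show p is a square mod ℓ
        have hdvdZ : (ℓ : ℤ) ∣ N := Int.dvd_natAbs.mp (Int.natCast_dvd_natCast.mpr hdvd)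
        have hℓZ : Prime ((ℓ : ℤ)) := Nat.prime_iff_prime_int.mp hℓ
        have hNl : ((N : ℤ) : ZMod ℓ) = 0 := (ZMod.intCast_zmod_eq_zero_iff_dvd _ _).mpr hdvdZ
        have hMl : ((M : ℤ) : ZMod ℓ) ≠ 0 := by
          rw [Ne, ZMod.intCast_zmod_eq_zero_iff_dvd]
          intro hlM
          have hle4 : (ℓ : ℤ) ∣ e ^ 4 := by
            have hrew : e ^ 4 = (p : ℤ) * M ^ 4 - 2 * (q : ℤ) * N ^ 2 := by linarith
            rw [hrew]
            exact dvd_sub ((dvd_pow hlM (by norm_num)).mul_left _)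
              ((dvd_pow hdvdZ two_ne_zero).mul_left _)
          have hle : (ℓ : ℤ) ∣ e := hℓZ.dvd_of_dvd_pow hle4
          have hd1 : (ℓ : ℤ) ∣ ((Int.gcd M e : ℕ) : ℤ) := Int.dvd_coe_gcd hlM hle
          rw [hg1] at hd1
          have h1' : ℓ ∣ 1 := by exact_mod_cast hd1
          have := Nat.dvd_one.mp h1'
          have := hℓ.two_le
          omega
        have hcast : ((p : ℕ) : ZMod ℓ) * ((M : ℤ) : ZMod ℓ) ^ 4 = ((e : ℤ) : ZMod ℓ) ^ 4 := by
          have hc := congrArg (fun z : ℤ => (z : ZMod ℓ)) heq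
          push_cast at hc
          rw [hNl] at hc
          linear_combination -hc
        refine ⟨((e : ℤ) : ZMod ℓ) ^ 2 / ((M : ℤ) : ZMod ℓ) ^ 2, ?_⟩
        rw [div_mul_div_comm, eq_div_iff (mul_ne_zero (pow_ne_zero 2 hMl) (pow_ne_zero 2 hMl))]
        linear_combination hcast
      -- hence N is a square mod p
      have hNsq : IsSquare (((N : ℤ) : ZMod p)) := by
        have habs := isSquare_natCast_of_prime_factors p N.natAbs hfac
        rcases Int.natAbs_eq N with h | h
        · rw [h, Int.cast_natCast]; exact habs
        · rw [h, Int.cast_neg, Int.cast_natCast]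
          obtain ⟨i, hi⟩ := ZMod.exists_sq_eq_neg_one_iff.mpr
            (show p % 4 ≠ 3 by omega)
          obtain ⟨s, hs⟩ := habs
          exact ⟨i * s, by rw [show i * s * (i * s) = i * i * (s * s) by ring, ← hi, ← hs]; ring⟩
      -- conclude
      obtain ⟨s, hs⟩ := hNsq
      obtain ⟨t, ht⟩ := neg_one_fourth_power p hp8
      have hs0 : s ≠ 0 := by
        intro h
        apply hpN
        rw [← ZMod.intCast_zmod_eq_zero_iff_dvd]
        rw [hs, h, mul_zero]
      have hcast : 2 * (q : ZMod p) * ((N : ℤ) : ZMod p) ^ 2 = -((e : ℤ) : ZMod p) ^ 4 := by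
        have hc := congrArg (fun z : ℤ => (z : ZMod p)) heq
        push_cast at hc
        rw [ZMod.natCast_self] at hc
        linear_combination hc
      refine ⟨t * ((e : ℤ) : ZMod p) / s, ?_⟩
      rw [div_pow, div_eq_iff (pow_ne_zero 4 hs0)]
      rw [hs] at hcast
      linear_combination ((e : ℤ) : ZMod p) ^ 4 * ht - hcast

/-- Case `b₁ = 2q` of Proposition 4: if `2q·N² = p·M⁴ − e⁴` has a nontrivial
integral solution, then `2q` is a fourth power modulo `p`. -/
theorem torsor_two_q (p q : ℕ) (hp : p.Prime) (hq : q.Prime)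
    (hp8 : p % 8 = 1) (hq4 : q % 4 = 3)
    (hres : ∃ x : ZMod q, x ^ 2 = (p : ZMod q))
    (hsol : ∃ M N e : ℤ, (M, N, e) ≠ (0, 0, 0) ∧
      2 * (q : ℤ) * N ^ 2 = (p : ℤ) * M ^ 4 - e ^ 4) :
    ∃ x : ZMod p, x ^ 4 = (2 * q : ZMod p) := by
  obtain ⟨M, N, e, hnt, heq⟩ := hsol
  have hM0 : M ≠ 0 := by
    rintro rfl
    have hqpos : (0 : ℤ) < q := by exact_mod_cast hq.pos
    norm_num at heq
    have hN2 : N ^ 2 = 0 := by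
      nlinarith [sq_nonneg (e ^ 2), sq_nonneg N,
        mul_nonneg (by linarith : (0 : ℤ) ≤ (q : ℤ) - 1) (sq_nonneg N)]
    have hN : N = 0 := by simpa using sq_eq_zero_iff.mp hN2
    rw [hN2] at heq
    have he4 : e ^ 4 = 0 := by linarith
    have he2 : e ^ 2 = 0 := sq_eq_zero_iff.mp (by linear_combination he4)
    have he : e = 0 := by simpa using sq_eq_zero_iff.mp he2
    exact hnt (by simp [hN, he])
  exact torsor_two_q_aux p q hp hq hp8 hq4 M.natAbs M N e rfl hM0 heq
end

section
/- Let p and q be primes with p ≡ 1 (mod 8), q ≡ 3 (mod 4), and p a quadratic residue modulo q. If there exist integers M, N, e, not all zero, with 2q·N² = e⁴ − p·M⁴, then 2q is a fourth power modulo p. -/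
private lemma cube_dvd_sq_imp (r n : ℕ) (hr : r.Prime) (hd : r ^ 3 ∣ n ^ 2) : r ^ 2 ∣ n := by
  rcases Nat.eq_zero_or_pos n with h | h
  · simp [h]
  have hn2 : n ^ 2 ≠ 0 := pow_ne_zero 2 h.ne'
  have h3 : 3 ≤ (n ^ 2).factorization r :=
    (Nat.Prime.pow_dvd_iff_le_factorization hr hn2).mp hd
  rw [Nat.factorization_pow] at h3
  simp only [Finsupp.smul_apply, smul_eq_mul] at h3
  exact (Nat.Prime.pow_dvd_iff_le_factorization hr h.ne').mpr (by omega)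

private lemma isSquare_of_prime_factors (p : ℕ) [Fact p.Prime] :
    ∀ n : ℕ, (∀ r : ℕ, r.Prime → r ∣ n → IsSquare ((r : ZMod p))) → IsSquare ((n : ZMod p)) := by
  intro n
  induction n using Nat.strong_induction_on with
  | _ n ih =>
    intro h
    rcases Nat.eq_zero_or_pos n with h0 | h0
    · exact ⟨0, by simp [h0]⟩
    rcases eq_or_ne n 1 with h1 | h1
    · exact ⟨1, by simp [h1]⟩
    have hr : n.minFac.Prime := Nat.minFac_prime h1
    have hdvd : n.minFac ∣ n := Nat.minFac_dvd n
    obtain ⟨m, hm⟩ := hdvd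
    have hmlt : m < n := by
      have h2 : 2 ≤ n.minFac := hr.two_le
      have hm0 : 0 < m := by
        rcases Nat.eq_zero_or_pos m with h' | h'
        · subst h'; omega
        · exact h'
      nlinarith [hm]
    have hs1 : IsSquare ((n.minFac : ZMod p)) := h n.minFac hr (Nat.minFac_dvd n)
    have hs2 : IsSquare ((m : ZMod p)) := ih m hmlt (fun r hrp hrd => h r hrp (hm ▸ hrd.mul_left _))
    have : (n : ZMod p) = (n.minFac : ZMod p) * (m : ZMod p) := by
      conv_lhs => rw [hm]
      push_cast
      ring
    rw [this]
    exact hs1.mul hs2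

private lemma gcd_one_not_both {M e : ℤ} (g1 : Int.gcd M e = 1) {r : ℤ} (hr : Prime r)
    (h1 : r ∣ M) (h2 : r ∣ e) : False := by
  have h := Int.dvd_coe_gcd h1 h2
  rw [g1] at h
  exact hr.not_isUnit (isUnit_of_dvd_one (by exact_mod_cast h))

private lemma div_N (q : ℕ) (hq : q.Prime) (hqodd : q % 2 = 1) {r : ℕ} (hr : r.Prime)
    {N : ℤ} (h4 : (r : ℤ) ^ 4 ∣ 2 * q * N ^ 2) : (r : ℤ) ^ 2 ∣ N := by
  set n := N.natAbs with hn_def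
  have hn : r ^ 4 ∣ 2 * q * n ^ 2 := by
    have h := Int.natAbs_dvd_natAbs.mpr h4
    simpa [Int.natAbs_mul, Int.natAbs_pow] using h
  have h3 : r ^ 3 ∣ n ^ 2 := by
    by_cases hdvd : r ∣ 2 * q
    · have hq2 : q ≠ 2 := by omega
      obtain ⟨s, hco, h2q⟩ : ∃ s, Nat.Coprime r s ∧ 2 * q = r * s := by
        rcases (Nat.Prime.dvd_mul hr).mp hdvd with h | h
        · have : r = 2 := (Nat.prime_dvd_prime_iff_eq hr Nat.prime_two).mp h
          subst this
          exact ⟨q, (Nat.coprime_primes Nat.prime_two hq).mpr (Ne.symm hq2), rfl⟩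
        · have : r = q := (Nat.prime_dvd_prime_iff_eq hr hq).mp h
          subst this
          exact ⟨2, (Nat.coprime_primes hr Nat.prime_two).mpr hq2, by ring⟩
      rw [h2q, show r * s * n ^ 2 = r * (s * n ^ 2) by ring,
        show r ^ 4 = r * r ^ 3 by ring] at hn
      have h' : r ^ 3 ∣ s * n ^ 2 := (mul_dvd_mul_iff_left hr.pos.ne').mp hn
      exact (Nat.Coprime.pow_left 3 hco).dvd_of_dvd_mul_left h'
    · have hco : Nat.Coprime r (2 * q) := (Nat.Prime.coprime_iff_not_dvd hr).mpr hdvd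
      have h' : r ^ 4 ∣ n ^ 2 := (Nat.Coprime.pow_left 4 hco).dvd_of_dvd_mul_left hn
      exact dvd_trans (pow_dvd_pow r (by norm_num)) h'
  have h2 := cube_dvd_sq_imp r n hr h3
  exact Int.dvd_natAbs.mp (by exact_mod_cast h2)

private lemma torsor_core (p q : ℕ) (hp : p.Prime) (hq : q.Prime)
    (hp8 : p % 8 = 1) (hq4 : q % 4 = 3)
    (M N e : ℤ) (hg : Int.gcd M e = 1) (he : e ≠ 0)
    (heq : 2 * (q : ℤ) * N ^ 2 = e ^ 4 - (p : ℤ) * M ^ 4) :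
    ∃ x : ZMod p, x ^ 4 = (2 * q : ZMod p) := by
  haveI : Fact p.Prime := ⟨hp⟩
  have hpInt : Prime (p : ℤ) := Nat.prime_iff_prime_int.mp hp
  have hp2 : p ≠ 2 := by omega
  have hp4 : p % 4 = 1 := by
    have := Nat.mod_mod_of_dvd p (by norm_num : 4 ∣ 8)
    omega
  have hqodd : q % 2 = 1 := by omega
  -- p does not divide N
  have hpN : ¬ (p : ℤ) ∣ N := by
    intro hdvd
    have hpe4 : (p : ℤ) ∣ e ^ 4 := by
      have h1 : (p : ℤ) ∣ 2 * q * N ^ 2 := Dvd.dvd.mul_left (hdvd.pow (by norm_num)) _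
      have h2 : (p : ℤ) ∣ (p : ℤ) * M ^ 4 := Dvd.dvd.mul_right dvd_rfl _
      have : e ^ 4 = 2 * q * N ^ 2 + p * M ^ 4 := by linarith
      rw [this]; exact dvd_add h1 h2
    have hpe : (p : ℤ) ∣ e := hpInt.dvd_of_dvd_pow hpe4
    have hp2dvd : (p : ℤ) ^ 2 ∣ (p : ℤ) * M ^ 4 := by
      have h1 : (p : ℤ) ^ 2 ∣ e ^ 4 := dvd_trans (pow_dvd_pow _ (by norm_num)) (pow_dvd_pow_of_dvd hpe 4)
      have h2 : (p : ℤ) ^ 2 ∣ 2 * q * N ^ 2 := Dvd.dvd.mul_left (by simpa [sq] using mul_dvd_mul hdvd hdvd) _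
      have : (p : ℤ) * M ^ 4 = e ^ 4 - 2 * q * N ^ 2 := by linarith
      rw [this]; exact dvd_sub h1 h2
    have hpM4 : (p : ℤ) ∣ M ^ 4 := by
      rw [sq] at hp2dvd
      exact (mul_dvd_mul_iff_left (by exact_mod_cast hp.pos.ne' : (p : ℤ) ≠ 0)).mp hp2dvd
    exact gcd_one_not_both hg hpInt (hpInt.dvd_of_dvd_pow hpM4) hpe
  -- N ≠ 0
  have hN0 : N ≠ 0 := by
    intro h
    subst h
    have he4 : e ^ 4 = (p : ℤ) * M ^ 4 := by linarith
    have hpe : (p : ℤ) ∣ e := hpInt.dvd_of_dvd_pow ⟨M ^ 4, he4⟩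
    obtain ⟨t, ht⟩ := hpe
    have hM4 : M ^ 4 = (p : ℤ) ^ 3 * t ^ 4 := by
      have hp0 : (p : ℤ) ≠ 0 := by exact_mod_cast hp.pos.ne'
      apply mul_left_cancel₀ hp0
      calc (p : ℤ) * M ^ 4 = e ^ 4 := he4.symm
        _ = (p : ℤ) * ((p : ℤ) ^ 3 * t ^ 4) := by rw [ht]; ring
    have hpM : (p : ℤ) ∣ M := by
      apply hpInt.dvd_of_dvd_pow (n := 4)
      exact ⟨(p : ℤ) ^ 2 * t ^ 4, by rw [hM4]; ring⟩
    exact gcd_one_not_both hg hpInt hpM ⟨t, ht⟩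
  -- every prime factor of N is a square mod p
  have key : ∀ r : ℕ, r.Prime → (r : ℤ) ∣ N → IsSquare ((r : ZMod p)) := by
    intro r hr hrN
    by_cases hr2 : r = 2
    · subst hr2
      have := (ZMod.exists_sq_eq_two_iff (p := p) hp2).mpr (Or.inl hp8)
      simpa using this
    haveI : Fact r.Prime := ⟨hr⟩
    have hrInt : Prime (r : ℤ) := Nat.prime_iff_prime_int.mp hr
    have hrp : r ≠ p := by
      intro h; subst h; exact hpN hrN
    have hrM : ¬ (r : ℤ) ∣ M := by
      intro hdvd
      have hre4 : (r : ℤ) ∣ e ^ 4 := by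
        have h1 : (r : ℤ) ∣ 2 * q * N ^ 2 := Dvd.dvd.mul_left (hrN.pow (by norm_num)) _
        have h2 : (r : ℤ) ∣ (p : ℤ) * M ^ 4 := Dvd.dvd.mul_left (hdvd.pow (by norm_num)) _
        have : e ^ 4 = 2 * q * N ^ 2 + p * M ^ 4 := by linarith
        rw [this]; exact dvd_add h1 h2
      exact gcd_one_not_both hg hrInt hdvd (hrInt.dvd_of_dvd_pow hre4)
    -- p is a square mod r
    have hsq : IsSquare ((p : ZMod r)) := by
      have hc := congrArg (fun z : ℤ => (z : ZMod r)) heq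
      push_cast at hc
      have hNr : ((N : ℤ) : ZMod r) = 0 := (ZMod.intCast_zmod_eq_zero_iff_dvd N r).mpr hrN
      rw [hNr] at hc
      have hMr : ((M : ℤ) : ZMod r) ≠ 0 := fun h =>
        hrM ((ZMod.intCast_zmod_eq_zero_iff_dvd M r).mp h)
      have hpm : (p : ZMod r) * ((M : ℤ) : ZMod r) ^ 4 = ((e : ℤ) : ZMod r) ^ 4 := by
        linear_combination hc
      refine ⟨(((e : ℤ) : ZMod r) * ((M : ℤ) : ZMod r)⁻¹) ^ 2, ?_⟩
      field_simp
      linear_combination hpm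
    exact (ZMod.exists_sq_eq_prime_iff_of_mod_four_eq_one (p := p) (q := r) hp4 hr2).mpr hsq
  -- N is a square mod p
  have hNsq : IsSquare ((N : ZMod p)) := by
    have h1 : IsSquare ((N.natAbs : ZMod p)) := by
      refine isSquare_of_prime_factors p N.natAbs (fun r hr hdvd => key r hr ?_)
      exact Int.dvd_natAbs.mp (Int.natCast_dvd_natCast.mpr hdvd)
    rcases Int.natAbs_eq N with h | h
    · rw [h, Int.cast_natCast]; exact h1
    · rw [h, Int.cast_neg, Int.cast_natCast, neg_eq_neg_one_mul]
      have hm1 : IsSquare (-1 : ZMod p) := ZMod.exists_sq_eq_neg_one_iff.mpr (by omega)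
      exact hm1.mul h1
  -- finish
  obtain ⟨s, hs⟩ := hNsq
  have hNp : ((N : ℤ) : ZMod p) ≠ 0 := fun h => hpN ((ZMod.intCast_zmod_eq_zero_iff_dvd N p).mp h)
  have hs0 : s ≠ 0 := by
    intro h; apply hNp; rw [hs, h, mul_zero]
  have hc := congrArg (fun z : ℤ => (z : ZMod p)) heq
  push_cast at hc
  rw [ZMod.natCast_self] at hc
  have he4 : ((e : ℤ) : ZMod p) ^ 4 = 2 * q * s ^ 4 := by
    have : ((N : ℤ) : ZMod p) = s ^ 2 := by rw [hs]; ring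
    rw [this] at hc
    linear_combination -hc
  refine ⟨((e : ℤ) : ZMod p) * s⁻¹, ?_⟩
  field_simp
  linear_combination he4

private lemma torsor_descent (p q : ℕ) (hp : p.Prime) (hq : q.Prime)
    (hp8 : p % 8 = 1) (hq4 : q % 4 = 3) :
    ∀ k : ℕ, ∀ M N e : ℤ, e.natAbs = k → e ≠ 0 →
      2 * (q : ℤ) * N ^ 2 = e ^ 4 - (p : ℤ) * M ^ 4 →
      ∃ x : ZMod p, x ^ 4 = (2 * q : ZMod p) := by
  intro k
  induction k using Nat.strong_induction_on with
  | _ k ih =>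
    intro M N e hk he heq
    by_cases hg : Int.gcd M e = 1
    · exact torsor_core p q hp hq hp8 hq4 M N e hg he heq
    · set g := Int.gcd M e with hgdef
      have hg0 : g ≠ 0 := fun h => he (Int.gcd_eq_zero_iff.mp h).2
      set r := g.minFac with hrdef
      have hr : r.Prime := Nat.minFac_prime hg
      have hrg : (r : ℤ) ∣ (g : ℤ) := Int.natCast_dvd_natCast.mpr (Nat.minFac_dvd g)
      have hrM : (r : ℤ) ∣ M := dvd_trans hrg (Int.gcd_dvd_left M e)
      have hrE : (r : ℤ) ∣ e := dvd_trans hrg (Int.gcd_dvd_right M e)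
      have hr0 : (r : ℤ) ≠ 0 := by exact_mod_cast hr.pos.ne'
      have h4 : (r : ℤ) ^ 4 ∣ 2 * q * N ^ 2 := by
        rw [heq]
        exact dvd_sub (pow_dvd_pow_of_dvd hrE 4)
          (Dvd.dvd.mul_left (pow_dvd_pow_of_dvd hrM 4) _)
      have hqodd : q % 2 = 1 := by omega
      have hrN : (r : ℤ) ^ 2 ∣ N := div_N q hq hqodd hr h4
      obtain ⟨a, ha⟩ := hrM
      obtain ⟨b, hb⟩ := hrE
      obtain ⟨c, hc⟩ := hrN
      have heq' : 2 * (q : ℤ) * c ^ 2 = b ^ 4 - (p : ℤ) * a ^ 4 := by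
        have h4' : (r : ℤ) ^ 4 ≠ 0 := pow_ne_zero _ hr0
        apply mul_left_cancel₀ h4'
        calc (r : ℤ) ^ 4 * (2 * q * c ^ 2) = 2 * q * ((r : ℤ) ^ 2 * c) ^ 2 := by ring
          _ = 2 * q * N ^ 2 := by rw [← hc]
          _ = e ^ 4 - p * M ^ 4 := heq
          _ = (r : ℤ) ^ 4 * (b ^ 4 - p * a ^ 4) := by rw [ha, hb]; ring
      have hb0 : b ≠ 0 := by
        intro h; apply he; rw [hb, h, mul_zero]
      have hblt : b.natAbs < k := by
        have h1 : e.natAbs = r * b.natAbs := by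
          rw [hb, Int.natAbs_mul, Int.natAbs_natCast]
        have h2 : 2 ≤ r := hr.two_le
        have h3 : 1 ≤ b.natAbs := Int.natAbs_pos.mpr hb0
        calc b.natAbs < 2 * b.natAbs := by omega
          _ ≤ r * b.natAbs := Nat.mul_le_mul_right _ h2
          _ = k := by rw [← h1, hk]
      exact ih b.natAbs hblt a c b rfl hb0 heq'

/-- Case `b₁ = −2q` of Proposition 4: if `2q·N² = e⁴ − p·M⁴` has a nontrivial
integral solution, then `2q` is a fourth power modulo `p`. -/
theorem torsor_neg_two_q (p q : ℕ) (hp : p.Prime) (hq : q.Prime)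
    (hp8 : p % 8 = 1) (hq4 : q % 4 = 3)
    (hres : ∃ x : ZMod q, x ^ 2 = (p : ZMod q))
    (hsol : ∃ M N e : ℤ, (M, N, e) ≠ (0, 0, 0) ∧
      2 * (q : ℤ) * N ^ 2 = e ^ 4 - (p : ℤ) * M ^ 4) :
    ∃ x : ZMod p, x ^ 4 = (2 * q : ZMod p) := by
  obtain ⟨M, N, e, hne, heq⟩ := hsol
  have he : e ≠ 0 := by
    intro h
    subst h
    have hq0 : (0 : ℤ) < q := by exact_mod_cast hq.pos
    have hp0 : (0 : ℤ) < p := by exact_mod_cast hp.pos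
    have h14 : (0 : ℤ) ≤ M ^ 4 := by positivity
    have h2 : (0 : ℤ) ≤ N ^ 2 := sq_nonneg N
    have hN2 : N ^ 2 = 0 := by nlinarith
    have hM4 : M ^ 4 = 0 := by nlinarith
    have hN : N = 0 := pow_eq_zero_iff (by norm_num) |>.mp hN2
    have hM : M = 0 := pow_eq_zero_iff (by norm_num) |>.mp hM4
    exact hne (by simp [hN, hM])
  exact torsor_descent p q hp hq hp8 hq4 e.natAbs M N e rfl he heq
end

section
/- Let p and q be odd primes and h ≥ 1 an odd integer. Let r and s be rational numbers such that 2r and 2s are integers not divisible by q, and r² − p·s² = q^h. Let S be any rational number satisfying (r + s·√p)^h − (r − s·√p)^h = 2·S·√p (an identity of real numbers, √p denoting the positive real square root). Then S·s is a nonzero square in the field ℚ_q of q-adic numbers; equivalently, the Legendre symbols of S and s modulo q agree: (S/q) = (s/q). -/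
open Finset

/-- The rational number `A` with `(r+s·t)^h - (r-s·t)^h = 2·A·t` whenever `t² = p`. -/
private def auxA (r s : ℚ) (p h : ℕ) : ℚ :=
  ∑ k ∈ Finset.range (h + 1),
    if Odd k then (h.choose k : ℚ) * r ^ (h - k) * s ^ k * (p : ℚ) ^ ((k - 1) / 2) else 0

private lemma expand {K : Type*} [Field K] [CharZero K] (r s : ℚ) (p h : ℕ) (t : K)
    (ht : t ^ 2 = (p : K)) :
    ((r : K) + (s : K) * t) ^ h - ((r : K) - (s : K) * t) ^ h
      = 2 * ((auxA r s p h : ℚ) : K) * t := by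
  have e1 : ((r : K) + (s : K) * t) = ((s : K) * t) + r := by ring
  have e2 : ((r : K) - (s : K) * t) = (-((s : K) * t)) + r := by ring
  have hrhs : 2 * ((auxA r s p h : ℚ) : K) * t
      = ∑ k ∈ Finset.range (h + 1),
          (if Odd k then
            2 * (h.choose k : K) * (r : K) ^ (h - k) * (s : K) ^ k * (p : K) ^ ((k - 1) / 2) * t
          else 0) := by
    unfold auxA
    push_cast [apply_ite (fun x : ℚ => (x : K))]
    rw [Finset.mul_sum, Finset.sum_mul]
    refine Finset.sum_congr rfl fun k _ => ?_
    split <;> ring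
  rw [e1, e2, add_pow, add_pow, ← Finset.sum_sub_distrib, hrhs]
  refine Finset.sum_congr rfl fun k _ => ?_
  by_cases hodd : Odd k
  · obtain ⟨m, rfl⟩ := hodd
    have hk2 : (2 * m + 1 - 1) / 2 = m := by omega
    rw [if_pos ⟨m, rfl⟩, hk2]
    have htp : t ^ (2 * m + 1) = ((p : K)) ^ m * t := by
      rw [pow_succ, pow_mul, ht]
    rw [Odd.neg_pow ⟨m, rfl⟩, mul_pow, htp]
    ring
  · rw [if_neg hodd, (Nat.not_odd_iff_even.mp hodd).neg_pow]
    ring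


private lemma sqrt_exists {q : ℕ} [Fact q.Prime] (h2 : ‖(2 : ℚ_[q])‖ = 1)
    (a c : ℚ_[q]) (ha : ‖a‖ = 1) (hac : ‖a ^ 2 - c‖ < 1) :
    ∃ t : ℚ_[q], t ^ 2 = c ∧ ‖t‖ = 1 := by
  have ha2 : ‖a ^ 2‖ = 1 := by rw [norm_pow, ha, one_pow]
  have hc1 : ‖c‖ = 1 := by
    have hca : ‖c - a ^ 2‖ < 1 := by rwa [norm_sub_rev] at hac
    have hne : ‖a ^ 2‖ ≠ ‖c - a ^ 2‖ := by
      rw [ha2]; intro hh; rw [← hh] at hca; exact lt_irrefl 1 hca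
    have hce : c = a ^ 2 + (c - a ^ 2) := by ring
    rw [hce, Padic.add_eq_max_of_ne hne, ha2]
    exact max_eq_left hca.le
  set A : ℤ_[q] := ⟨a, ha.le⟩ with hA
  set C : ℤ_[q] := ⟨c, hc1.le⟩ with hC
  set F : Polynomial ℤ_[q] := Polynomial.X ^ 2 - Polynomial.C C with hF
  have hevA : F.eval A = A ^ 2 - C := by simp [hF]
  have hder : F.derivative = Polynomial.C 2 * Polynomial.X := by
    simp [hF, Polynomial.derivative_X_pow]
    rw [one_add_one_eq_two]; exact (map_ofNat Polynomial.C 2).symm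
  have hderA : F.derivative.eval A = 2 * A := by simp [hder]
  have hnormA : ‖A‖ = 1 := ha
  have hnorm2 : ‖(2 : ℤ_[q])‖ = 1 := by
    rw [PadicInt.norm_def]; exact_mod_cast h2
  have hnorm : ‖F.eval A‖ < ‖F.derivative.eval A‖ ^ 2 := by
    rw [hevA, hderA, norm_mul, hnorm2, hnormA]
    have hsub : ‖A ^ 2 - C‖ = ‖a ^ 2 - c‖ := by rw [PadicInt.norm_def]; push_cast [hA, hC]; rfl
    rw [hsub]; simpa using hac
  obtain ⟨z, hz, -, -, -⟩ := hensels_lemma hnorm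
  have hz2 : z ^ 2 = C := by
    rw [hF] at hz
    simp only [Polynomial.coe_aeval_eq_eval, Polynomial.eval_sub, Polynomial.eval_pow, Polynomial.eval_X, Polynomial.eval_C,
      sub_eq_zero] at hz
    exact hz
  have hz2' : (z : ℚ_[q]) ^ 2 = c := by
    have := congrArg (fun x : ℤ_[q] => (x : ℚ_[q])) hz2
    push_cast at this
    simpa [hC] using this
  refine ⟨(z : ℚ_[q]), hz2', ?_⟩
  have hn : ‖(z : ℚ_[q])‖ ^ 2 = 1 := by rw [← norm_pow, hz2', hc1]
  nlinarith [norm_nonneg (z : ℚ_[q])]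

private lemma T_square {q : ℕ} [Fact q.Prime] (h2 : ‖(2 : ℚ_[q])‖ = 1) {h : ℕ} (hhodd : Odd h)
    (α β : ℚ_[q]) (hα : ‖α‖ = 1) (hβ : ‖β‖ < 1) :
    ∃ z : ℚ_[q], z ^ 2 = ∑ i ∈ Finset.range h, α ^ i * β ^ (h - 1 - i) ∧ ‖z‖ = 1 := by
  obtain ⟨m, hm⟩ := hhodd
  have hβ0 : 0 ≤ ‖β‖ := norm_nonneg β
  set T : ℚ_[q] := ∑ i ∈ Finset.range h, α ^ i * β ^ (h - 1 - i) with hT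
  have h1 : 1 ≤ h := by omega
  have hsplit : T = (∑ i ∈ Finset.range (h - 1), α ^ i * β ^ (h - 1 - i)) + α ^ (h - 1) := by
    rw [hT]
    have : h = (h - 1) + 1 := by omega
    rw [this, Finset.sum_range_succ]
    congr 2; simp
  have hrest : ‖∑ i ∈ Finset.range (h - 1), α ^ i * β ^ (h - 1 - i)‖ < 1 := by
    have hle : ‖∑ i ∈ Finset.range (h - 1), α ^ i * β ^ (h - 1 - i)‖ ≤ ‖β‖ := by
      apply IsUltrametricDist.norm_sum_le_of_forall_le_of_nonneg hβ0
      intro i hi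
      have hi' : i < h - 1 := Finset.mem_range.mp hi
      rw [norm_mul, norm_pow, norm_pow, hα, one_pow, one_mul]
      calc ‖β‖ ^ (h - 1 - i) ≤ ‖β‖ ^ 1 :=
            pow_le_pow_of_le_one hβ0 hβ.le (by omega)
        _ = ‖β‖ := pow_one _
    exact lt_of_le_of_lt hle hβ
  set a : ℚ_[q] := α ^ ((h - 1) / 2) with ha
  have ha1 : ‖a‖ = 1 := by rw [ha, norm_pow, hα, one_pow]
  have ha2 : a ^ 2 = α ^ (h - 1) := by
    rw [ha, ← pow_mul]
    congr 1
    omega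
  have hdist : ‖a ^ 2 - T‖ < 1 := by
    rw [ha2, hsplit]
    have : α ^ (h - 1) - ((∑ i ∈ Finset.range (h - 1), α ^ i * β ^ (h - 1 - i)) + α ^ (h - 1))
        = -(∑ i ∈ Finset.range (h - 1), α ^ i * β ^ (h - 1 - i)) := by ring
    rw [this, norm_neg]
    exact hrest
  obtain ⟨z, hz, hzn⟩ := sqrt_exists h2 a T ha1 hdist
  exact ⟨z, hz, hzn⟩



/-- Lemma 5 of the paper: if `r² − p·s² = q^h` with `h ≥ 1` odd and `2r, 2s`
integers not divisible by `q`, and `(r + s√p)^h − (r − s√p)^h = 2S√p`, then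
`S·s` is a nonzero square in `ℚ_q`, i.e. `(S/q) = (s/q)`. -/
theorem lemma5 (p q : ℕ) [Fact q.Prime] (hp : p.Prime) (hq : q.Prime)
    (hpodd : Odd p) (hqodd : Odd q)
    (h : ℕ) (hh1 : 1 ≤ h) (hhodd : Odd h)
    (r s S : ℚ)
    (hr : ∃ a : ℤ, (2 * r : ℚ) = (a : ℚ) ∧ ¬ (q : ℤ) ∣ a)
    (hs : ∃ b : ℤ, (2 * s : ℚ) = (b : ℚ) ∧ ¬ (q : ℤ) ∣ b)
    (heq : r ^ 2 - (p : ℚ) * s ^ 2 = (q : ℚ) ^ h)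
    (hS : ((r : ℝ) + (s : ℝ) * Real.sqrt p) ^ h
        - ((r : ℝ) - (s : ℝ) * Real.sqrt p) ^ h
        = 2 * (S : ℝ) * Real.sqrt p) :
    S * s ≠ 0 ∧ IsSquare ((S * s : ℚ) : ℚ_[q]) := by
  obtain ⟨a, har, haq⟩ := hr
  obtain ⟨b, hbs, hbq⟩ := hs
  -- basic integer norm facts
  have hnormint : ∀ k : ℤ, ¬ (q : ℤ) ∣ k → ‖((k : ℤ) : ℚ_[q])‖ = 1 := fun k hk =>
    le_antisymm (Padic.norm_int_le_one k)
      (not_lt.mp fun hh => hk ((Padic.norm_intCast_lt_one_iff (k := k)).mp hh))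
  have hq2' : ¬ (q : ℤ) ∣ 2 := by
    intro hd
    have hd' : q ∣ 2 := by exact_mod_cast hd
    have := Nat.le_of_dvd (by norm_num) hd'
    have := hq.two_le
    obtain ⟨k, hk⟩ := hqodd
    omega
  have h2 : ‖(2 : ℚ_[q])‖ = 1 := by
    have := hnormint 2 hq2'
    simpa using this
  -- ‖r‖ = ‖s‖ = 1 in ℚ_q
  have hnr : ‖((r : ℚ) : ℚ_[q])‖ = 1 := by
    have hcast : (2 : ℚ_[q]) * ((r : ℚ) : ℚ_[q]) = ((a : ℤ) : ℚ_[q]) := by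
      have := congrArg (fun x : ℚ => (x : ℚ_[q])) har
      push_cast at this
      exact this
    have := congrArg (fun x : ℚ_[q] => ‖x‖) hcast
    simp only [norm_mul, h2, one_mul, hnormint a haq] at this
    exact this
  have hns : ‖((s : ℚ) : ℚ_[q])‖ = 1 := by
    have hcast : (2 : ℚ_[q]) * ((s : ℚ) : ℚ_[q]) = ((b : ℤ) : ℚ_[q]) := by
      have := congrArg (fun x : ℚ => (x : ℚ_[q])) hbs
      push_cast at this
      exact this
    have := congrArg (fun x : ℚ_[q] => ‖x‖) hcast
    simp only [norm_mul, h2, one_mul, hnormint b hbq] at this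
    exact this
  have hs0 : ((s : ℚ) : ℚ_[q]) ≠ 0 := by
    intro h0; rw [h0] at hns; simp at hns
  -- `A = S` over ℚ, from the real identity
  have hp0 : (0 : ℝ) ≤ (p : ℝ) := by positivity
  have htR : (Real.sqrt p) ^ 2 = (p : ℝ) := Real.sq_sqrt hp0
  have htRne : Real.sqrt p ≠ 0 := by
    have hppos : (0 : ℝ) < (p : ℝ) := by exact_mod_cast hp.pos
    positivity
  have hAS : auxA r s p h = S := by
    have hexpR := expand (K := ℝ) r s p h (Real.sqrt p) htR
    have hcancel := mul_right_cancel₀ htRne (hexpR.symm.trans hS)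
    have : ((auxA r s p h : ℚ) : ℝ) = ((S : ℚ) : ℝ) := by linarith
    exact_mod_cast this
  -- square root of p in ℚ_q
  have hqinv : (q : ℝ)⁻¹ < 1 := by
    rw [inv_lt_one_iff₀]
    right
    exact_mod_cast hq.one_lt
  have hqh : ‖((q : ℚ_[q])) ^ h‖ < 1 := by
    rw [norm_pow, Padic.norm_p]
    exact pow_lt_one₀ (by positivity) hqinv (by omega)
  have heqK : ((r : ℚ) : ℚ_[q]) ^ 2 - (p : ℚ_[q]) * ((s : ℚ) : ℚ_[q]) ^ 2
      = (q : ℚ_[q]) ^ h := by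
    have := congrArg (fun x : ℚ => (x : ℚ_[q])) heq
    push_cast at this
    exact_mod_cast this
  obtain ⟨t', ht'2, ht'n⟩ := sqrt_exists h2 ((r : ℚ) : ℚ_[q])
      ((p : ℚ_[q]) * ((s : ℚ) : ℚ_[q]) ^ 2) hnr (by rw [heqK]; exact hqh)
  set t : ℚ_[q] := t' / ((s : ℚ) : ℚ_[q]) with htdef
  have ht2 : t ^ 2 = (p : ℚ_[q]) := by
    rw [htdef, div_pow, ht'2]
    field_simp
  have htn : ‖t‖ = 1 := by rw [htdef, norm_div, ht'n, hns, div_one]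
  have ht0 : t ≠ 0 := by intro h0; rw [h0] at htn; simp at htn
  -- α, β and their norms
  set α : ℚ_[q] := ((r : ℚ) : ℚ_[q]) + ((s : ℚ) : ℚ_[q]) * t with hadef
  set β : ℚ_[q] := ((r : ℚ) : ℚ_[q]) - ((s : ℚ) : ℚ_[q]) * t with hbdef
  have hαβ : α * β = (q : ℚ_[q]) ^ h := by
    have : α * β = ((r : ℚ) : ℚ_[q]) ^ 2 - ((s : ℚ) : ℚ_[q]) ^ 2 * t ^ 2 := by
      rw [hadef, hbdef]; ring
    rw [this, ht2, ← heqK]; ring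
  have hst : ‖((s : ℚ) : ℚ_[q]) * t‖ = 1 := by rw [norm_mul, hns, htn, one_mul]
  have hαle : ‖α‖ ≤ 1 := by
    rw [hadef]
    refine le_trans (Padic.nonarchimedean _ _) ?_
    rw [hnr, hst]; simp
  have hβle : ‖β‖ ≤ 1 := by
    rw [hbdef, sub_eq_add_neg]
    refine le_trans (Padic.nonarchimedean _ _) ?_
    rw [hnr, norm_neg, hst]; simp
  have hprod : ‖α‖ * ‖β‖ < 1 := by
    rw [← norm_mul, hαβ]; exact hqh
  have hsum : ‖α + β‖ = 1 := by
    have : α + β = 2 * ((r : ℚ) : ℚ_[q]) := by rw [hadef, hbdef]; ring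
    rw [this, norm_mul, h2, hnr, one_mul]
  -- get the square root z of T
  set T : ℚ_[q] := ∑ i ∈ Finset.range h, α ^ i * β ^ (h - 1 - i) with hTdef
  obtain ⟨z, hz2, hzn⟩ : ∃ z : ℚ_[q], z ^ 2 = T ∧ ‖z‖ = 1 := by
    by_cases hb : ‖β‖ < 1
    · have hα1 : ‖α‖ = 1 := by
        have heqa : α = (α + β) + (-β) := by ring
        have hne : ‖α + β‖ ≠ ‖-β‖ := by
          rw [hsum, norm_neg]; intro hh; rw [← hh] at hb; exact lt_irrefl 1 hb
        rw [heqa, Padic.add_eq_max_of_ne hne, hsum, norm_neg]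
        exact max_eq_left hb.le
      exact T_square h2 hhodd α β hα1 hb
    · have hβ1 : ‖β‖ = 1 := le_antisymm hβle (not_lt.mp hb)
      have hαlt : ‖α‖ < 1 := by rwa [hβ1, mul_one] at hprod
      obtain ⟨z, hz, hzn⟩ := T_square h2 hhodd β α hβ1 hαlt
      refine ⟨z, ?_, hzn⟩
      rw [hz, hTdef]
      rw [← Finset.sum_range_reflect]
      refine Finset.sum_congr rfl fun i hi => ?_
      have hi' : i < h := Finset.mem_range.mp hi
      have hrw : h - 1 - (h - 1 - i) = i := by omega
      rw [hrw, mul_comm]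
  -- S = T * s in ℚ_q
  have hgeom : T * (α - β) = α ^ h - β ^ h := geom_sum₂_mul α β h
  have hdiffK : α - β = 2 * ((s : ℚ) : ℚ_[q]) * t := by rw [hadef, hbdef]; ring
  have hexpK : α ^ h - β ^ h = 2 * ((S : ℚ) : ℚ_[q]) * t := by
    have := expand (K := ℚ_[q]) r s p h t ht2
    rw [hAS] at this
    rw [hadef, hbdef]
    exact this
  have heq1 : T * (2 * ((s : ℚ) : ℚ_[q]) * t) = 2 * ((S : ℚ) : ℚ_[q]) * t := by
    rw [← hdiffK, hgeom, hexpK]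
  have h2t : (2 : ℚ_[q]) * t ≠ 0 := mul_ne_zero two_ne_zero ht0
  have hSK : ((S : ℚ) : ℚ_[q]) = T * ((s : ℚ) : ℚ_[q]) := by
    have heq2 : (T * ((s : ℚ) : ℚ_[q])) * (2 * t) = ((S : ℚ) : ℚ_[q]) * (2 * t) := by
      linear_combination heq1
    exact (mul_right_cancel₀ h2t heq2).symm
  -- conclusion
  have hz0 : z ≠ 0 := by intro h0; rw [h0] at hzn; simp at hzn
  have hfinal : ((S * s : ℚ) : ℚ_[q]) = (z * ((s : ℚ) : ℚ_[q])) ^ 2 := by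
    push_cast
    rw [hSK, ← hz2]
    ring
  have hne : ((S * s : ℚ) : ℚ_[q]) ≠ 0 := by
    rw [hfinal]
    exact pow_ne_zero _ (mul_ne_zero hz0 hs0)
  refine ⟨fun hc => hne (by rw [hc]; simp), ⟨z * ((s : ℚ) : ℚ_[q]), by rw [hfinal]; ring⟩⟩
end

section
/- Let p be a prime such that p = 4u² + 4uv + 9v² for some integers u and v. Then there are no integers x, y, z, not all zero, satisfying p·x⁴ − 32·y⁴ = z². -/
open Zsqrtd

local notation "R" => Zsqrtd (-2)

namespace PepinAux

theorem norm_def' (x : R) : x.norm = x.re ^ 2 + 2 * x.im ^ 2 := by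
  rw [Zsqrtd.norm_def]; ring

theorem norm_nonneg' (x : R) : 0 ≤ x.norm := Zsqrtd.norm_nonneg (by norm_num) x

noncomputable instance : Div R :=
  ⟨fun x y =>
    ⟨round (((x * star y).re : ℚ) / (y.norm : ℚ)),
     round (((x * star y).im : ℚ) / (y.norm : ℚ))⟩⟩

theorem div_def (x y : R) : x / y =
    ⟨round (((x * star y).re : ℚ) / (y.norm : ℚ)),
     round (((x * star y).im : ℚ) / (y.norm : ℚ))⟩ := rfl

noncomputable instance : Mod R := ⟨fun x y => x - y * (x / y)⟩

theorem mod_def (x y : R) : x % y = x - y * (x / y) := rfl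

theorem norm_mod_lt (x : R) {y : R} (hy : y ≠ 0) : (x % y).norm < y.norm := by
  have hn : 0 < y.norm := by
    rcases lt_or_eq_of_le (norm_nonneg' y) with h | h
    · exact h
    · exact absurd ((Zsqrtd.norm_eq_zero_iff (by norm_num) y).1 h.symm) hy
  set q : R := x / y with hq
  have key : (x % y).norm * y.norm = ((x * star y).re - y.norm * q.re) ^ 2 +
      2 * ((x * star y).im - y.norm * q.im) ^ 2 := by
    have h1 : (x % y) * star y = x * star y - (y.norm : R) * q := by
      rw [mod_def, sub_mul, Zsqrtd.norm_eq_mul_conj]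
      ring
    have h2 : ((x % y) * star y).norm = (x % y).norm * y.norm := by
      rw [Zsqrtd.norm_mul, Zsqrtd.norm_conj]
    rw [← h2, h1, norm_def']
    simp only [Zsqrtd.re_sub, Zsqrtd.im_sub, Zsqrtd.re_smul, Zsqrtd.im_smul]
    try ring
  have hnq : (0 : ℚ) < (y.norm : ℚ) := by exact_mod_cast hn
  have hb : ∀ c : ℤ, |(c : ℚ) - (y.norm : ℚ) * round ((c : ℚ) / (y.norm : ℚ))| ≤ (y.norm : ℚ) / 2 := by
    intro c
    have h0 := abs_sub_round ((c : ℚ) / (y.norm : ℚ))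
    have e : (c : ℚ) - (y.norm : ℚ) * round ((c : ℚ) / (y.norm : ℚ)) =
        ((c : ℚ) / (y.norm : ℚ) - round ((c : ℚ) / (y.norm : ℚ))) * (y.norm : ℚ) := by
      field_simp
    rw [e, abs_mul, abs_of_pos hnq]
    calc |(c : ℚ) / (y.norm : ℚ) - round ((c : ℚ) / (y.norm : ℚ))| * (y.norm : ℚ)
        ≤ (1/2) * (y.norm : ℚ) := mul_le_mul_of_nonneg_right h0 hnq.le
      _ = (y.norm : ℚ) / 2 := by ring
  have hre := hb (x * star y).re
  have him := hb (x * star y).im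
  have hqre : ((q.re : ℤ) : ℚ) = (round (((x * star y).re : ℚ) / (y.norm : ℚ)) : ℚ) := by
    rw [hq, div_def]
  have hqim : ((q.im : ℤ) : ℚ) = (round (((x * star y).im : ℚ) / (y.norm : ℚ)) : ℚ) := by
    rw [hq, div_def]
  rw [← hqre] at hre
  rw [← hqim] at him
  have main : ((x % y).norm : ℚ) * (y.norm : ℚ) < (y.norm : ℚ) * (y.norm : ℚ) := by
    have hkey : ((x % y).norm : ℚ) * (y.norm : ℚ) =
        (((x * star y).re : ℚ) - (y.norm : ℚ) * (q.re : ℚ)) ^ 2 +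
        2 * (((x * star y).im : ℚ) - (y.norm : ℚ) * (q.im : ℚ)) ^ 2 := by
      exact_mod_cast congrArg (fun z : ℤ => (z : ℚ)) key
    have hre' := abs_le.mp hre
    have him' := abs_le.mp him
    have hA : (((x * star y).re : ℚ) - (y.norm : ℚ) * (q.re : ℚ)) ^ 2 ≤ ((y.norm : ℚ)/2) ^ 2 :=
      sq_le_sq' hre'.1 hre'.2
    have hB : (((x * star y).im : ℚ) - (y.norm : ℚ) * (q.im : ℚ)) ^ 2 ≤ ((y.norm : ℚ)/2) ^ 2 :=
      sq_le_sq' him'.1 him'.2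
    rw [hkey]
    nlinarith [mul_pos hnq hnq]
  have := lt_of_mul_lt_mul_right main hnq.le
  exact_mod_cast this

theorem norm_le_norm_mul_left (x : R) {y : R} (hy : y ≠ 0) :
    (Zsqrtd.norm x).natAbs ≤ (Zsqrtd.norm (x * y)).natAbs := by
  rw [Zsqrtd.norm_mul, Int.natAbs_mul]
  refine le_mul_of_one_le_right (Nat.zero_le _) ?_
  rcases Nat.eq_zero_or_pos (Zsqrtd.norm y).natAbs with h | h
  · exact absurd ((Zsqrtd.norm_eq_zero_iff (by norm_num) y).1
      (Int.natAbs_eq_zero.1 h)) hy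
  · exact h

noncomputable instance instED : EuclideanDomain R :=
  { Zsqrtd.commRing, (inferInstance : Nontrivial R) with
    quotient := (· / ·)
    remainder := (· % ·)
    quotient_zero := fun x => by
      ext <;> simp [div_def, Zsqrtd.norm]
    quotient_mul_add_remainder_eq := fun x y => by
      change y * (x / y) + (x - y * (x / y)) = x; ring
    r := fun a b => a.norm.natAbs < b.norm.natAbs
    r_wellFounded := (measure (Int.natAbs ∘ Zsqrtd.norm)).wf
    remainder_lt := fun x y hy => by
      change (x % y).norm.natAbs < y.norm.natAbs
      have h := norm_mod_lt x hy
      have h0 := norm_nonneg' (x % y)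
      have h1 := norm_nonneg' y
      omega
    mul_left_not_lt := fun a b hb0 => not_lt_of_ge <| norm_le_norm_mul_left a hb0 }

theorem one_le_sq_of_ne_zero {a : ℤ} (h : a ≠ 0) : 1 ≤ a ^ 2 := by
  rcases lt_or_gt_of_ne h with h1 | h1 <;> nlinarith

theorem isUnit_eq {u : R} (hu : IsUnit u) : u = 1 ∨ u = -1 := by
  have h := (Zsqrtd.norm_eq_one_iff' (by norm_num) u).2 hu
  rw [norm_def'] at h
  have him : u.im = 0 := by
    by_contra hne
    have h1 := one_le_sq_of_ne_zero hne
    nlinarith [sq_nonneg u.re]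
  have hre : (u.re - 1) * (u.re + 1) = 0 := by nlinarith
  rcases mul_eq_zero.mp hre with h1 | h1
  · left; ext <;> simp [him]; omega
  · right; ext <;> simp [him] <;> omega

set_option synthInstance.maxHeartbeats 1000000 in
theorem prime_of_norm_prime {π : R} (hp : Prime π.norm) : Prime π := by
  rw [← irreducible_iff_prime]
  constructor
  · intro hu
    exact hp.not_unit (by rw [(Zsqrtd.norm_eq_one_iff' (by norm_num) π).2 hu]; exact isUnit_one)
  · intro a b hab
    have h := congrArg Zsqrtd.norm hab
    rw [Zsqrtd.norm_mul] at h
    rcases hp.2.2 a.norm b.norm ⟨1, by rw [h]; ring⟩ with hd | hd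
    · -- π.norm ∣ a.norm ⇒ b.norm unit
      right
      rw [← Zsqrtd.norm_eq_one_iff' (by norm_num)]
      obtain ⟨k, hk⟩ := hd
      have h1 : π.norm * 1 = π.norm * (b.norm * k) := by
        rw [mul_one]; conv_lhs => rw [h, hk]
        ring
      have h2 : (1 : ℤ) = b.norm * k := mul_left_cancel₀ hp.ne_zero h1
      exact Int.eq_one_of_mul_eq_one_right (norm_nonneg' b) h2.symm
    · left
      rw [← Zsqrtd.norm_eq_one_iff' (by norm_num)]
      obtain ⟨k, hk⟩ := hd
      have h1 : π.norm * 1 = π.norm * (a.norm * k) := by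
        rw [mul_one]; conv_lhs => rw [h, hk]
        ring
      have h2 : (1 : ℤ) = a.norm * k := mul_left_cancel₀ hp.ne_zero h1
      exact Int.eq_one_of_mul_eq_one_right (norm_nonneg' a) h2.symm

theorem norm_dvd_norm {a b : R} (h : a ∣ b) : a.norm ∣ b.norm := by
  obtain ⟨u, rfl⟩ := h
  rw [Zsqrtd.norm_mul]
  exact dvd_mul_right _ _

theorem coprime_two_of_odd {g : ℤ} (h : Odd g) : IsCoprime g (2 : ℤ) := by
  obtain ⟨k, hk⟩ := h
  exact ⟨1, -k, by rw [hk]; ring⟩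

theorem odd_of_dvd_odd {g m : ℤ} (h : g ∣ m) (hm : Odd m) : Odd g := by
  rcases Int.even_or_odd g with he | ho
  · obtain ⟨l, hl⟩ := h
    exact absurd hm (Int.not_odd_iff_even.mpr (hl ▸ he.mul_right l))
  · exact ho

theorem odd_of_odd_pow {g : ℤ} {n : ℕ} (h : Odd (g ^ (n + 1))) : Odd g := by
  rcases Int.even_or_odd g with he | ho
  · exact absurd h (Int.not_odd_iff_even.mpr (by simpa [pow_succ] using (he.mul_left (g ^ n))))
  · exact ho

theorem norm_pow' (a : R) (n : ℕ) : (a ^ n).norm = a.norm ^ n := by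
  induction n with
  | zero => simp [Zsqrtd.norm_one]
  | succ n ih => rw [pow_succ, pow_succ, Zsqrtd.norm_mul, ih]

theorem key_sub (p : ℕ) (hp0 : (p : ℤ) ≠ 0) (x y : ℤ) (hx : Odd x)
    (α π₀ : R) (hαim : α.im = 4 * y ^ 2)
    (hNπ : π₀.norm = (p : ℤ))
    (hprod0 : α * star α = π₀ * star π₀ * ((x : ℤ) : R) ^ 4)
    (hcop : IsCoprime α (star α)) (hdvd : π₀ ∣ α) :
    ∃ s t : ℤ, (p : ℤ) = s ^ 2 + 2 * (4 * t) ^ 2 := by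
  obtain ⟨γ, hγ⟩ := hdvd
  have hππ : π₀ * star π₀ ≠ 0 := by
    intro h
    have h2 := congrArg Zsqrtd.norm h
    rw [Zsqrtd.norm_mul, Zsqrtd.norm_conj, hNπ, Zsqrtd.norm_zero] at h2
    exact hp0 (by nlinarith)
  have hcancel : γ * star γ = ((x : ℤ) : R) ^ 4 := by
    apply mul_left_cancel₀ hππ
    rw [← hprod0, hγ, star_mul]
    ring
  have hcopγ : IsCoprime γ (star γ) := by
    have h1 : γ ∣ α := ⟨π₀, by rw [hγ]; ring⟩
    have h2 : star γ ∣ star α := ⟨star π₀, by rw [hγ, star_mul]⟩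
    exact (hcop.of_isCoprime_of_dvd_left h1).of_isCoprime_of_dvd_right h2
  obtain ⟨β, u, hu⟩ := exists_associated_pow_of_mul_eq_pow' hcopγ hcancel
  have hNu : (u : R).norm = 1 := (Zsqrtd.norm_eq_one_iff' (by norm_num) _).2 u.isUnit
  have hNγ : γ.norm = x ^ 4 := by
    have h1 : ((γ.norm : ℤ) : R) = ((x ^ 4 : ℤ) : R) := by
      rw [Zsqrtd.norm_eq_mul_conj, hcancel]; push_cast; ring
    exact (Int.cast_inj (α := R)).1 h1
  have hNβ4 : β.norm ^ 4 = x ^ 4 := by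
    have h1 := congrArg Zsqrtd.norm hu
    rw [Zsqrtd.norm_mul, hNu, mul_one, norm_pow'] at h1
    rw [h1, hNγ]
  have hNβodd : Odd β.norm := by
    apply odd_of_odd_pow (n := 3)
    rw [hNβ4]
    exact hx.pow
  set a := β.re with ha
  set b := β.im with hb
  have haodd : Odd a := by
    rw [norm_def'] at hNβodd
    rcases Int.even_or_odd a with he | ho
    · obtain ⟨k, hk⟩ := he
      exact absurd hNβodd (Int.not_odd_iff_even.mpr
        (⟨2 * k * k + b * b, by rw [hk]; ring⟩ : Even (a ^ 2 + 2 * b ^ 2)))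
    · exact ho
  have hβ4 : β ^ 4 = (⟨a ^ 4 - 12 * a ^ 2 * b ^ 2 + 4 * b ^ 4,
      4 * a ^ 3 * b - 8 * a * b ^ 3⟩ : R) := by
    have hβ : β = ⟨a, b⟩ := rfl
    rw [hβ]
    ext <;> simp [pow_succ, Zsqrtd.re_mul, Zsqrtd.im_mul] <;> ring
  set A := a ^ 4 - 12 * a ^ 2 * b ^ 2 + 4 * b ^ 4 with hA
  set B := 4 * a ^ 3 * b - 8 * a * b ^ 3 with hB
  have hAodd : Odd A := by
    obtain ⟨j, hj⟩ := haodd.pow (n := 4)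
    exact ⟨j - 6 * a ^ 2 * b ^ 2 + 2 * b ^ 4, by rw [hA, hj]; ring⟩
  set s := π₀.re with hs
  set t := π₀.im with ht
  have him : 4 * y ^ 2 = (π₀ * (β ^ 4 * u)).im := by
    rw [← hαim, hγ, hu]
  rcases isUnit_eq u.isUnit with h1 | h1
  · rw [h1, mul_one, hβ4, Zsqrtd.im_mul] at him
    -- him : 4 * y ^ 2 = s * B + t * A
    have h4 : (4 : ℤ) ∣ A * t := by
      refine ⟨y ^ 2 - s * (a ^ 3 * b - 2 * a * b ^ 3), ?_⟩
      simp only [hA, hB] at him ⊢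
      linarith
    have hco : IsCoprime (4 : ℤ) A := by
      have h2 : IsCoprime ((2 : ℤ) ^ 2) A := IsCoprime.pow_left (coprime_two_of_odd hAodd).symm
      have h3 : ((2 : ℤ) ^ 2) = 4 := by norm_num
      rwa [h3] at h2
    obtain ⟨t₀, ht₀⟩ := hco.dvd_of_dvd_mul_left h4
    exact ⟨s, t₀, by rw [← hNπ, norm_def', ← hs, ← ht, ht₀]; try ring⟩
  · rw [h1, mul_neg_one, mul_neg, Zsqrtd.im_neg, hβ4, Zsqrtd.im_mul] at him
    have h4 : (4 : ℤ) ∣ A * t := by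
      refine ⟨-(y ^ 2) - s * (a ^ 3 * b - 2 * a * b ^ 3), ?_⟩
      simp only [hA, hB] at him ⊢
      linarith
    have hco : IsCoprime (4 : ℤ) A := by
      have h2 : IsCoprime ((2 : ℤ) ^ 2) A := IsCoprime.pow_left (coprime_two_of_odd hAodd).symm
      have h3 : ((2 : ℤ) ^ 2) = 4 := by norm_num
      rwa [h3] at h2
    obtain ⟨t₀, ht₀⟩ := hco.dvd_of_dvd_mul_left h4
    exact ⟨s, t₀, by rw [← hNπ, norm_def', ← hs, ← ht, ht₀]; try ring⟩

theorem key (p : ℕ) (hp : p.Prime) (c v : ℤ)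
    (hpr : (p : ℤ) = c ^ 2 + 2 * (2 * v) ^ 2) (hpodd : Odd (p : ℤ))
    (x y z : ℤ) (hx : Odd x) (hzy : IsCoprime z y)
    (heq : z ^ 2 + 2 * (4 * y ^ 2) ^ 2 = (p : ℤ) * x ^ 4) :
    ∃ s t : ℤ, (p : ℤ) = s ^ 2 + 2 * (4 * t) ^ 2 := by
  have hp0 : (p : ℤ) ≠ 0 := by exact_mod_cast hp.pos.ne'
  have hpZ : Prime (p : ℤ) := Nat.prime_iff_prime_int.mp hp
  have hx0 : x ≠ 0 := by
    rintro rfl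
    exact absurd hx (by simp)
  set α : R := ⟨z, 4 * y ^ 2⟩ with hα
  have hNα : α.norm = (p : ℤ) * x ^ 4 := by rw [norm_def']; exact heq
  set π : R := ⟨c, 2 * v⟩ with hπdef
  have hNπ : π.norm = (p : ℤ) := by rw [norm_def']; exact hpr.symm
  have hNπ' : (star π).norm = (p : ℤ) := by rw [Zsqrtd.norm_conj, hNπ]
  have hπ : Prime π := prime_of_norm_prime (by rw [hNπ]; exact hpZ)
  have hα0 : α ≠ 0 := by
    intro h
    have h2 := congrArg Zsqrtd.norm h
    rw [hNα, Zsqrtd.norm_zero] at h2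
    rcases mul_eq_zero.mp h2 with h3 | h3
    · exact hp0 h3
    · exact hx0 (pow_eq_zero_iff (by norm_num) |>.mp h3)
  have hprod : α * star α = π * star π * ((x : ℤ) : R) ^ 4 := by
    rw [← Zsqrtd.norm_eq_mul_conj, ← Zsqrtd.norm_eq_mul_conj, hNα, hNπ]
    push_cast
    ring
  have hoddpx : Odd ((p : ℤ) * x ^ 4) := hpodd.mul hx.pow
  have hcop : IsCoprime α (star α) := by
    apply isCoprime_of_irreducible_dvd
    · rintro ⟨h1, -⟩; exact hα0 h1
    · intro q hq hq1 hq2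
      apply hq.not_isUnit
      rw [← Zsqrtd.norm_eq_one_iff, ← Int.isUnit_iff_natAbs_eq]
      have hsum : α + star α = (((2 * z : ℤ)) : R) := by
        ext <;> simp [hα, Zsqrtd.intCast_val] <;> ring
      have hdiff : α - star α = (⟨0, 8 * y ^ 2⟩ : R) := by
        ext <;> simp [hα] <;> ring
      have hd1 : q.norm ∣ 2 ^ 2 * z ^ 2 := by
        have h5 := norm_dvd_norm (hsum ▸ dvd_add hq1 hq2)
        rw [Zsqrtd.norm_intCast] at h5
        convert h5 using 1
        ring
      have hd2 : q.norm ∣ 2 ^ 7 * y ^ 4 := by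
        have h5 := norm_dvd_norm (hdiff ▸ dvd_sub hq1 hq2)
        have h6 : (⟨0, 8 * y ^ 2⟩ : R).norm = 2 ^ 7 * y ^ 4 := by
          rw [norm_def']; ring
        rw [h6] at h5
        exact h5
      have hd3 : q.norm ∣ (p : ℤ) * x ^ 4 := hNα ▸ norm_dvd_norm hq1
      have hodd : Odd q.norm := odd_of_dvd_odd hd3 hoddpx
      have hc2 : IsCoprime q.norm (2 : ℤ) := coprime_two_of_odd hodd
      have hz2 : q.norm ∣ z ^ 2 := (hc2.pow_right).dvd_of_dvd_mul_left hd1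
      have hy4 : q.norm ∣ y ^ 4 := (hc2.pow_right).dvd_of_dvd_mul_left hd2
      exact (hzy.pow (m := 2) (n := 4)).isUnit_of_dvd' hz2 hy4
  have hdvdprod : π ∣ α * star α := ⟨star π * ((x : ℤ) : R) ^ 4, by rw [hprod]; ring⟩
  rcases hπ.2.2 α (star α) hdvdprod with hc | hc
  · exact key_sub p hp0 x y hx α π rfl hNπ hprod hcop hc
  · obtain ⟨w, hw⟩ := hc
    have hc' : star π ∣ α := by
      refine ⟨star w, ?_⟩
      rw [← star_star α, hw, star_mul]
      ring
    have hprod' : α * star α = star π * star (star π) * ((x : ℤ) : R) ^ 4 := by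
      rw [star_star, hprod]
      ring
    exact key_sub p hp0 x y hx α (star π) rfl hNπ' hprod' hcop hc'

theorem rep_unique (p : ℕ) (hp : p.Prime) {a b c d : ℤ}
    (h1 : (p : ℤ) = a ^ 2 + 2 * b ^ 2) (h2 : (p : ℤ) = c ^ 2 + 2 * d ^ 2) :
    b ^ 2 = d ^ 2 := by
  have hpZ : Prime (p : ℤ) := Nat.prime_iff_prime_int.mp hp
  have hp1 : 1 ≤ (p : ℤ) := by exact_mod_cast hp.one_lt.le
  have hp0 : (p : ℤ) ≠ 0 := by positivity
  have hdvd : (p : ℤ) ∣ (a * d - b * c) * (a * d + b * c) := by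
    refine ⟨d ^ 2 - b ^ 2, ?_⟩
    linear_combination b ^ 2 * h2 - d ^ 2 * h1
  have hpp : (p : ℤ) * (p : ℤ) = (a ^ 2 + 2 * b ^ 2) * (c ^ 2 + 2 * d ^ 2) := by
    linear_combination (p : ℤ) * h2 + (c ^ 2 + 2 * d ^ 2) * h1
  rcases hpZ.2.2 _ _ hdvd with h | h
  · obtain ⟨k, hk⟩ := h
    have key : (p : ℤ) * (p : ℤ) = (a * c + 2 * b * d) ^ 2 + 2 * ((p : ℤ) * k) ^ 2 := by
      rw [← hk, hpp]; ring
    have hk0 : k = 0 := by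
      by_contra h0
      have h1k := one_le_sq_of_ne_zero h0
      nlinarith [sq_nonneg (a * c + 2 * b * d), mul_pos (lt_of_lt_of_le zero_lt_one hp1)
        (lt_of_lt_of_le zero_lt_one hp1)]
    rw [hk0, mul_zero] at hk
    -- hk : a * d - b * c = 0
    have hbd : b ^ 2 * (p : ℤ) = d ^ 2 * (p : ℤ) := by
      linear_combination b ^ 2 * h2 - d ^ 2 * h1 - (a * d + b * c) * hk
    exact mul_right_cancel₀ hp0 hbd
  · obtain ⟨k, hk⟩ := h
    have key : (p : ℤ) * (p : ℤ) = (a * c - 2 * b * d) ^ 2 + 2 * ((p : ℤ) * k) ^ 2 := by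
      rw [← hk, hpp]; ring
    have hk0 : k = 0 := by
      by_contra h0
      have h1k := one_le_sq_of_ne_zero h0
      nlinarith [sq_nonneg (a * c - 2 * b * d), mul_pos (lt_of_lt_of_le zero_lt_one hp1)
        (lt_of_lt_of_le zero_lt_one hp1)]
    rw [hk0, mul_zero] at hk
    -- hk : a * d + b * c = 0
    have hbd : b ^ 2 * (p : ℤ) = d ^ 2 * (p : ℤ) := by
      linear_combination b ^ 2 * h2 - d ^ 2 * h1 - (a * d - b * c) * hk
    exact mul_right_cancel₀ hp0 hbd

theorem zmod8_no (A B C : ZMod 8) : C ^ 2 ≠ A ^ 4 - 2 * (2 * B + 1) ^ 4 := by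
  revert A B C; decide

theorem zmod8_sq (k : ZMod 8) : (2 * k + 1) ^ 2 = 1 := by revert k; decide

end PepinAux

open PepinAux in
/-- Pépin's claim from [18]: if the prime `p` is represented by the quadratic
form `4u² + 4uv + 9v²`, then `p·x⁴ − 32·y⁴ = z²` has no nontrivial integral
solutions. -/
theorem pepin_32 (p : ℕ) (hp : p.Prime)
    (hrep : ∃ u v : ℤ, (p : ℤ) = 4 * u ^ 2 + 4 * u * v + 9 * v ^ 2) :
    ¬ ∃ x y z : ℤ, (x, y, z) ≠ (0, 0, 0) ∧
      (p : ℤ) * x ^ 4 - 32 * y ^ 4 = z ^ 2 := by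
  obtain ⟨u, v, huv⟩ := hrep
  have hvodd : Odd v := by
    rcases Int.even_or_odd v with he | ho
    · obtain ⟨w, hw⟩ := he
      exfalso
      have h4 : (4 : ℤ) ∣ (p : ℤ) :=
        ⟨u ^ 2 + 2 * u * w + 9 * w ^ 2, by rw [huv, hw]; ring⟩
      have h4n : (4 : ℕ) ∣ p := by exact_mod_cast h4
      have := Nat.Prime.eq_one_or_self_of_dvd hp 2 (dvd_trans ⟨2, rfl⟩ h4n)
      omega
    · exact ho
  obtain ⟨r, hr⟩ := hvodd
  set c : ℤ := 2 * u + v with hc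
  have hpr : (p : ℤ) = c ^ 2 + 2 * (2 * v) ^ 2 := by rw [huv, hc]; ring
  have hcodd : Odd c := ⟨u + r, by omega⟩
  obtain ⟨cr, hcr⟩ := hcodd
  have hpodd : Odd (p : ℤ) := by
    refine ⟨2 * cr ^ 2 + 2 * cr + 4 * v ^ 2, ?_⟩
    rw [hpr, hcr]; ring
  have hp8 : ((p : ℤ) : ZMod 8) = 1 := by
    have h1 : ((p : ℤ) : ZMod 8) = (2 * (cr : ZMod 8) + 1) ^ 2 + 8 * (v : ZMod 8) ^ 2 := by
      rw [hpr, hcr]; push_cast; ring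
    rw [h1, zmod8_sq]
    have h8 : (8 : ZMod 8) = 0 := by decide
    rw [h8]; ring
  have hp0 : (p : ℤ) ≠ 0 := by
    have := hp.pos; omega
  rintro ⟨x, y, z, hne, heq⟩
  have hxy0 : ¬(x = 0 ∧ y = 0) := by
    rintro ⟨rfl, rfl⟩
    have hz2 : z ^ 2 = 0 := by rw [← heq]; norm_num
    have hz0 : z = 0 := by
      exact pow_eq_zero_iff (two_ne_zero) |>.mp hz2
    exact hne (by rw [hz0])
  set g : ℤ := (Int.gcd x y : ℤ) with hg
  have hgdx : g ∣ x := Int.gcd_dvd_left x y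
  have hgdy : g ∣ y := Int.gcd_dvd_right x y
  have hg0 : g ≠ 0 := by
    simp only [hg, ne_eq, Int.natCast_eq_zero, Int.gcd_eq_zero_iff]
    tauto
  obtain ⟨x₁, hx₁⟩ := hgdx
  obtain ⟨y₁, hy₁⟩ := hgdy
  have hcop1 : IsCoprime x₁ y₁ := by
    have hgpos : 0 < Int.gcd x y := by
      rcases Nat.eq_zero_or_pos (Int.gcd x y) with h | h
      · exact absurd (by simp [hg, h]) hg0
      · exact h
    have hgg := Int.gcd_div_gcd_div_gcd hgpos
    have hx' : x / g = x₁ := by rw [hx₁]; exact Int.mul_ediv_cancel_left _ hg0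
    have hy' : y / g = y₁ := by rw [hy₁]; exact Int.mul_ediv_cancel_left _ hg0
    rw [Int.isCoprime_iff_gcd_eq_one, ← hx', ← hy']
    exact hgg
  have hzdvd : (g ^ 2) ^ 2 ∣ z ^ 2 := by
    refine ⟨(p : ℤ) * x₁ ^ 4 - 32 * y₁ ^ 4, ?_⟩
    rw [← heq, hx₁, hy₁]; ring
  have hgz : g ^ 2 ∣ z := (Int.pow_dvd_pow_iff two_ne_zero).mp hzdvd
  obtain ⟨z₁, hz₁⟩ := hgz
  have heq1 : (p : ℤ) * x₁ ^ 4 - 32 * y₁ ^ 4 = z₁ ^ 2 := by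
    apply mul_left_cancel₀ (pow_ne_zero 4 hg0)
    have e1 : g ^ 4 * ((p : ℤ) * x₁ ^ 4 - 32 * y₁ ^ 4) = (p : ℤ) * x ^ 4 - 32 * y ^ 4 := by
      rw [hx₁, hy₁]; ring
    have e2 : g ^ 4 * z₁ ^ 2 = z ^ 2 := by rw [hz₁]; ring
    rw [e1, e2, heq]
  have hx₁odd : Odd x₁ := by
    rcases Int.even_or_odd x₁ with he | ho
    · exfalso
      obtain ⟨x₂, hx₂⟩ := he
      have hy₁odd : Odd y₁ := by
        rcases Int.even_or_odd y₁ with he' | ho'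
        · obtain ⟨y₂, hy₂⟩ := he'
          have h2u : IsUnit (2 : ℤ) :=
            hcop1.isUnit_of_dvd' ⟨x₂, by omega⟩ ⟨y₂, by omega⟩
          rcases Int.isUnit_iff.mp h2u with h | h <;> omega
        · exact ho'
      obtain ⟨m, hm⟩ := hy₁odd
      have h16 : (4 : ℤ) ^ 2 ∣ z₁ ^ 2 := by
        refine ⟨(p : ℤ) * x₂ ^ 4 - 2 * y₁ ^ 4, ?_⟩
        rw [← heq1, hx₂]; ring
      obtain ⟨z₂, hz₂⟩ := (Int.pow_dvd_pow_iff two_ne_zero).mp h16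
      have heq2 : z₂ ^ 2 = (p : ℤ) * x₂ ^ 4 - 2 * (2 * m + 1) ^ 4 := by
        apply mul_left_cancel₀ (show (16 : ℤ) ≠ 0 by norm_num)
        have e1 : (16 : ℤ) * z₂ ^ 2 = z₁ ^ 2 := by rw [hz₂]; ring
        have e2 : (16 : ℤ) * ((p : ℤ) * x₂ ^ 4 - 2 * (2 * m + 1) ^ 4) =
            (p : ℤ) * x₁ ^ 4 - 32 * y₁ ^ 4 := by
          rw [hx₂, hm]; ring
        rw [e1, e2, heq1]
      have hcast : ((z₂ : ZMod 8)) ^ 2 =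
          ((p : ℤ) : ZMod 8) * (x₂ : ZMod 8) ^ 4 - 2 * (2 * (m : ZMod 8) + 1) ^ 4 := by
        have h3 := congrArg (fun n : ℤ => (n : ZMod 8)) heq2
        push_cast at h3 ⊢
        exact h3
      rw [hp8, one_mul] at hcast
      exact zmod8_no (x₂ : ZMod 8) (m : ZMod 8) (z₂ : ZMod 8) hcast
    · exact ho
  have hz₁odd : Odd z₁ := by
    apply odd_of_odd_pow (n := 1)
    have hodd2 : Odd ((p : ℤ) * x₁ ^ 4 - 32 * y₁ ^ 4) := by
      obtain ⟨k, hk⟩ := hpodd.mul (hx₁odd.pow (n := 4))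
      exact ⟨k - 16 * y₁ ^ 4, by rw [hk]; ring⟩
    rwa [heq1] at hodd2
  have hcopzy : IsCoprime z₁ y₁ := by
    rw [Int.isCoprime_iff_gcd_eq_one]
    by_contra hne1
    obtain ⟨q, hq, hqdvd⟩ := Nat.exists_prime_and_dvd hne1
    have hqz : (q : ℤ) ∣ z₁ := dvd_trans (Int.natCast_dvd_natCast.mpr hqdvd) (Int.gcd_dvd_left z₁ y₁)
    have hqy : (q : ℤ) ∣ y₁ := dvd_trans (Int.natCast_dvd_natCast.mpr hqdvd) (Int.gcd_dvd_right z₁ y₁)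
    have hqZ : Prime (q : ℤ) := Nat.prime_iff_prime_int.mp hq
    have hsum : (p : ℤ) * x₁ ^ 4 = z₁ ^ 2 + 32 * y₁ ^ 4 := by linarith [heq1]
    have hqpx : (q : ℤ) ∣ (p : ℤ) * x₁ ^ 4 := by
      rw [hsum]
      exact dvd_add (dvd_pow hqz two_ne_zero) ((dvd_pow hqy (by norm_num)).mul_left 32)
    have hq2 := hq.two_le
    rcases hqZ.2.2 _ _ hqpx with hqp | hqx4
    · have hqp' : q ∣ p := by exact_mod_cast hqp
      have hqep : q = p := (Nat.prime_dvd_prime_iff_eq hq hp).mp hqp'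
      subst hqep
      have hpsq : ((q : ℤ)) ^ 2 ∣ (q : ℤ) * x₁ ^ 4 := by
        rw [hsum]
        exact dvd_add (pow_dvd_pow_of_dvd hqz 2)
          (((pow_dvd_pow_of_dvd hqy 2).trans (pow_dvd_pow y₁ (by norm_num))).mul_left 32)
      obtain ⟨k, hk⟩ := hpsq
      have hx4 : x₁ ^ 4 = (q : ℤ) * k := by
        apply mul_left_cancel₀ hp0
        rw [hk]; ring
      have hqx : (q : ℤ) ∣ x₁ := hqZ.dvd_of_dvd_pow ⟨k, hx4⟩
      have := hcop1.isUnit_of_dvd' hqx hqy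
      rcases Int.isUnit_iff.mp this with h | h <;> omega
    · have hqx : (q : ℤ) ∣ x₁ := hqZ.dvd_of_dvd_pow hqx4
      have := hcop1.isUnit_of_dvd' hqx hqy
      rcases Int.isUnit_iff.mp this with h | h <;> omega
  have heqkey : z₁ ^ 2 + 2 * (4 * y₁ ^ 2) ^ 2 = (p : ℤ) * x₁ ^ 4 := by
    linear_combination -heq1
  obtain ⟨s, t, hst⟩ := key p hp c v hpr hpodd x₁ y₁ z₁ hx₁odd hcopzy heqkey
  have huniq : (2 * v) ^ 2 = (4 * t) ^ 2 := rep_unique p hp hpr hst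
  have hx16 : 16 * r ^ 2 + 16 * r + 4 = 16 * t ^ 2 := by
    have h5 : (2 * (2 * r + 1)) ^ 2 = (4 * t) ^ 2 := by rw [← hr]; exact huniq
    linear_combination h5
  have hR : ∃ Rr Tt : ℤ, 16 * Rr + 16 * r + 4 = 16 * Tt :=
    ⟨r ^ 2, t ^ 2, by linarith [hx16]⟩
  obtain ⟨Rr, Tt, hRT⟩ := hR
  omega
end
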